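/- arXiv:1509.09282 — 10 statements merged into one kernel-verified Lean document; each statement's English description precedes it below -/
import Mathlib

section
/- Let M ≥ 2 and let s range over a finite window {0,1,…,τ−1}. For each s let L(s) be an M×M real matrix with zero row sums and nonpositive off-diagonal entries, let Δ(s) = diag(χ_1(s),…,χ_M(s)) with each χ_i(s) ∈ {0,1}, and let a(s) > 0. Suppose: (i) the directed graph on {1,…,M} that has an edge (j,i) (j ≠ i) whenever l_{ij}(s) < 0 for some s in the window is strongly connected, and (ii) χ_i(s) = 1 for at least one pair (i,s). Then the matrix P := I − Σ_{s=0}^{τ−1} a(s)(Δ(s)+L(s)) is irreducible, and at least one row of P has row sum strictly less than 1. -/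
open Finset Matrix

lemma crossing {α : Type*} (r : α → α → Prop) (S : Finset α) :
    ∀ i j : α, Relation.TransGen r i j → i ∉ S → j ∈ S →
      ∃ p ∉ S, ∃ q ∈ S, r p q := by
  intro i j h
  induction h with
  | single h => intro hi hj; exact ⟨i, hi, _, hj, h⟩
  | tail h1 h2 ih =>
    intro hi hj
    rename_i b c
    by_cases hb : b ∈ S
    · exact ih hi hb
    · exact ⟨b, hb, c, hj, h2⟩

/-- Proposition 2 (deterministic core): if the union graph over the window is
strongly connected and at least one measurement occurs in the window, then
`P = I − Σ_s a(s)(Δ(s)+L(s))` is irreducible and at least one of its row sums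
is strictly less than 1. -/
theorem stmt_1 (M τ : ℕ) (hM : 2 ≤ M)
    (L : Fin τ → Matrix (Fin M) (Fin M) ℝ)
    (hrow : ∀ s i, ∑ j, L s i j = 0)
    (hoff : ∀ s : Fin τ, ∀ i j : Fin M, j ≠ i → L s i j ≤ 0)
    (χ : Fin τ → Fin M → ℕ) (hχ : ∀ s i, χ s i = 0 ∨ χ s i = 1)
    (a : Fin τ → ℝ) (ha : ∀ s, 0 < a s)
    (hconn : ∀ i j : Fin M, i ≠ j →
      Relation.TransGen (fun p q : Fin M => p ≠ q ∧ ∃ s, L s q p < 0) i j)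
    (hmeas : ∃ s i, χ s i = 1) :
    (∀ S : Finset (Fin M), S.Nonempty → S ≠ Finset.univ →
      ∃ i ∈ S, ∃ j ∉ S,
        ((1 : Matrix (Fin M) (Fin M) ℝ) -
          ∑ s, a s • (Matrix.diagonal (fun i => (χ s i : ℝ)) + L s)) i j ≠ 0) ∧
    (∃ i : Fin M, ∑ j,
        ((1 : Matrix (Fin M) (Fin M) ℝ) -
          ∑ s, a s • (Matrix.diagonal (fun i => (χ s i : ℝ)) + L s)) i j < 1) := by
  set P := ((1 : Matrix (Fin M) (Fin M) ℝ) -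
      ∑ s, a s • (Matrix.diagonal (fun i => (χ s i : ℝ)) + L s)) with hP
  have hPoff : ∀ i j : Fin M, i ≠ j → P i j = -∑ s, a s * L s i j := by
    intro i j hij
    simp [hP, Matrix.sub_apply, Matrix.sum_apply, Matrix.one_apply_ne hij,
      Matrix.diagonal_apply_ne' _ (Ne.symm hij), mul_comm]
  constructor
  · intro S hSne hSuniv
    obtain ⟨j, hj⟩ := hSne
    have : ∃ i : Fin M, i ∉ S := by
      by_contra h
      push_neg at h
      exact hSuniv (Finset.eq_univ_iff_forall.2 h)
    obtain ⟨i, hi⟩ := this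
    have hij : i ≠ j := fun h => hi (h ▸ hj)
    obtain ⟨p, hp, q, hq, hpq, s0, hs0⟩ :=
      crossing _ S i j (hconn i j hij) hi hj
    refine ⟨q, hq, p, hp, ?_⟩
    rw [hPoff q p (Ne.symm hpq)]
    have hlt : ∑ s, a s * L s q p < 0 := by
      have := Finset.sum_lt_sum (g := fun _ : Fin τ => (0 : ℝ))
        (s := Finset.univ)
        (fun s _ => mul_nonpos_of_nonneg_of_nonpos (ha s).le
          (hoff s q p hpq))
        ⟨s0, Finset.mem_univ _, mul_neg_of_pos_of_neg (ha s0) hs0⟩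
      simpa using this
    intro h
    rw [neg_eq_zero] at h
    exact absurd h hlt.ne
  · obtain ⟨s0, i0, hs0⟩ := hmeas
    refine ⟨i0, ?_⟩
    have hrowsum : ∑ j, P i0 j = 1 - ∑ s, a s * (χ s i0 : ℝ) := by
      have : ∀ s : Fin τ, ∑ j, (a s • (Matrix.diagonal (fun i => (χ s i : ℝ)) + L s)) i0 j
          = a s * (χ s i0 : ℝ) := by
        intro s
        simp only [Matrix.smul_apply, Matrix.add_apply, smul_eq_mul, mul_add,
          Finset.sum_add_distrib, ← Finset.mul_sum, hrow s i0, mul_zero, add_zero]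
        simp [Matrix.diagonal_apply, Finset.sum_ite_eq]
      rw [hP]
      simp only [Matrix.sub_apply, Matrix.sum_apply, Finset.sum_sub_distrib]
      rw [Finset.sum_comm]
      simp only [Matrix.smul_apply, Matrix.add_apply, smul_eq_mul] at this
      simp [this, Matrix.one_apply, Finset.sum_ite_eq']
    rw [hrowsum]
    have hpos : 0 < ∑ s, a s * (χ s i0 : ℝ) := by
      apply Finset.sum_pos' (fun s _ => mul_nonneg (ha s).le (Nat.cast_nonneg _))
      exact ⟨s0, Finset.mem_univ _, by rw [hs0]; simpa using ha s0⟩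
    linarith
end

section
/- Let M ≥ 1, and for each integer t ≥ 0 let L(t) be an M×M real matrix with zero row sums and nonpositive off-diagonal entries, let Δ(t) = diag(χ_1(t),…,χ_M(t)) with each χ_i(t) ∈ {0,1}, and let a(t) > 0. Suppose there exists t* > 0 such that a(t)(1 + max_i l_{ii}(t)) ≤ 1 for all t ≥ t*. Let e(t) ∈ ℝ^M evolve by e(t+1) = (I − a(t)(Δ(t)+L(t))) e(t). Then: (i) there is a constant c_0 > 0 such that max_i |e_i(t)| ≤ c_0 for all t ≥ 0; (ii) either the sequence t ↦ min_i e_i(t) converges to a finite limit ≤ 0, or the sequence t ↦ max_i e_i(t) converges to a finite limit ≥ 0. -/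
open Finset Matrix Filter

/-- Lemma 1: boundedness of the mean error dynamics and convergence of either
the minimal or the maximal component. -/
theorem stmt_2 (M : ℕ) (hM : 1 ≤ M)
    (L : ℕ → Matrix (Fin M) (Fin M) ℝ)
    (hrow : ∀ t i, ∑ j, L t i j = 0)
    (hoff : ∀ t : ℕ, ∀ i j : Fin M, j ≠ i → L t i j ≤ 0)
    (χ : ℕ → Fin M → ℕ) (hχ : ∀ t i, χ t i = 0 ∨ χ t i = 1)
    (a : ℕ → ℝ) (ha : ∀ t, 0 < a t)
    (tstar : ℕ) (htstar : 0 < tstar)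
    (hcond : ∀ t, tstar ≤ t →
      a t * (1 + Finset.univ.sup' (Finset.univ_nonempty_iff.mpr ⟨⟨0, hM⟩⟩)
        (fun i => L t i i)) ≤ 1)
    (e : ℕ → Fin M → ℝ)
    (he : ∀ t, e (t + 1) =
      ((1 : Matrix (Fin M) (Fin M) ℝ) -
        a t • (Matrix.diagonal (fun i => (χ t i : ℝ)) + L t)).mulVec (e t)) :
    (∃ c0 : ℝ, 0 < c0 ∧ ∀ t i, |e t i| ≤ c0) ∧
    ((∃ z : ℝ, z ≤ 0 ∧
        Tendsto (fun t => Finset.univ.inf' (Finset.univ_nonempty_iff.mpr ⟨⟨0, hM⟩⟩) (e t))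
          atTop (nhds z)) ∨
      (∃ z : ℝ, 0 ≤ z ∧
        Tendsto (fun t => Finset.univ.sup' (Finset.univ_nonempty_iff.mpr ⟨⟨0, hM⟩⟩) (e t))
          atTop (nhds z))) := by
  have ne : (univ : Finset (Fin M)).Nonempty := Finset.univ_nonempty_iff.mpr ⟨⟨0, hM⟩⟩
  set s : ℕ → ℝ := fun t => univ.sup' ne (e t) with hs
  set m : ℕ → ℝ := fun t => univ.inf' ne (e t) with hm
  set P : ℕ → Matrix (Fin M) (Fin M) ℝ := fun t =>
    (1 : Matrix (Fin M) (Fin M) ℝ) - a t • (Matrix.diagonal (fun i => (χ t i : ℝ)) + L t)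
    with hPdef
  -- entry formula
  have hPval : ∀ t i j, P t i j =
      (if i = j then 1 else 0) - a t * ((if i = j then (χ t i : ℝ) else 0) + L t i j) := by
    intro t i j
    simp [hPdef, Matrix.sub_apply, Matrix.smul_apply, Matrix.add_apply, Matrix.one_apply,
      Matrix.diagonal_apply, smul_eq_mul, mul_add, mul_ite]
  -- diagonal of L is nonnegative
  have hLdiag : ∀ t i, 0 ≤ L t i i := by
    intro t i
    have h1 : ∑ j, L t i j = L t i i + ∑ j ∈ univ.erase i, L t i j := by
      rw [add_comm, Finset.sum_erase_add _ _ (mem_univ i)]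
    have h2 : ∑ j ∈ univ.erase i, L t i j ≤ 0 :=
      Finset.sum_nonpos (fun j hj => hoff t i j (Finset.ne_of_mem_erase hj))
    have h3 := hrow t i
    rw [h1] at h3
    linarith
  have hχ1 : ∀ t i, (χ t i : ℝ) ≤ 1 := by
    intro t i; rcases hχ t i with h | h <;> simp [h]
  have hχ0 : ∀ t i, (0 : ℝ) ≤ (χ t i : ℝ) := fun t i => Nat.cast_nonneg _
  -- nonnegativity of P entries (for t ≥ tstar)
  have hP0 : ∀ t, tstar ≤ t → ∀ i j, 0 ≤ P t i j := by
    intro t ht i j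
    rw [hPval]
    by_cases hij : i = j
    · subst hij
      simp only [if_pos rfl, if_true, eq_self_iff_true]
      have hcond' : a t * (1 + univ.sup' ne (fun i => L t i i)) ≤ 1 := hcond t ht
      have hLle : L t i i ≤ univ.sup' ne (fun i => L t i i) :=
        Finset.le_sup' (fun i => L t i i) (mem_univ i)
      have hsum : (χ t i : ℝ) + L t i i ≤ 1 + univ.sup' ne (fun i => L t i i) :=
        add_le_add (hχ1 t i) hLle
      nlinarith [ha t]
    · have hji : j ≠ i := fun h => hij h.symm
      have hL := hoff t i j hji
      simp only [if_neg hij]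
      nlinarith [ha t]
  -- row sums of P
  have hPsum : ∀ t i, ∑ j, P t i j = 1 - a t * (χ t i : ℝ) := by
    intro t i
    have : ∑ j, P t i j = ∑ j, ((if i = j then (1:ℝ) else 0)
        - a t * ((if i = j then (χ t i : ℝ) else 0) + L t i j)) := by
      exact Finset.sum_congr rfl (fun j _ => hPval t i j)
    rw [this, Finset.sum_sub_distrib, ← Finset.mul_sum, Finset.sum_add_distrib, hrow t i]
    simp [Finset.sum_ite_eq]
  have hPsum_le1 : ∀ t i, ∑ j, P t i j ≤ 1 := by
    intro t i
    rw [hPsum]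
    nlinarith [ha t, hχ0 t i]
  -- key step inequalities
  have hstep_up : ∀ t, tstar ≤ t → ∀ i, e (t + 1) i ≤ max (s t) 0 := by
    intro t ht i
    have hmv : e (t + 1) i = ∑ j, P t i j * e t j := by
      rw [he t]
      simp [hPdef, Matrix.mulVec, dotProduct]
    rw [hmv]
    calc ∑ j, P t i j * e t j ≤ ∑ j, P t i j * max (s t) 0 :=
          Finset.sum_le_sum (fun j _ => mul_le_mul_of_nonneg_left
            (le_trans (Finset.le_sup' (e t) (mem_univ j)) (le_max_left _ _))
            (hP0 t ht i j))
      _ = (∑ j, P t i j) * max (s t) 0 := (Finset.sum_mul _ _ _).symm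
      _ ≤ 1 * max (s t) 0 :=
          mul_le_mul_of_nonneg_right (hPsum_le1 t i) (le_max_right _ _)
      _ = max (s t) 0 := one_mul _
  have hstep_dn : ∀ t, tstar ≤ t → ∀ i, min (m t) 0 ≤ e (t + 1) i := by
    intro t ht i
    have hmv : e (t + 1) i = ∑ j, P t i j * e t j := by
      rw [he t]
      simp [hPdef, Matrix.mulVec, dotProduct]
    rw [hmv]
    have h1 : min (m t) 0 ≤ (∑ j, P t i j) * min (m t) 0 := by
      nlinarith [hPsum_le1 t i, min_le_right (m t) (0:ℝ)]
    calc min (m t) 0 ≤ (∑ j, P t i j) * min (m t) 0 := h1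
      _ = ∑ j, P t i j * min (m t) 0 := Finset.sum_mul _ _ _
      _ ≤ ∑ j, P t i j * e t j :=
          Finset.sum_le_sum (fun j _ => mul_le_mul_of_nonneg_left
            (le_trans (min_le_left _ _) (Finset.inf'_le (e t) (mem_univ j)))
            (hP0 t ht i j))
  -- shifted envelope sequences
  set g : ℕ → ℝ := fun n => max (s (tstar + n)) 0 with hg
  set h : ℕ → ℝ := fun n => min (m (tstar + n)) 0 with hh
  have hg_anti : Antitone g := by
    apply antitone_nat_of_succ_le
    intro n
    have h1 : s (tstar + (n + 1)) ≤ max (s (tstar + n)) 0 := by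
      apply Finset.sup'_le
      intro i _
      exact hstep_up (tstar + n) (Nat.le_add_right _ _) i
    exact max_le h1 (le_max_right _ _)
  have hh_mono : Monotone h := by
    apply monotone_nat_of_le_succ
    intro n
    have h1 : min (m (tstar + n)) 0 ≤ m (tstar + (n + 1)) := by
      apply Finset.le_inf'
      intro i _
      exact hstep_dn (tstar + n) (Nat.le_add_right _ _) i
    exact le_min h1 (min_le_right _ _)
  have hg_nonneg : ∀ n, 0 ≤ g n := fun n => le_max_right _ _
  have hh_nonpos : ∀ n, h n ≤ 0 := fun n => min_le_right _ _
  have hg_bdd : BddBelow (Set.range g) := ⟨0, by rintro x ⟨n, rfl⟩; exact hg_nonneg n⟩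
  have hh_bdd : BddAbove (Set.range h) := ⟨0, by rintro x ⟨n, rfl⟩; exact hh_nonpos n⟩
  have hg_tend : Tendsto g atTop (nhds (⨅ n, g n)) := tendsto_atTop_ciInf hg_anti hg_bdd
  have hh_tend : Tendsto h atTop (nhds (⨆ n, h n)) := tendsto_atTop_ciSup hh_mono hh_bdd
  set zg : ℝ := ⨅ n, g n with hzgdef
  set zh : ℝ := ⨆ n, h n with hzhdef
  have hzg_nonneg : 0 ≤ zg := le_ciInf hg_nonneg
  have hzh_nonpos : zh ≤ 0 := ciSup_le hh_nonpos
  have hzg_le : ∀ n, zg ≤ g n := fun n => ciInf_le hg_bdd n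
  have hzh_ge : ∀ n, h n ≤ zh := fun n => le_ciSup hh_bdd n
  -- basic chain:  h n ≤ m (tstar+n) ≤ e (tstar+n) i ≤ s (tstar+n) ≤ g n
  have hme : ∀ t i, m t ≤ e t i := fun t i => Finset.inf'_le (e t) (mem_univ i)
  have hes : ∀ t i, e t i ≤ s t := fun t i => Finset.le_sup' (e t) (mem_univ i)
  constructor
  · -- boundedness
    have hne_range : (Finset.range (tstar + 1)).Nonempty :=
      ⟨0, Finset.mem_range.mpr (Nat.succ_pos _)⟩
    set B : ℝ := (Finset.range (tstar + 1)).sup' hne_range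
      (fun t => univ.sup' ne (fun i => |e t i|)) with hB
    refine ⟨max 1 (max (max (g 0) (-h 0)) B), lt_of_lt_of_le one_pos (le_max_left _ _), ?_⟩
    intro t i
    by_cases ht : tstar ≤ t
    · obtain ⟨n, rfl⟩ := Nat.exists_eq_add_of_le ht
      rw [abs_le]
      constructor
      · have h1 : h 0 ≤ h n := hh_mono (Nat.zero_le n)
        have h2 : h n ≤ m (tstar + n) := min_le_left _ _
        have h3 : -(max 1 (max (max (g 0) (-h 0)) B)) ≤ h 0 := by
          have : -h 0 ≤ max 1 (max (max (g 0) (-h 0)) B) :=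
            le_trans (le_trans (le_max_right _ _) (le_max_left _ _)) (le_max_right _ _)
          linarith
        linarith [hme (tstar + n) i]
      · have h1 : g n ≤ g 0 := hg_anti (Nat.zero_le n)
        have h2 : s (tstar + n) ≤ g n := le_max_left _ _
        have h3 : g 0 ≤ max 1 (max (max (g 0) (-h 0)) B) :=
          le_trans (le_trans (le_max_left _ _) (le_max_left _ _)) (le_max_right _ _)
        linarith [hes (tstar + n) i]
    · push_neg at ht
      have h1 : |e t i| ≤ univ.sup' ne (fun i => |e t i|) :=
        Finset.le_sup' (fun i => |e t i|) (mem_univ i)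
      have h2 : univ.sup' ne (fun i => |e t i|) ≤ B :=
        Finset.le_sup' (fun t => univ.sup' ne (fun i => |e t i|))
          (Finset.mem_range.mpr (Nat.lt_succ_of_lt ht))
      exact le_trans (le_trans h1 h2) (le_trans (le_max_right _ _) (le_max_right _ _))
  · -- convergence of min or max
    by_cases hzh_neg : zh < 0
    · left
      refine ⟨zh, le_of_lt hzh_neg, ?_⟩
      have heq : ∀ n, m (tstar + n) = h n := by
        intro n
        have h1 : h n < 0 := lt_of_le_of_lt (hzh_ge n) hzh_neg
        have h2 : m (tstar + n) < 0 := by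
          by_contra hc
          push_neg at hc
          rw [hh] at h1
          simp only [min_eq_right hc] at h1
          exact lt_irrefl _ h1
        exact (min_eq_left (le_of_lt h2)).symm
      have := hh_tend
      rw [← tendsto_add_atTop_iff_nat tstar]
      convert this using 1
      funext n
      rw [Nat.add_comm n tstar]
      exact heq n
    · by_cases hzg_pos : 0 < zg
      · right
        refine ⟨zg, le_of_lt hzg_pos, ?_⟩
        have heq : ∀ n, s (tstar + n) = g n := by
          intro n
          have h1 : 0 < g n := lt_of_lt_of_le hzg_pos (hzg_le n)
          have h2 : 0 < s (tstar + n) := by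
            by_contra hc
            push_neg at hc
            rw [hg] at h1
            simp only [max_eq_right hc] at h1
            exact lt_irrefl _ h1
          exact (max_eq_left (le_of_lt h2)).symm
        have := hg_tend
        rw [← tendsto_add_atTop_iff_nat tstar]
        convert this using 1
        funext n
        rw [Nat.add_comm n tstar]
        exact heq n
      · -- zh = 0 and zg = 0 : squeeze the min
        push_neg at hzh_neg hzg_pos
        have hzh0 : zh = 0 := le_antisymm hzh_nonpos hzh_neg
        have hzg0 : zg = 0 := le_antisymm hzg_pos hzg_nonneg
        left
        refine ⟨0, le_refl 0, ?_⟩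
        rw [← tendsto_add_atTop_iff_nat tstar]
        have hlow : Tendsto h atTop (nhds 0) := hzh0 ▸ hh_tend
        have hhigh : Tendsto g atTop (nhds 0) := hzg0 ▸ hg_tend
        apply tendsto_of_tendsto_of_tendsto_of_le_of_le hlow hhigh
        · intro n
          simp only [Nat.add_comm n tstar]
          exact min_le_left _ _
        · intro n
          simp only [Nat.add_comm n tstar]
          exact le_trans (hme (tstar + n) ⟨0, hM⟩)
            (le_trans (hes (tstar + n) ⟨0, hM⟩) (le_max_left _ _))
end

section
/- Let M ≥ 1, let L be an M×M real matrix with zero row sums and nonpositive off-diagonal entries, let Δ = diag(χ_1,…,χ_M) with each χ_i ∈ {0,1}, and let a > 0 satisfy a(1 + max_i l_{ii}) ≤ 1. Then the maximum absolute row-sum norm of I − a(Δ+L) equals max_i (1 − a χ_i); in particular it is at most 1, and consequently ‖(I − a(Δ+L)) x‖_∞ ≤ ‖x‖_∞ for every x ∈ ℝ^M. -/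
open Finset Matrix

/-- The contraction identity from the proof of Lemma 1: the maximum absolute
row-sum norm of `I − a(Δ+L)` equals `max_i (1 − a χ_i)`, hence is at most `1`,
and the map is nonexpansive in the sup norm. -/
theorem stmt_3 (M : ℕ) (hM : 1 ≤ M)
    (L : Matrix (Fin M) (Fin M) ℝ)
    (hrow : ∀ i, ∑ j, L i j = 0)
    (hoff : ∀ i j : Fin M, j ≠ i → L i j ≤ 0)
    (χ : Fin M → ℕ) (hχ : ∀ i, χ i = 0 ∨ χ i = 1)
    (a : ℝ) (ha : 0 < a)
    (hcond : a * (1 + Finset.univ.sup' (Finset.univ_nonempty_iff.mpr ⟨⟨0, hM⟩⟩)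
      (fun i => L i i)) ≤ 1) :
    (Finset.univ.sup' (Finset.univ_nonempty_iff.mpr ⟨⟨0, hM⟩⟩)
        (fun i => ∑ j, |((1 : Matrix (Fin M) (Fin M) ℝ) -
          a • (Matrix.diagonal (fun i => (χ i : ℝ)) + L)) i j|) =
      Finset.univ.sup' (Finset.univ_nonempty_iff.mpr ⟨⟨0, hM⟩⟩)
        (fun i => 1 - a * (χ i : ℝ))) ∧
    (Finset.univ.sup' (Finset.univ_nonempty_iff.mpr ⟨⟨0, hM⟩⟩)
        (fun i => ∑ j, |((1 : Matrix (Fin M) (Fin M) ℝ) -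
          a • (Matrix.diagonal (fun i => (χ i : ℝ)) + L)) i j|) ≤ 1) ∧
    (∀ x : Fin M → ℝ,
      Finset.univ.sup' (Finset.univ_nonempty_iff.mpr ⟨⟨0, hM⟩⟩)
          (fun i => |(((1 : Matrix (Fin M) (Fin M) ℝ) -
            a • (Matrix.diagonal (fun i => (χ i : ℝ)) + L)).mulVec x) i|) ≤
        Finset.univ.sup' (Finset.univ_nonempty_iff.mpr ⟨⟨0, hM⟩⟩) (fun i => |x i|)) := by

  set A := (1 : Matrix (Fin M) (Fin M) ℝ) -
      a • (Matrix.diagonal (fun i => (χ i : ℝ)) + L) with hA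
  have hne := (Finset.univ_nonempty_iff.mpr ⟨⟨0, hM⟩⟩ : (Finset.univ : Finset (Fin M)).Nonempty)
  have hχ1 : ∀ i, (χ i : ℝ) ≤ 1 := by
    intro i; rcases hχ i with h | h <;> simp [h]
  have hχ0 : ∀ i, (0:ℝ) ≤ (χ i : ℝ) := fun i => Nat.cast_nonneg _
  have hAij : ∀ i j, i ≠ j → A i j = - (a * L i j) := by
    intro i j h
    simp [hA, Matrix.sub_apply, Matrix.one_apply, Matrix.diagonal_apply, h]
  have hAii : ∀ i, A i i = 1 - a * (χ i : ℝ) - a * L i i := by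
    intro i
    simp [hA, Matrix.sub_apply, Matrix.one_apply, Matrix.diagonal_apply]
    ring
  have hdiag : ∀ i, 0 ≤ 1 - a * (χ i : ℝ) - a * L i i := by
    intro i
    have hs : L i i ≤ Finset.univ.sup' (Finset.univ_nonempty_iff.mpr ⟨⟨0, hM⟩⟩)
        (fun i => L i i) := Finset.le_sup' (fun i => L i i) (Finset.mem_univ i)
    have := hχ1 i
    nlinarith [hχ1 i, hχ0 i]
  have key : ∀ i, ∑ j, |A i j| = 1 - a * (χ i : ℝ) := by
    intro i
    have hsplit : ∑ j, |A i j| =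
        ∑ j ∈ Finset.univ.erase i, |A i j| + |A i i| :=
      (Finset.sum_erase_add _ _ (Finset.mem_univ i)).symm
    have h1 : ∑ j ∈ Finset.univ.erase i, |A i j| =
        ∑ j ∈ Finset.univ.erase i, (-(a * L i j)) := by
      apply Finset.sum_congr rfl
      intro j hj
      have hji : j ≠ i := Finset.ne_of_mem_erase hj
      rw [hAij i j (Ne.symm hji), abs_of_nonneg]
      have := hoff i j hji
      nlinarith
    have h2 : ∑ j ∈ Finset.univ.erase i, L i j = - L i i := by
      have := Finset.sum_erase_add Finset.univ (fun j => L i j) (Finset.mem_univ i)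
      rw [hrow i] at this
      linarith
    rw [hsplit, h1, hAii i, abs_of_nonneg (hdiag i)]
    have : ∑ j ∈ Finset.univ.erase i, (-(a * L i j)) =
        -(a * ∑ j ∈ Finset.univ.erase i, L i j) := by
      rw [Finset.mul_sum]; rw [← Finset.sum_neg_distrib]
    rw [this, h2]
    ring
  have heq : (Finset.univ.sup' (Finset.univ_nonempty_iff.mpr ⟨⟨0, hM⟩⟩)
        (fun i => ∑ j, |A i j|) =
      Finset.univ.sup' (Finset.univ_nonempty_iff.mpr ⟨⟨0, hM⟩⟩)
        (fun i => 1 - a * (χ i : ℝ))) := by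
    apply Finset.sup'_congr _ rfl
    intro i _
    exact key i
  refine ⟨heq, ?_, ?_⟩
  · rw [heq]
    apply Finset.sup'_le
    intro i _
    nlinarith [hχ0 i]
  · intro x
    apply Finset.sup'_le
    intro i _
    set S := Finset.univ.sup' (Finset.univ_nonempty_iff.mpr ⟨⟨0, hM⟩⟩) (fun i => |x i|) with hS
    have hS0 : 0 ≤ S := le_trans (abs_nonneg (x i)) (Finset.le_sup' (fun j => |x j|) (Finset.mem_univ i))
    have hxb : ∀ j, |x j| ≤ S := fun j => Finset.le_sup' (fun j => |x j|) (Finset.mem_univ j)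
    calc |A.mulVec x i| = |∑ j, A i j * x j| := rfl
      _ ≤ ∑ j, |A i j * x j| := Finset.abs_sum_le_sum_abs _ _
      _ = ∑ j, |A i j| * |x j| := by simp [abs_mul]
      _ ≤ ∑ j, |A i j| * S := by
          apply Finset.sum_le_sum
          intro j _
          exact mul_le_mul_of_nonneg_left (hxb j) (abs_nonneg _)
      _ = (1 - a * (χ i : ℝ)) * S := by rw [← Finset.sum_mul, key i]
      _ ≤ 1 * S := by
          apply mul_le_mul_of_nonneg_right _ hS0
          nlinarith [hχ0 i]
      _ = S := one_mul S
end

section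
/- Let M ≥ 1, let L be an M×M real matrix with zero row sums and nonpositive off-diagonal entries, let Δ = diag(χ_1,…,χ_M) with each χ_i ∈ {0,1}, and let a > 0 satisfy a(1 + max_i l_{ii}) ≤ 1. Then for every x ∈ ℝ^M and every index i, the i-th component of (I − a(Δ+L)) x satisfies (1 − a χ_i)·(min_j x_j) ≤ ((I − a(Δ+L)) x)_i ≤ (1 − a χ_i)·(max_j x_j). -/
open Finset Matrix

/-- Componentwise sandwich bound (equation (20) in the proof of Lemma 1):
each component of `(I − a(Δ+L))x` lies between `(1 − a χ_i) min_j x_j` and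
`(1 − a χ_i) max_j x_j`. -/
theorem stmt_4 (M : ℕ) (hM : 1 ≤ M)
    (L : Matrix (Fin M) (Fin M) ℝ)
    (hrow : ∀ i, ∑ j, L i j = 0)
    (hoff : ∀ i j : Fin M, j ≠ i → L i j ≤ 0)
    (χ : Fin M → ℕ) (hχ : ∀ i, χ i = 0 ∨ χ i = 1)
    (a : ℝ) (ha : 0 < a)
    (hcond : a * (1 + Finset.univ.sup' (Finset.univ_nonempty_iff.mpr ⟨⟨0, hM⟩⟩)
      (fun i => L i i)) ≤ 1) :
    ∀ x : Fin M → ℝ, ∀ i : Fin M,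
      (1 - a * (χ i : ℝ)) *
          Finset.univ.inf' (Finset.univ_nonempty_iff.mpr ⟨⟨0, hM⟩⟩) x ≤
        (((1 : Matrix (Fin M) (Fin M) ℝ) -
          a • (Matrix.diagonal (fun i => (χ i : ℝ)) + L)).mulVec x) i ∧
      (((1 : Matrix (Fin M) (Fin M) ℝ) -
          a • (Matrix.diagonal (fun i => (χ i : ℝ)) + L)).mulVec x) i ≤
        (1 - a * (χ i : ℝ)) *
          Finset.univ.sup' (Finset.univ_nonempty_iff.mpr ⟨⟨0, hM⟩⟩) x := by
  intro x i
  have hne : (Finset.univ : Finset (Fin M)).Nonempty :=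
    Finset.univ_nonempty_iff.mpr ⟨⟨0, hM⟩⟩
  set B : Matrix (Fin M) (Fin M) ℝ :=
    (1 : Matrix (Fin M) (Fin M) ℝ) - a • (Matrix.diagonal (fun i => (χ i : ℝ)) + L) with hB
  have hentry : ∀ j, B i j =
      (if i = j then 1 else 0) - a * ((if i = j then (χ i : ℝ) else 0) + L i j) := by
    intro j
    simp [hB, Matrix.sub_apply, Matrix.smul_apply, Matrix.add_apply, Matrix.one_apply,
      Matrix.diagonal_apply, smul_eq_mul, mul_add, mul_ite, mul_zero]
  -- nonnegativity of entries
  have hnonneg : ∀ j, 0 ≤ B i j := by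
    intro j
    rw [hentry j]
    by_cases h : i = j
    · subst h
      rw [if_pos rfl, if_pos rfl]
      have hχ1 : (χ i : ℝ) ≤ 1 := by
        rcases hχ i with h | h <;> simp [h]
      have hLsup : L i i ≤ Finset.univ.sup' hne (fun i => L i i) :=
        Finset.le_sup' (fun i => L i i) (Finset.mem_univ i)
      have : a * ((χ i : ℝ) + L i i) ≤ a * (1 + Finset.univ.sup' hne (fun i => L i i)) := by
        apply mul_le_mul_of_nonneg_left (by linarith) ha.le
      linarith
    · simp only [if_neg h]
      have := hoff i j (fun hji => h hji.symm)
      nlinarith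
  -- row sum
  have hsum : ∑ j, B i j = 1 - a * (χ i : ℝ) := by
    have : ∑ j, B i j = ∑ j, ((if i = j then (1:ℝ) else 0)
        - a * ((if i = j then (χ i : ℝ) else 0) + L i j)) := by
      exact Finset.sum_congr rfl fun j _ => hentry j
    have h1 : ∑ j, (if i = j then (1:ℝ) else 0) = 1 := by simp
    have h2 : ∑ j, a * ((if i = j then (χ i:ℝ) else 0) + L i j) = a * (χ i) := by
      rw [← Finset.mul_sum, Finset.sum_add_distrib, hrow i, add_zero, Finset.sum_ite_eq]
      simp
    rw [this, Finset.sum_sub_distrib, h1, h2]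
  have hmul : B.mulVec x i = ∑ j, B i j * x j := by
    simp [Matrix.mulVec, dotProduct]
  constructor
  · rw [hmul, ← hsum, Finset.sum_mul]
    apply Finset.sum_le_sum
    intro j _
    exact mul_le_mul_of_nonneg_left (Finset.inf'_le _ (Finset.mem_univ j)) (hnonneg j)
  · rw [hmul, ← hsum, Finset.sum_mul]
    apply Finset.sum_le_sum
    intro j _
    exact mul_le_mul_of_nonneg_left (Finset.le_sup' _ (Finset.mem_univ j)) (hnonneg j)
end

section
/- Let M ≥ 2. For each integer t ≥ 0 let L̄(t) be an M×M real matrix with zero row sums and nonpositive off-diagonal entries, let Δ(t) = diag(χ_1(t),…,χ_M(t)) with each χ_i(t) ∈ {0,1}, and let a(t) > 0. Assume: (H1) uniform boundedness: sup_t max_{i,j} |l̄_{ij}(t)| < ∞; (H2) joint connectivity with uniform weight: there exist an integer B > 0 and a constant c_3 > 0 such that for every k ≥ 0 the directed graph on {1,…,M} with an edge (j,i) (j ≠ i) whenever l̄_{ij}(s) ≤ −c_3 for some s ∈ [kB, (k+1)B) is strongly connected; (H3) there is a constant 0 < c < 1 such that c ≤ a(t+1)/a(t) ≤ 1 for all sufficiently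 large t, and a(t) → 0 as t → ∞; (H4) for every ν > 0 there is a constant κ > 0 such that for all sufficiently large t there exists an integer T(t,ν) > 0 with κν ≤ Σ_{s=t}^{t+T(t,ν)} a(s) ≤ ν. Let ē(t) ∈ ℝ^M evolve by ē(t+1) = (I − a(t)(Δ(t)+L̄(t))) ē(t). Then there exists a finite z_∞ ∈ ℝ such that lim_{t→∞} ē_i(t) = z_∞ for every i ∈ {1,…,M}. -/
open Finset Matrix Filter

namespace Stmt5Aux

/-- defect of row i: 1 - row sum -/
def defect {M : ℕ} (A : Matrix (Fin M) (Fin M) ℝ) (i : Fin M) : ℝ := 1 - ∑ j, A i j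

lemma defect_mul {M : ℕ} (A B : Matrix (Fin M) (Fin M) ℝ) (i : Fin M) :
    defect (A * B) i = defect A i + ∑ m, A i m * defect B m := by
  simp only [defect, Matrix.mul_apply, mul_sub, mul_one, Finset.sum_sub_distrib]
  rw [Finset.sum_comm]
  simp only [← Finset.mul_sum]
  ring

lemma pair_contraction {M : ℕ} (Φ : Matrix (Fin M) (Fin M) ℝ) (x : Fin M → ℝ)
    (m Mx μ0 d R : ℝ)
    (hpos : ∀ i j, 0 ≤ Φ i j)
    (hrs : ∀ i, ∑ j, Φ i j ≤ 1)
    (hd : ∀ i, defect Φ i ≤ d)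
    (hμ : ∀ i k : Fin M, μ0 ≤ ∑ j, min (Φ i j) (Φ k j))
    (hμ0 : 0 ≤ μ0)
    (hx : ∀ j, m ≤ x j ∧ x j ≤ Mx)
    (hm : |m| ≤ R) (i k : Fin M) :
    Φ.mulVec x i - Φ.mulVec x k ≤ (1 - μ0) * (Mx - m) + d * R := by
  have hmM : m ≤ Mx := le_trans (hx i).1 (hx i).2
  set μ : Fin M → ℝ := fun j => min (Φ i j) (Φ k j) with hμdef
  have hμle1 : ∀ j, μ j ≤ Φ i j := fun j => min_le_left _ _
  have hμle2 : ∀ j, μ j ≤ Φ k j := fun j => min_le_right _ _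
  have h1 : Φ.mulVec x i = ∑ j, Φ i j * x j := by
    simp [Matrix.mulVec, dotProduct]
  have h2 : Φ.mulVec x k = ∑ j, Φ k j * x j := by
    simp [Matrix.mulVec, dotProduct]
  have key : Φ.mulVec x i - Φ.mulVec x k
      = (∑ j, (Φ i j - μ j) * x j) - (∑ j, (Φ k j - μ j) * x j) := by
    rw [h1, h2]
    rw [← Finset.sum_sub_distrib, ← Finset.sum_sub_distrib]
    congr 1; funext j; ring
  have hup : (∑ j, (Φ i j - μ j) * x j) ≤ (∑ j, (Φ i j - μ j)) * Mx := by
    rw [Finset.sum_mul]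
    refine Finset.sum_le_sum fun j _ => ?_
    exact mul_le_mul_of_nonneg_left (hx j).2 (by linarith [hμle1 j])
  have hlo : (∑ j, (Φ k j - μ j)) * m ≤ (∑ j, (Φ k j - μ j) * x j) := by
    rw [Finset.sum_mul]
    refine Finset.sum_le_sum fun j _ => ?_
    exact mul_le_mul_of_nonneg_left (hx j).1 (by linarith [hμle2 j])
  have hsplit1 : (∑ j, (Φ i j - μ j)) = (∑ j, Φ i j) - ∑ j, μ j :=
    Finset.sum_sub_distrib _ _
  have hsplit2 : (∑ j, (Φ k j - μ j)) = (∑ j, Φ k j) - ∑ j, μ j :=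
    Finset.sum_sub_distrib _ _
  set s := ∑ j, μ j with hs
  set σi := ∑ j, Φ i j with hσi
  set σk := ∑ j, Φ k j with hσk
  have hμs : μ0 ≤ s := hμ i k
  have hsle : s ≤ σi := Finset.sum_le_sum fun j _ => hμle1 j
  have hd1 : 1 - σi ≤ d := hd i
  have hd2 : 1 - σk ≤ d := hd k
  have hdnn : 0 ≤ d := le_trans (by linarith [hrs i] : (0:ℝ) ≤ 1 - σi) hd1
  have step1 : Φ.mulVec x i - Φ.mulVec x k ≤ (σi - s) * Mx - (σk - s) * m := by
    rw [hsplit1] at hup; rw [hsplit2] at hlo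
    rw [key]; linarith
  have hre : (σi - s) * Mx - (σk - s) * m = (σi - s) * (Mx - m) + (σi - σk) * m := by
    ring
  have hb1 : (σi - s) * (Mx - m) ≤ (1 - μ0) * (Mx - m) := by
    apply mul_le_mul_of_nonneg_right _ (by linarith)
    linarith [hrs i]
  have hb2 : (σi - σk) * m ≤ d * R := by
    have h3 : |σi - σk| ≤ d := by
      rw [abs_le]; constructor
      · linarith [hrs k]
      · linarith [hrs i]
    calc (σi - σk) * m ≤ |(σi - σk) * m| := le_abs_self _
      _ = |σi - σk| * |m| := abs_mul _ _
      _ ≤ d * R := mul_le_mul h3 hm (abs_nonneg _) hdnn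
  linarith

/-- x_{k+1} ≤ r x_k + ε_k with ε summable nonneg, 0 ≤ r < 1, x ≥ 0 ⇒ x → 0 -/
lemma seq_contract {x ε : ℕ → ℝ} {r : ℝ} (hr0 : 0 ≤ r) (hr1 : r < 1)
    (hx0 : ∀ k, 0 ≤ x k) (hrec : ∀ k, x (k + 1) ≤ r * x k + ε k)
    (hε : ∀ k, 0 ≤ ε k) (hsum : Summable ε) :
    Tendsto x atTop (nhds 0) := by
  rw [Metric.tendsto_atTop]
  intro δ hδ
  -- tail sums tend to zero
  have htail : Tendsto (fun N => ∑' k, ε (k + N)) atTop (nhds 0) := by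
    have h1 := hsum.hasSum.tendsto_sum_nat
    have h2 : ∀ N : ℕ, (∑' k, ε (k + N)) = (∑' k, ε k) - ∑ i ∈ Finset.range N, ε i := by
      intro N
      have h3 := Summable.sum_add_tsum_nat_add N hsum
      linarith
    simp only [h2]
    have h4 : Tendsto (fun N => (∑' k, ε k) - ∑ i ∈ Finset.range N, ε i) atTop
        (nhds ((∑' k, ε k) - (∑' k, ε k))) := Tendsto.const_sub _ h1
    simpa using h4
  obtain ⟨N₁, hN₁⟩ := (Metric.tendsto_atTop.mp htail) (δ / 4) (by linarith)
  have htail1 : (∑' k, ε (k + N₁)) ≤ δ / 4 := by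
    have h5 := hN₁ N₁ le_rfl
    rw [Real.dist_eq, sub_zero] at h5
    have hnn : 0 ≤ ∑' k, ε (k + N₁) := tsum_nonneg fun k => hε _
    rw [abs_of_nonneg hnn] at h5; linarith
  have key : ∀ m, x (N₁ + m) ≤ r ^ m * x N₁ + ∑ k ∈ Finset.range m, ε (k + N₁) := by
    intro m
    induction m with
    | zero => simp
    | succ m ih =>
      have h1 : x (N₁ + (m + 1)) ≤ r * x (N₁ + m) + ε (N₁ + m) := by
        have h := hrec (N₁ + m)
        calc x (N₁ + (m + 1)) = x ((N₁ + m) + 1) := by ring_nf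
          _ ≤ r * x (N₁ + m) + ε (N₁ + m) := h
      have h2 : r * x (N₁ + m) ≤ r * (r ^ m * x N₁ + ∑ k ∈ Finset.range m, ε (k + N₁)) :=
        mul_le_mul_of_nonneg_left ih hr0
      have hSnn : 0 ≤ ∑ k ∈ Finset.range m, ε (k + N₁) :=
        Finset.sum_nonneg fun k _ => hε _
      have h3 : r * (∑ k ∈ Finset.range m, ε (k + N₁)) ≤ ∑ k ∈ Finset.range m, ε (k + N₁) := by
        nlinarith
      have h4 : (∑ k ∈ Finset.range m, ε (k + N₁)) + ε (m + N₁)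
          = ∑ k ∈ Finset.range (m + 1), ε (k + N₁) := (Finset.sum_range_succ _ m).symm
      have h5 : ε (N₁ + m) = ε (m + N₁) := by ring_nf
      calc x (N₁ + (m + 1)) ≤ r * x (N₁ + m) + ε (N₁ + m) := h1
        _ ≤ r * (r ^ m * x N₁ + ∑ k ∈ Finset.range m, ε (k + N₁)) + ε (N₁ + m) := by linarith
        _ = r ^ (m + 1) * x N₁ + (r * (∑ k ∈ Finset.range m, ε (k + N₁)) + ε (N₁ + m)) := by ring
        _ ≤ r ^ (m + 1) * x N₁ + ((∑ k ∈ Finset.range m, ε (k + N₁)) + ε (m + N₁)) := by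
            rw [h5] at *; linarith
        _ = r ^ (m + 1) * x N₁ + ∑ k ∈ Finset.range (m + 1), ε (k + N₁) := by rw [h4]
  have hkey2 : ∀ m, x (N₁ + m) ≤ r ^ m * x N₁ + δ / 4 := by
    intro m
    have h6 : (∑ k ∈ Finset.range m, ε (k + N₁)) ≤ ∑' k, ε (k + N₁) := by
      apply Summable.sum_le_tsum
      · intro k _; exact hε _
      · exact (summable_nat_add_iff N₁).mpr hsum
    linarith [key m]
  have hpow : Tendsto (fun m => r ^ m * x N₁) atTop (nhds 0) := by
    have := tendsto_pow_atTop_nhds_zero_of_lt_one hr0 hr1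
    simpa using this.mul_const (x N₁)
  obtain ⟨m₀, hm₀⟩ := (Metric.tendsto_atTop.mp hpow) (δ / 4) (by linarith)
  refine ⟨N₁ + m₀, fun n hn => ?_⟩
  have hn' : ∃ m, m₀ ≤ m ∧ n = N₁ + m := ⟨n - N₁, by omega, by omega⟩
  obtain ⟨m, hm, rfl⟩ := hn'
  have h7 := hm₀ m hm
  rw [Real.dist_eq, sub_zero] at h7
  have h8 : r ^ m * x N₁ ≤ |r ^ m * x N₁| := le_abs_self _
  rw [Real.dist_eq, sub_zero, abs_of_nonneg (hx0 _)]
  calc x (N₁ + m) ≤ r ^ m * x N₁ + δ / 4 := hkey2 m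
    _ ≤ δ / 4 + δ / 4 := by linarith
    _ < δ := by linarith



structure Ctx (M : ℕ) : Type where
  L : ℕ → Matrix (Fin M) (Fin M) ℝ
  χ : ℕ → Fin M → ℕ
  a : ℕ → ℝ
  K : ℝ
  c3 : ℝ
  c : ℝ
  B : ℕ
  tg : ℕ
  hrow : ∀ t i, ∑ j, L t i j = 0
  hoff : ∀ t : ℕ, ∀ i j : Fin M, j ≠ i → L t i j ≤ 0
  hM : 2 ≤ M
  hχ : ∀ t i, χ t i = 0 ∨ χ t i = 1
  ha : ∀ t, 0 < a t
  hLK : ∀ t i, (χ t i : ℝ) + L t i i ≤ K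
  hK1 : 1 ≤ K
  hsmall : ∀ s, tg ≤ s → a s * K ≤ 1/2
  hanti : ∀ s, tg ≤ s → a (s+1) ≤ a s
  hc0 : 0 < c
  hc1 : c ≤ 1
  hlow : ∀ s, tg ≤ s → c * a s ≤ a (s+1)
  hB : 0 < B
  hc3 : 0 < c3
  hconn : ∀ k : ℕ, ∀ i j : Fin M, i ≠ j →
      Relation.TransGen (fun p q : Fin M => p ≠ q ∧
        ∃ s, k * B ≤ s ∧ s < (k + 1) * B ∧ L s q p ≤ -c3) i j

namespace Ctx

variable {M : ℕ} (Γ : Ctx M)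

def P (t : ℕ) : Matrix (Fin M) (Fin M) ℝ :=
  1 - Γ.a t • (Matrix.diagonal (fun i => (Γ.χ t i : ℝ)) + Γ.L t)

def Φ (t0 : ℕ) : ℕ → Matrix (Fin M) (Fin M) ℝ
  | 0 => 1
  | n + 1 => Γ.P (t0 + n) * Φ t0 n

lemma χ0 (t : ℕ) (i : Fin M) : (0:ℝ) ≤ (Γ.χ t i : ℝ) := Nat.cast_nonneg _

lemma χ1 (t : ℕ) (i : Fin M) : (Γ.χ t i : ℝ) ≤ 1 := by
  rcases Γ.hχ t i with h | h <;> rw [h] <;> norm_num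

lemma a_nonneg (t : ℕ) : 0 ≤ Γ.a t := (Γ.ha t).le

lemma aK_nonneg (t : ℕ) : 0 ≤ Γ.a t * Γ.K :=
  mul_nonneg (Γ.a_nonneg t) (by linarith [Γ.hK1])

lemma a_le_half (s : ℕ) (hs : Γ.tg ≤ s) : Γ.a s ≤ 1 / 2 := by
  have h1 := Γ.hsmall s hs
  have h2 : Γ.a s * 1 ≤ Γ.a s * Γ.K :=
    mul_le_mul_of_nonneg_left Γ.hK1 (Γ.a_nonneg s)
  linarith

lemma P_offdiag (t : ℕ) {i j : Fin M} (hij : i ≠ j) :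
    Γ.P t i j = -(Γ.a t * Γ.L t i j) := by
  simp [P, Matrix.sub_apply, Matrix.one_apply_ne hij, Matrix.diagonal_apply_ne' _ (Ne.symm hij),
    Matrix.smul_apply, Matrix.add_apply]

lemma P_diag (t : ℕ) (i : Fin M) :
    Γ.P t i i = 1 - Γ.a t * ((Γ.χ t i : ℝ) + Γ.L t i i) := by
  simp [P, Matrix.sub_apply, Matrix.one_apply_eq, Matrix.smul_apply, Matrix.add_apply]
  ring

lemma Lii_nonneg (t : ℕ) (i : Fin M) : 0 ≤ Γ.L t i i := by
  have h1 := Γ.hrow t i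
  rw [← Finset.add_sum_erase _ _ (Finset.mem_univ i)] at h1
  have h2 : ∑ j ∈ Finset.univ.erase i, Γ.L t i j ≤ 0 :=
    Finset.sum_nonpos fun j hj => Γ.hoff t i j (Finset.ne_of_mem_erase hj)
  linarith

lemma P_diag_ge (t : ℕ) (i : Fin M) : 1 - Γ.a t * Γ.K ≤ Γ.P t i i := by
  rw [Γ.P_diag t i]
  have := mul_le_mul_of_nonneg_left (Γ.hLK t i) (Γ.a_nonneg t)
  linarith

lemma P_diag_ge_half (t : ℕ) (ht : Γ.tg ≤ t) (i : Fin M) : 1 / 2 ≤ Γ.P t i i := by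
  have := Γ.P_diag_ge t i
  have := Γ.hsmall t ht
  linarith

lemma P_nonneg (t : ℕ) (ht : Γ.tg ≤ t) (i j : Fin M) : 0 ≤ Γ.P t i j := by
  rcases eq_or_ne i j with rfl | hij
  · linarith [Γ.P_diag_ge_half t ht i]
  · rw [Γ.P_offdiag t hij]
    have h1 : Γ.L t i j ≤ 0 := Γ.hoff t i j (Ne.symm hij)
    nlinarith [Γ.a_nonneg t]

lemma P_rowsum (t : ℕ) (i : Fin M) :
    ∑ j, Γ.P t i j = 1 - Γ.a t * (Γ.χ t i : ℝ) := by
  simp only [P, Matrix.sub_apply, Matrix.smul_apply, Matrix.add_apply, smul_eq_mul,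
    Finset.sum_sub_distrib, ← Finset.mul_sum, Finset.sum_add_distrib]
  rw [Γ.hrow t i]
  simp [Matrix.one_apply, Matrix.diagonal_apply, Finset.sum_ite_eq]

lemma defect_P (t : ℕ) (i : Fin M) :
    defect (Γ.P t) i = Γ.a t * (Γ.χ t i : ℝ) := by
  rw [defect, Γ.P_rowsum]; ring

/-- total per-step leak -/
def mq (t : ℕ) : ℝ := ∑ m, Γ.a t * (Γ.χ t m : ℝ)

lemma mq_nonneg (t : ℕ) : 0 ≤ Γ.mq t :=
  Finset.sum_nonneg fun m _ => mul_nonneg (Γ.a_nonneg t) (Γ.χ0 t m)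

lemma defect_P_le_mq (t : ℕ) (i : Fin M) : defect (Γ.P t) i ≤ Γ.mq t := by
  rw [Γ.defect_P]
  exact Finset.single_le_sum (f := fun m => Γ.a t * (Γ.χ t m : ℝ))
    (fun m _ => mul_nonneg (Γ.a_nonneg t) (Γ.χ0 t m)) (Finset.mem_univ i)

lemma mq_le_Ma (t : ℕ) : Γ.mq t ≤ M * Γ.a t := by
  calc Γ.mq t ≤ ∑ _m : Fin M, Γ.a t := Finset.sum_le_sum fun m _ => by
        have := mul_le_mul_of_nonneg_left (Γ.χ1 t m) (Γ.a_nonneg t); linarith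
    _ = M * Γ.a t := by simp [Finset.sum_const, nsmul_eq_mul]

lemma P_rowsum_le_one (t : ℕ) (i : Fin M) : ∑ j, Γ.P t i j ≤ 1 := by
  rw [Γ.P_rowsum]
  nlinarith [Γ.a_nonneg t, Γ.χ0 t i]

lemma P_rowsum_nonneg (t : ℕ) (ht : Γ.tg ≤ t) (i : Fin M) : 0 ≤ ∑ j, Γ.P t i j := by
  rw [Γ.P_rowsum]
  have h1 := mul_le_mul_of_nonneg_left (Γ.χ1 t i) (Γ.a_nonneg t)
  have := Γ.a_le_half t ht
  linarith

lemma P_edge (s : ℕ) {p q : Fin M} (hpq : p ≠ q) (hL : Γ.L s q p ≤ -Γ.c3) :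
    Γ.a s * Γ.c3 ≤ Γ.P s q p := by
  rw [Γ.P_offdiag s (Ne.symm hpq)]
  nlinarith [Γ.a_nonneg s]

@[simp] lemma Φ_zero (t0 : ℕ) : Γ.Φ t0 0 = 1 := rfl

lemma Φ_succ (t0 n : ℕ) : Γ.Φ t0 (n + 1) = Γ.P (t0 + n) * Γ.Φ t0 n := by
  rw [Φ]

lemma Φ_add (t0 n m : ℕ) : Γ.Φ t0 (n + m) = Γ.Φ (t0 + n) m * Γ.Φ t0 n := by
  induction m with
  | zero => simp
  | succ m ih =>
    rw [show n + (m + 1) = (n + m) + 1 by omega, Φ_succ, ih, Φ_succ,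
      show t0 + (n + m) = t0 + n + m by omega, mul_assoc]

lemma Φ_nonneg (t0 : ℕ) (ht : Γ.tg ≤ t0) (n : ℕ) (i j : Fin M) : 0 ≤ Γ.Φ t0 n i j := by
  induction n generalizing i j with
  | zero => simp [Matrix.one_apply]
            positivity
  | succ n ih =>
    rw [Φ_succ, Matrix.mul_apply]
    exact Finset.sum_nonneg fun m _ =>
      mul_nonneg (Γ.P_nonneg (t0 + n) (by omega) i m) (ih m j)

lemma rowsum_mul (A B : Matrix (Fin M) (Fin M) ℝ) (i : Fin M) :
    ∑ j, (A * B) i j = ∑ m, A i m * ∑ j, B m j := by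
  simp only [Matrix.mul_apply]
  rw [Finset.sum_comm]
  exact Finset.sum_congr rfl fun m _ => (Finset.mul_sum _ _ _).symm

lemma Φ_rowsum_le_one (t0 : ℕ) (ht : Γ.tg ≤ t0) (n : ℕ) (i : Fin M) :
    ∑ j, Γ.Φ t0 n i j ≤ 1 := by
  induction n generalizing i with
  | zero => simp [Matrix.one_apply]
  | succ n ih =>
    rw [Φ_succ, rowsum_mul]
    calc ∑ m, Γ.P (t0 + n) i m * ∑ j, Γ.Φ t0 n m j
        ≤ ∑ m, Γ.P (t0 + n) i m * 1 := Finset.sum_le_sum fun m _ =>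
          mul_le_mul_of_nonneg_left (ih m) (Γ.P_nonneg (t0 + n) (by omega) i m)
      _ = ∑ m, Γ.P (t0 + n) i m := by simp
      _ ≤ 1 := Γ.P_rowsum_le_one (t0 + n) i

lemma Φ_rowsum_nonneg (t0 : ℕ) (ht : Γ.tg ≤ t0) (n : ℕ) (i : Fin M) :
    0 ≤ ∑ j, Γ.Φ t0 n i j := by
  induction n generalizing i with
  | zero => simp [Matrix.one_apply]
  | succ n ih =>
    rw [Φ_succ, rowsum_mul]
    exact Finset.sum_nonneg fun m _ =>
      mul_nonneg (Γ.P_nonneg (t0 + n) (by omega) i m) (ih m)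

lemma defect_Φ_nonneg (t0 : ℕ) (ht : Γ.tg ≤ t0) (n : ℕ) (i : Fin M) :
    0 ≤ defect (Γ.Φ t0 n) i := by
  have := Γ.Φ_rowsum_le_one t0 ht n i
  rw [defect]; linarith

lemma defect_Φ_le (t0 : ℕ) (ht : Γ.tg ≤ t0) (n : ℕ) (i : Fin M) :
    defect (Γ.Φ t0 n) i ≤ ∑ r ∈ Finset.range n, Γ.mq (t0 + r) := by
  induction n generalizing i with
  | zero => simp [defect, Matrix.one_apply]
  | succ n ih =>
    rw [Φ_succ, defect_mul, Finset.sum_range_succ]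
    have h1 : defect (Γ.P (t0 + n)) i ≤ Γ.mq (t0 + n) := Γ.defect_P_le_mq _ i
    have h2 : ∑ m, Γ.P (t0 + n) i m * defect (Γ.Φ t0 n) m
        ≤ ∑ r ∈ Finset.range n, Γ.mq (t0 + r) := by
      calc ∑ m, Γ.P (t0 + n) i m * defect (Γ.Φ t0 n) m
          ≤ ∑ m, Γ.P (t0 + n) i m * (∑ r ∈ Finset.range n, Γ.mq (t0 + r)) :=
            Finset.sum_le_sum fun m _ => mul_le_mul_of_nonneg_left (ih m)
              (Γ.P_nonneg (t0 + n) (by omega) i m)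
        _ = (∑ m, Γ.P (t0 + n) i m) * (∑ r ∈ Finset.range n, Γ.mq (t0 + r)) := by
            rw [← Finset.sum_mul]
        _ ≤ 1 * (∑ r ∈ Finset.range n, Γ.mq (t0 + r)) := by
            apply mul_le_mul_of_nonneg_right (Γ.P_rowsum_le_one _ i)
            exact Finset.sum_nonneg fun r _ => Γ.mq_nonneg _
        _ = _ := one_mul _
    linarith

/-- total defect of window product is at least (diag product) × (total leak) -/
lemma defect_Φ_ge (t0 : ℕ) (ht : Γ.tg ≤ t0) (n : ℕ) :
    (∏ s ∈ Finset.Ico t0 (t0 + n), (1 - Γ.a s * Γ.K)) * ∑ r ∈ Finset.range n, Γ.mq (t0 + r)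
      ≤ ∑ i, defect (Γ.Φ t0 n) i := by
  induction n with
  | zero => simp [defect, Matrix.one_apply]
  | succ n ih =>
    have hfac : ∀ s, Γ.tg ≤ s → 0 ≤ 1 - Γ.a s * Γ.K ∧ 1 - Γ.a s * Γ.K ≤ 1 := by
      intro s hs
      constructor
      · linarith [Γ.hsmall s hs]
      · linarith [Γ.aK_nonneg s]
    have hβnn : 0 ≤ ∏ s ∈ Finset.Ico t0 (t0 + n), (1 - Γ.a s * Γ.K) :=
      Finset.prod_nonneg fun s hs => (hfac s (by
        have := (Finset.mem_Ico.mp hs).1; omega)).1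
    have hβle : ∏ s ∈ Finset.Ico t0 (t0 + n), (1 - Γ.a s * Γ.K) ≤ 1 :=
      Finset.prod_le_one (fun s hs => (hfac s (by
        have := (Finset.mem_Ico.mp hs).1; omega)).1)
        (fun s hs => (hfac s (by have := (Finset.mem_Ico.mp hs).1; omega)).2)
    set β := ∏ s ∈ Finset.Ico t0 (t0 + n), (1 - Γ.a s * Γ.K) with hβ
    have hprod : ∏ s ∈ Finset.Ico t0 (t0 + (n + 1)), (1 - Γ.a s * Γ.K)
        = β * (1 - Γ.a (t0 + n) * Γ.K) := by
      rw [hβ, show t0 + (n + 1) = (t0 + n) + 1 by omega,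
        Finset.prod_Ico_succ_top (by omega : t0 ≤ t0 + n)]
    -- expand defect sum
    have hexp : ∑ i, defect (Γ.Φ t0 (n + 1)) i
        = Γ.mq (t0 + n) + ∑ i, ∑ m, Γ.P (t0 + n) i m * defect (Γ.Φ t0 n) m := by
      rw [Φ_succ]
      simp only [defect_mul, Finset.sum_add_distrib]
      congr 1
      simp only [Γ.defect_P, mq]
    have hdiag : ∀ i, Γ.P (t0 + n) i i * defect (Γ.Φ t0 n) i
        ≤ ∑ m, Γ.P (t0 + n) i m * defect (Γ.Φ t0 n) m := by
      intro i
      apply Finset.single_le_sum (f := fun m => Γ.P (t0 + n) i m * defect (Γ.Φ t0 n) m)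
        (fun m _ => mul_nonneg (Γ.P_nonneg (t0 + n) (by omega) i m)
          (Γ.defect_Φ_nonneg t0 ht n m)) (Finset.mem_univ i)
    have hstep : ∀ i, (1 - Γ.a (t0 + n) * Γ.K) * defect (Γ.Φ t0 n) i
        ≤ ∑ m, Γ.P (t0 + n) i m * defect (Γ.Φ t0 n) m := by
      intro i
      refine le_trans ?_ (hdiag i)
      exact mul_le_mul_of_nonneg_right (Γ.P_diag_ge (t0 + n) i)
        (Γ.defect_Φ_nonneg t0 ht n i)
    have hsum : (1 - Γ.a (t0 + n) * Γ.K) * ∑ i, defect (Γ.Φ t0 n) i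
        ≤ ∑ i, ∑ m, Γ.P (t0 + n) i m * defect (Γ.Φ t0 n) m := by
      rw [Finset.mul_sum]
      exact Finset.sum_le_sum fun i _ => hstep i
    have hmono : (1 - Γ.a (t0 + n) * Γ.K) * (β * ∑ r ∈ Finset.range n, Γ.mq (t0 + r))
        ≤ (1 - Γ.a (t0 + n) * Γ.K) * ∑ i, defect (Γ.Φ t0 n) i :=
      mul_le_mul_of_nonneg_left ih (hfac (t0 + n) (by omega)).1
    rw [hexp, hprod, Finset.sum_range_succ]
    have hmqnn : 0 ≤ Γ.mq (t0 + n) := Γ.mq_nonneg _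
    have hfac1 := hfac (t0 + n) (by omega)
    have hβ1 : β * (1 - Γ.a (t0 + n) * Γ.K) ≤ 1 := by nlinarith
    have hβ1nn : 0 ≤ β * (1 - Γ.a (t0 + n) * Γ.K) := mul_nonneg hβnn hfac1.1
    have h7 : β * (1 - Γ.a (t0 + n) * Γ.K) * Γ.mq (t0 + n) ≤ Γ.mq (t0 + n) := by
      nlinarith
    have h8 : β * (1 - Γ.a (t0 + n) * Γ.K) * ∑ r ∈ Finset.range n, Γ.mq (t0 + r)
        ≤ ∑ i, ∑ m, Γ.P (t0 + n) i m * defect (Γ.Φ t0 n) m := by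
      calc β * (1 - Γ.a (t0 + n) * Γ.K) * ∑ r ∈ Finset.range n, Γ.mq (t0 + r)
          = (1 - Γ.a (t0 + n) * Γ.K) * (β * ∑ r ∈ Finset.range n, Γ.mq (t0 + r)) := by ring
        _ ≤ (1 - Γ.a (t0 + n) * Γ.K) * ∑ i, defect (Γ.Φ t0 n) i := hmono
        _ ≤ _ := hsum
    nlinarith

lemma Φ_diag_ge (t0 : ℕ) (ht : Γ.tg ≤ t0) (n : ℕ) (i : Fin M) :
    ∏ s ∈ Finset.Ico t0 (t0 + n), (1 - Γ.a s * Γ.K) ≤ Γ.Φ t0 n i i := by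
  induction n with
  | zero => simp [Matrix.one_apply]
  | succ n ih =>
    rw [show t0 + (n + 1) = (t0 + n) + 1 by omega, Finset.prod_Ico_succ_top (by omega : t0 ≤ t0 + n), Φ_succ, Matrix.mul_apply]
    have h1 : Γ.P (t0 + n) i i * Γ.Φ t0 n i i ≤ ∑ m, Γ.P (t0 + n) i m * Γ.Φ t0 n m i :=
      Finset.single_le_sum (f := fun m => Γ.P (t0 + n) i m * Γ.Φ t0 n m i)
        (fun m _ => mul_nonneg (Γ.P_nonneg _ (by omega) i m) (Γ.Φ_nonneg t0 ht n m i))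
        (Finset.mem_univ i)
    have h2 : (∏ s ∈ Finset.Ico t0 (t0 + n), (1 - Γ.a s * Γ.K)) * (1 - Γ.a (t0 + n) * Γ.K)
        ≤ Γ.Φ t0 n i i * Γ.P (t0 + n) i i := by
      apply mul_le_mul ih (Γ.P_diag_ge _ i) (by linarith [Γ.hsmall (t0+n) (by omega : Γ.tg ≤ t0+n)])
        (Γ.Φ_nonneg t0 ht n i i)
    calc (∏ s ∈ Finset.Ico t0 (t0 + n), (1 - Γ.a s * Γ.K)) * (1 - Γ.a (t0 + n) * Γ.K)
        ≤ Γ.Φ t0 n i i * Γ.P (t0 + n) i i := h2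
      _ = Γ.P (t0 + n) i i * Γ.Φ t0 n i i := by ring
      _ ≤ _ := h1

/-- lower bound the product of (1 - aK) by 1 - sum -/
lemma prod_one_sub_ge (t0 t1 : ℕ) (ht : Γ.tg ≤ t0) (h01 : t0 ≤ t1) :
    1 - Γ.K * ∑ s ∈ Finset.Ico t0 t1, Γ.a s
      ≤ ∏ s ∈ Finset.Ico t0 t1, (1 - Γ.a s * Γ.K) := by
  induction t1 with
  | zero => interval_cases t0; simp
  | succ t1 ih =>
    rcases Nat.lt_or_ge t0 (t1 + 1) with h | h
    · have h0 : t0 ≤ t1 := by omega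
      rw [Finset.prod_Ico_succ_top h0, Finset.sum_Ico_succ_top h0]
      have ih' := ih h0
      have hfac : 0 ≤ 1 - Γ.a t1 * Γ.K ∧ 1 - Γ.a t1 * Γ.K ≤ 1 := by
        constructor
        · linarith [Γ.hsmall t1 (by omega)]
        · linarith [Γ.aK_nonneg t1]
      have hβle : ∏ s ∈ Finset.Ico t0 t1, (1 - Γ.a s * Γ.K) ≤ 1 := by
        apply Finset.prod_le_one
        · intro s hs
          have := (Finset.mem_Ico.mp hs).1
          linarith [Γ.hsmall s (by omega)]
        · intro s hs
          linarith [Γ.aK_nonneg s]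
      nlinarith [Γ.aK_nonneg t1]
    · have : t0 = t1 + 1 := by omega
      subst this
      simp

end Ctx
end Stmt5Aux

namespace Stmt5Aux
namespace Ctx

variable {M : ℕ} (Γ : Ctx M)

lemma a_mono (s s' : ℕ) (hs : Γ.tg ≤ s) (h : s ≤ s') : Γ.a s' ≤ Γ.a s := by
  induction s' with
  | zero =>
    have : s = 0 := by omega
    subst this; rfl
  | succ s' ih =>
    rcases Nat.lt_or_ge s (s' + 1) with h1 | h1
    · have h2 : s ≤ s' := by omega
      exact le_trans (Γ.hanti s' (by omega)) (ih h2)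
    · have : s = s' + 1 := by omega
      subst this; rfl

lemma a_low_pow (s m : ℕ) (hs : Γ.tg ≤ s) : Γ.c ^ m * Γ.a s ≤ Γ.a (s + m) := by
  induction m with
  | zero => simp
  | succ m ih =>
    have h1 := Γ.hlow (s + m) (by omega)
    calc Γ.c ^ (m + 1) * Γ.a s = Γ.c * (Γ.c ^ m * Γ.a s) := by ring
      _ ≤ Γ.c * Γ.a (s + m) := mul_le_mul_of_nonneg_left ih Γ.hc0.le
      _ ≤ Γ.a (s + m + 1) := h1

lemma a_ge_cB (s s' : ℕ) (hs : Γ.tg ≤ s) (h : s ≤ s') (h2 : s' ≤ s + Γ.B) :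
    Γ.c ^ Γ.B * Γ.a s ≤ Γ.a s' := by
  have h3 : Γ.c ^ Γ.B ≤ Γ.c ^ (s' - s) :=
    pow_le_pow_of_le_one Γ.hc0.le Γ.hc1 (by omega)
  have h4 := Γ.a_low_pow s (s' - s) hs
  have h5 : s + (s' - s) = s' := by omega
  rw [h5] at h4
  calc Γ.c ^ Γ.B * Γ.a s ≤ Γ.c ^ (s' - s) * Γ.a s :=
      mul_le_mul_of_nonneg_right h3 (Γ.a_nonneg s)
    _ ≤ Γ.a s' := h4

lemma exists_crossing (k : ℕ) (S : Finset (Fin M)) (hS : S.Nonempty)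
    (hSne : S ≠ Finset.univ) :
    ∃ p ∈ S, ∃ q ∉ S, p ≠ q ∧ ∃ s, k * Γ.B ≤ s ∧ s < (k + 1) * Γ.B ∧ Γ.L s q p ≤ -Γ.c3 := by
  obtain ⟨i, hi⟩ := hS
  have : ∃ j, j ∉ S := by
    by_contra hcon
    push_neg at hcon
    exact hSne (Finset.eq_univ_iff_forall.mpr hcon)
  obtain ⟨j, hj⟩ := this
  have hij : i ≠ j := fun h => hj (h ▸ hi)
  have key : ∀ x : Fin M, Relation.TransGen (fun p q : Fin M => p ≠ q ∧
      ∃ s, k * Γ.B ≤ s ∧ s < (k + 1) * Γ.B ∧ Γ.L s q p ≤ -Γ.c3) x j → x ∈ S →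
      ∃ p ∈ S, ∃ q ∉ S, p ≠ q ∧ ∃ s, k * Γ.B ≤ s ∧ s < (k + 1) * Γ.B ∧ Γ.L s q p ≤ -Γ.c3 := by
    intro x hx
    induction hx using Relation.TransGen.head_induction_on with
    | single h =>
      intro hxS
      exact ⟨_, hxS, j, hj, h⟩
    | head h' htail IH =>
      rename_i x' c'
      intro hxS
      by_cases hc : c' ∈ S
      · exact IH hc
      · exact ⟨x', hxS, c', hc, h'⟩
  exact key i (Γ.hconn k i j hij) hi

/-- normalizing denominator -/
noncomputable def ρ (u t : ℕ) : ℝ := ∏ s ∈ Finset.Ico u t, (1 - Γ.a s * Γ.K)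

lemma ρ_pos (u t : ℕ) (hu : Γ.tg ≤ u) : 0 < Γ.ρ u t := by
  apply Finset.prod_pos
  intro s hs
  have := (Finset.mem_Ico.mp hs).1
  have := Γ.hsmall s (by omega)
  linarith

lemma ρ_succ (u t : ℕ) (hut : u ≤ t) : Γ.ρ u (t + 1) = Γ.ρ u t * (1 - Γ.a t * Γ.K) := by
  rw [ρ, Finset.prod_Ico_succ_top hut, ρ]

lemma ρ_self (u : ℕ) : Γ.ρ u u = 1 := by simp [ρ]

/-- the normalized column process -/
noncomputable def w (u : ℕ) (j : Fin M) (t : ℕ) (i : Fin M) : ℝ := Γ.Φ u (t - u) i j / Γ.ρ u t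

lemma w_nonneg (u : ℕ) (j : Fin M) (t : ℕ) (i : Fin M) (hu : Γ.tg ≤ u) :
    0 ≤ Γ.w u j t i :=
  div_nonneg (Γ.Φ_nonneg u hu _ i j) (Γ.ρ_pos u t hu).le

lemma w_start (u : ℕ) (j : Fin M) : Γ.w u j u j = 1 := by
  simp [w, ρ_self, Matrix.one_apply]

lemma Φ_unfold (u t : ℕ) (hut : u ≤ t) :
    Γ.Φ u (t + 1 - u) = Γ.P t * Γ.Φ u (t - u) := by
  rw [show t + 1 - u = (t - u) + 1 by omega, Φ_succ, show u + (t - u) = t by omega]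

lemma w_mono_succ (u : ℕ) (j : Fin M) (t : ℕ) (hu : Γ.tg ≤ u) (hut : u ≤ t) (i : Fin M) :
    Γ.w u j t i ≤ Γ.w u j (t + 1) i := by
  have ht : Γ.tg ≤ t := by omega
  have hρ := Γ.ρ_pos u t hu
  have hd : 0 < 1 - Γ.a t * Γ.K := by linarith [Γ.hsmall t ht]
  have hΦ : (1 - Γ.a t * Γ.K) * Γ.Φ u (t - u) i j ≤ Γ.Φ u (t + 1 - u) i j := by
    rw [Γ.Φ_unfold u t hut, Matrix.mul_apply]
    calc (1 - Γ.a t * Γ.K) * Γ.Φ u (t - u) i j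
        ≤ Γ.P t i i * Γ.Φ u (t - u) i j :=
          mul_le_mul_of_nonneg_right (Γ.P_diag_ge t i) (Γ.Φ_nonneg u hu _ i j)
      _ ≤ ∑ m, Γ.P t i m * Γ.Φ u (t - u) m j :=
          Finset.single_le_sum (f := fun m => Γ.P t i m * Γ.Φ u (t - u) m j)
            (fun m _ => mul_nonneg (Γ.P_nonneg t ht i m) (Γ.Φ_nonneg u hu _ m j))
            (Finset.mem_univ i)
  rw [w, w, Γ.ρ_succ u t hut, le_div_iff₀ (by positivity)]
  have hexp : Γ.Φ u (t - u) i j / Γ.ρ u t * (Γ.ρ u t * (1 - Γ.a t * Γ.K))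
      = (1 - Γ.a t * Γ.K) * Γ.Φ u (t - u) i j := by
    field_simp
  rw [hexp]
  exact hΦ

lemma w_mono (u : ℕ) (j : Fin M) (t t' : ℕ) (hu : Γ.tg ≤ u) (hut : u ≤ t) (htt' : t ≤ t')
    (i : Fin M) : Γ.w u j t i ≤ Γ.w u j t' i := by
  induction t' with
  | zero =>
    have : t = 0 := by omega
    subst this; rfl
  | succ t' ih =>
    rcases Nat.lt_or_ge t (t' + 1) with h1 | h1
    · exact le_trans (ih (by omega)) (Γ.w_mono_succ u j t' hu (by omega) i)
    · have : t = t' + 1 := by omega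
      subst this; rfl

lemma w_edge (u : ℕ) (j : Fin M) (t : ℕ) (hu : Γ.tg ≤ u) (hut : u ≤ t)
    {p q : Fin M} (hpq : p ≠ q) (hL : Γ.L t q p ≤ -Γ.c3) :
    Γ.w u j t q + Γ.a t * Γ.c3 * Γ.w u j t p ≤ Γ.w u j (t + 1) q := by
  have ht : Γ.tg ≤ t := by omega
  have hρ := Γ.ρ_pos u t hu
  have hd : 0 < 1 - Γ.a t * Γ.K := by linarith [Γ.hsmall t ht]
  have hΦq : 0 ≤ Γ.Φ u (t - u) q j := Γ.Φ_nonneg u hu _ q j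
  have hΦp : 0 ≤ Γ.Φ u (t - u) p j := Γ.Φ_nonneg u hu _ p j
  have hkey : (1 - Γ.a t * Γ.K) * Γ.Φ u (t - u) q j + Γ.a t * Γ.c3 * Γ.Φ u (t - u) p j
      ≤ Γ.Φ u (t + 1 - u) q j := by
    rw [Γ.Φ_unfold u t hut, Matrix.mul_apply]
    have hsub : ({q, p} : Finset (Fin M)) ⊆ Finset.univ := Finset.subset_univ _
    have hpair : ∑ m ∈ ({q, p} : Finset (Fin M)), Γ.P t q m * Γ.Φ u (t - u) m j
        = Γ.P t q q * Γ.Φ u (t - u) q j + Γ.P t q p * Γ.Φ u (t - u) p j :=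
      Finset.sum_pair (Ne.symm hpq)
    have h2 : ∑ m ∈ ({q, p} : Finset (Fin M)), Γ.P t q m * Γ.Φ u (t - u) m j
        ≤ ∑ m, Γ.P t q m * Γ.Φ u (t - u) m j := by
      apply Finset.sum_le_sum_of_subset_of_nonneg hsub
      intro m _ _
      exact mul_nonneg (Γ.P_nonneg t ht q m) (Γ.Φ_nonneg u hu _ m j)
    have h3 : (1 - Γ.a t * Γ.K) * Γ.Φ u (t - u) q j ≤ Γ.P t q q * Γ.Φ u (t - u) q j :=
      mul_le_mul_of_nonneg_right (Γ.P_diag_ge t q) hΦq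
    have h4 : Γ.a t * Γ.c3 * Γ.Φ u (t - u) p j ≤ Γ.P t q p * Γ.Φ u (t - u) p j :=
      mul_le_mul_of_nonneg_right (Γ.P_edge t hpq hL) hΦp
    linarith [hpair ▸ h2]
  rw [w, w, w, Γ.ρ_succ u t hut, le_div_iff₀ (by positivity)]
  have hexp : (Γ.Φ u (t - u) q j / Γ.ρ u t + Γ.a t * Γ.c3 * (Γ.Φ u (t - u) p j / Γ.ρ u t))
      * (Γ.ρ u t * (1 - Γ.a t * Γ.K))
      = (1 - Γ.a t * Γ.K) * Γ.Φ u (t - u) q j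
        + (1 - Γ.a t * Γ.K) * (Γ.a t * Γ.c3 * Γ.Φ u (t - u) p j) := by
    field_simp
  rw [hexp]
  have h5 : (1 - Γ.a t * Γ.K) * (Γ.a t * Γ.c3 * Γ.Φ u (t - u) p j)
      ≤ Γ.a t * Γ.c3 * Γ.Φ u (t - u) p j := by
    have h6 : 0 ≤ Γ.a t * Γ.c3 * Γ.Φ u (t - u) p j :=
      mul_nonneg (mul_nonneg (Γ.a_nonneg t) Γ.hc3.le) hΦp
    nlinarith [Γ.aK_nonneg t]
  linarith

end Ctx
end Stmt5Aux
namespace Stmt5Aux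
namespace Ctx

variable {M : ℕ} (Γ : Ctx M)

lemma block_pump (u : ℕ) (j : Fin M) (hu : Γ.tg ≤ u) (S : Finset (Fin M))
    (hS : S.Nonempty) (hSne : S ≠ Finset.univ) (θ : ℝ) (hθ : 0 ≤ θ) (k : ℕ)
    (hk : u ≤ k * Γ.B) (hwS : ∀ i ∈ S, θ ≤ Γ.w u j (k * Γ.B) i) :
    (∑ q ∈ Sᶜ, Γ.w u j (k * Γ.B) q) + Γ.c ^ Γ.B * Γ.a (k * Γ.B) * Γ.c3 * θ
      ≤ ∑ q ∈ Sᶜ, Γ.w u j ((k + 1) * Γ.B) q := by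
  obtain ⟨p, hp, q, hq, hpq, s, hs1, hs2, hsL⟩ := Γ.exists_crossing k S hS hSne
  have hB' : (k + 1) * Γ.B = k * Γ.B + Γ.B := by ring
  have htkB : Γ.tg ≤ k * Γ.B := le_trans hu hk
  have ha1 : Γ.c ^ Γ.B * Γ.a (k * Γ.B) ≤ Γ.a s :=
    Γ.a_ge_cB (k * Γ.B) s htkB hs1 (by omega)
  have hwp : θ ≤ Γ.w u j s p :=
    le_trans (hwS p hp) (Γ.w_mono u j (k * Γ.B) s hu hk hs1 p)
  have hstep := Γ.w_edge u j s hu (le_trans hk hs1) hpq hsL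
  have hq' : q ∈ Sᶜ := Finset.mem_compl.mpr hq
  have hsum1 : (∑ q' ∈ Sᶜ, Γ.w u j s q') + Γ.a s * Γ.c3 * θ
      ≤ ∑ q' ∈ Sᶜ, Γ.w u j (s + 1) q' := by
    rw [← Finset.add_sum_erase _ _ hq', ← Finset.add_sum_erase _ _ hq']
    have h1 : ∑ q' ∈ Sᶜ.erase q, Γ.w u j s q' ≤ ∑ q' ∈ Sᶜ.erase q, Γ.w u j (s + 1) q' :=
      Finset.sum_le_sum fun q' _ => Γ.w_mono_succ u j s hu (le_trans hk hs1) q'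
    have h2 : Γ.a s * Γ.c3 * θ ≤ Γ.a s * Γ.c3 * Γ.w u j s p :=
      mul_le_mul_of_nonneg_left hwp (mul_nonneg (Γ.a_nonneg s) Γ.hc3.le)
    linarith
  have hm1 : ∑ q' ∈ Sᶜ, Γ.w u j (k * Γ.B) q' ≤ ∑ q' ∈ Sᶜ, Γ.w u j s q' :=
    Finset.sum_le_sum fun q' _ => Γ.w_mono u j (k * Γ.B) s hu hk hs1 q'
  have hm2 : ∑ q' ∈ Sᶜ, Γ.w u j (s + 1) q' ≤ ∑ q' ∈ Sᶜ, Γ.w u j ((k + 1) * Γ.B) q' :=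
    Finset.sum_le_sum fun q' _ =>
      Γ.w_mono u j (s + 1) ((k + 1) * Γ.B) hu (by omega) (by omega) q'
  have h3 : Γ.c ^ Γ.B * Γ.a (k * Γ.B) * Γ.c3 * θ ≤ Γ.a s * Γ.c3 * θ := by
    apply mul_le_mul_of_nonneg_right _ hθ
    exact mul_le_mul_of_nonneg_right ha1 Γ.hc3.le
  linarith

lemma blocks_pump (u : ℕ) (j : Fin M) (hu : Γ.tg ≤ u) (S : Finset (Fin M))
    (hS : S.Nonempty) (hSne : S ≠ Finset.univ) (θ : ℝ) (hθ : 0 ≤ θ)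
    (v : ℕ) (hv : u ≤ v) (hwS : ∀ i ∈ S, θ ≤ Γ.w u j v i)
    (k0 : ℕ) (hk0 : v ≤ k0 * Γ.B) :
    ∀ k1, k0 ≤ k1 →
      Γ.c3 * θ * (Γ.c ^ Γ.B * ∑ k ∈ Finset.Ico k0 k1, Γ.a (k * Γ.B))
        ≤ ∑ q ∈ Sᶜ, Γ.w u j (k1 * Γ.B) q := by
  intro k1 hk1
  induction k1 with
  | zero =>
    have : k0 = 0 := by omega
    subst this
    simp only [Finset.Ico_self, Finset.sum_empty, mul_zero]
    exact Finset.sum_nonneg fun q _ => Γ.w_nonneg u j (0 * Γ.B) q hu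
  | succ k1 ih =>
    rcases Nat.lt_or_ge k0 (k1 + 1) with h1 | h1
    · have hk0k1 : k0 ≤ k1 := by omega
      have ih' := ih hk0k1
      have hkk : k0 * Γ.B ≤ k1 * Γ.B := Nat.mul_le_mul_right _ hk0k1
      have hwS' : ∀ i ∈ S, θ ≤ Γ.w u j (k1 * Γ.B) i := fun i hi =>
        le_trans (hwS i hi) (Γ.w_mono u j v (k1 * Γ.B) hu hv (by omega) i)
      have hbp := Γ.block_pump u j hu S hS hSne θ hθ k1 (by omega) hwS'
      rw [Finset.sum_Ico_succ_top hk0k1]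
      have hexp : Γ.c3 * θ * (Γ.c ^ Γ.B *
          ((∑ k ∈ Finset.Ico k0 k1, Γ.a (k * Γ.B)) + Γ.a (k1 * Γ.B)))
          = Γ.c3 * θ * (Γ.c ^ Γ.B * ∑ k ∈ Finset.Ico k0 k1, Γ.a (k * Γ.B))
            + Γ.c ^ Γ.B * Γ.a (k1 * Γ.B) * Γ.c3 * θ := by ring
      rw [hexp]
      linarith
    · have : k0 = k1 + 1 := by omega
      subst this
      simp only [Finset.Ico_self, Finset.sum_empty, mul_zero]
      exact Finset.sum_nonneg fun q _ => Γ.w_nonneg u j _ q hu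

lemma a_le_of_eps (W : ℝ) (hε : ∀ s, Γ.tg ≤ s → Γ.a s * (4 * Γ.B) ≤ W)
    (s : ℕ) (hs : Γ.tg ≤ s) : Γ.a s ≤ W / (4 * Γ.B) := by
  have h1 := hε s hs
  have hB : (0:ℝ) < 4 * Γ.B := by
    have := Γ.hB; positivity
  rw [le_div_iff₀ hB]
  exact h1

lemma fringe_sum_le (W : ℝ) (hε : ∀ s, Γ.tg ≤ s → Γ.a s * (4 * Γ.B) ≤ W)
    (x y : ℕ) (hx : Γ.tg ≤ x) (hcard : y - x ≤ Γ.B) :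
    ∑ s ∈ Finset.Ico x y, Γ.a s ≤ W / 4 := by
  have hB : (0:ℝ) < Γ.B := by exact_mod_cast Γ.hB
  have h1 : ∑ s ∈ Finset.Ico x y, Γ.a s ≤ (Finset.Ico x y).card • (W / (4 * Γ.B)) := by
    apply Finset.sum_le_card_nsmul
    intro s hs
    exact Γ.a_le_of_eps W hε s (by have := (Finset.mem_Ico.mp hs).1; omega)
  rw [Nat.card_Ico, nsmul_eq_mul] at h1
  have hWnn : 0 ≤ W / (4 * Γ.B) := by
    have := Γ.a_le_of_eps W hε Γ.tg le_rfl
    have := Γ.a_nonneg Γ.tg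
    linarith
  have h2 : ((y - x : ℕ) : ℝ) ≤ (Γ.B : ℝ) := by exact_mod_cast hcard
  calc ∑ s ∈ Finset.Ico x y, Γ.a s ≤ ((y - x : ℕ) : ℝ) * (W / (4 * Γ.B)) := h1
    _ ≤ (Γ.B : ℝ) * (W / (4 * Γ.B)) := mul_le_mul_of_nonneg_right h2 hWnn
    _ = W / 4 := by field_simp

lemma blocksum_le (k0 k1 : ℕ) (h01 : k0 ≤ k1) (htg : Γ.tg ≤ k0 * Γ.B) :
    ∑ s ∈ Finset.Ico (k0 * Γ.B) (k1 * Γ.B), Γ.a s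
      ≤ ∑ k ∈ Finset.Ico k0 k1, (Γ.B : ℝ) * Γ.a (k * Γ.B) := by
  induction k1 with
  | zero =>
    have : k0 = 0 := by omega
    subst this; simp
  | succ k1 ih =>
    rcases Nat.lt_or_ge k0 (k1 + 1) with h1 | h1
    · have hk0k1 : k0 ≤ k1 := by omega
      have hm1 : k0 * Γ.B ≤ k1 * Γ.B := Nat.mul_le_mul_right _ hk0k1
      have hm2 : k1 * Γ.B ≤ (k1 + 1) * Γ.B := Nat.mul_le_mul_right _ (by omega)
      rw [← Finset.sum_Ico_consecutive _ hm1 hm2, Finset.sum_Ico_succ_top hk0k1]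
      have hblk : ∑ s ∈ Finset.Ico (k1 * Γ.B) ((k1 + 1) * Γ.B), Γ.a s
          ≤ (Γ.B : ℝ) * Γ.a (k1 * Γ.B) := by
        have h2 : ∑ s ∈ Finset.Ico (k1 * Γ.B) ((k1 + 1) * Γ.B), Γ.a s
            ≤ (Finset.Ico (k1 * Γ.B) ((k1 + 1) * Γ.B)).card • Γ.a (k1 * Γ.B) := by
          apply Finset.sum_le_card_nsmul
          intro s hs
          have hs1 := (Finset.mem_Ico.mp hs).1
          exact Γ.a_mono (k1 * Γ.B) s (by
            have : k0 * Γ.B ≤ k1 * Γ.B := hm1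
            omega) hs1
        rw [Nat.card_Ico] at h2
        have hcard : (k1 + 1) * Γ.B - k1 * Γ.B = Γ.B := by
          have : (k1 + 1) * Γ.B = k1 * Γ.B + Γ.B := by ring
          omega
        rw [hcard, nsmul_eq_mul] at h2
        exact h2
      have := ih hk0k1
      linarith
    · have : k0 = k1 + 1 := by omega
      subst this; simp

end Ctx
end Stmt5Aux
namespace Stmt5Aux
namespace Ctx

variable {M : ℕ} (Γ : Ctx M)

lemma chunk_pump (u : ℕ) (j : Fin M) (hu : Γ.tg ≤ u) (W : ℝ) (hW : 0 < W)
    (hε : ∀ s, Γ.tg ≤ s → Γ.a s * (4 * Γ.B) ≤ W)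
    (S : Finset (Fin M)) (hS : S.Nonempty) (hSne : S ≠ Finset.univ)
    (θ : ℝ) (hθ : 0 ≤ θ) (v v' : ℕ) (huv : u ≤ v) (hvv' : v ≤ v')
    (hwS : ∀ i ∈ S, θ ≤ Γ.w u j v i)
    (hsum : W ≤ ∑ s ∈ Finset.Ico v v', Γ.a s) :
    ∃ q, q ∉ S ∧ Γ.c ^ Γ.B * Γ.c3 * W / (2 * Γ.B * M) * θ ≤ Γ.w u j v' q := by
  have hBpos : 0 < Γ.B := Γ.hB
  have hBr : (0:ℝ) < Γ.B := by exact_mod_cast hBpos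
  have hMpos : 0 < M := by have := Γ.hM; omega
  have hMr : (0:ℝ) < M := by exact_mod_cast hMpos
  have htgv : Γ.tg ≤ v := le_trans hu huv
  set kmin := v / Γ.B + 1 with hkmin
  set kmax := v' / Γ.B with hkmax
  have e1 : kmin * Γ.B = (v / Γ.B) * Γ.B + Γ.B := by rw [hkmin]; ring
  have e2 : (v / Γ.B) * Γ.B ≤ v := Nat.div_mul_le_self v Γ.B
  have e3 : v < (v / Γ.B) * Γ.B + Γ.B := by
    have h := Nat.div_add_mod v Γ.B
    have hm := Nat.mod_lt v hBpos
    have : Γ.B * (v / Γ.B) = (v / Γ.B) * Γ.B := Nat.mul_comm _ _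
    omega
  have hv1 : v ≤ kmin * Γ.B := by omega
  have hv2 : kmin * Γ.B ≤ v + Γ.B := by omega
  have hv3 : kmax * Γ.B ≤ v' := by
    rw [hkmax]
    exact Nat.div_mul_le_self v' Γ.B
  have hv4 : v' < kmax * Γ.B + Γ.B := by
    have h := Nat.div_add_mod v' Γ.B
    have hm := Nat.mod_lt v' hBpos
    have : Γ.B * (v' / Γ.B) = kmax * Γ.B := by rw [hkmax, Nat.mul_comm]
    omega
  have hkk : kmin ≤ kmax := by
    by_contra hcon
    push_neg at hcon
    have h6 : kmax * Γ.B + Γ.B ≤ kmin * Γ.B := by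
      have h7 : kmax + 1 ≤ kmin := by omega
      have h9 := Nat.mul_le_mul_right Γ.B h7
      have h8 : (kmax + 1) * Γ.B = kmax * Γ.B + Γ.B := by ring
      omega
    have h5 : v' - v ≤ Γ.B := by omega
    have h8 := Γ.fringe_sum_le W hε v v' htgv h5
    linarith
  have hmm : kmin * Γ.B ≤ kmax * Γ.B := Nat.mul_le_mul_right _ hkk
  have htgkmin : Γ.tg ≤ kmin * Γ.B := by omega
  -- sum splitting
  have hs1 : (∑ s ∈ Finset.Ico v (kmin * Γ.B), Γ.a s)
      + ∑ s ∈ Finset.Ico (kmin * Γ.B) v', Γ.a s = ∑ s ∈ Finset.Ico v v', Γ.a s :=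
    Finset.sum_Ico_consecutive _ hv1 (le_trans hmm hv3)
  have hs2 : (∑ s ∈ Finset.Ico (kmin * Γ.B) (kmax * Γ.B), Γ.a s)
      + ∑ s ∈ Finset.Ico (kmax * Γ.B) v', Γ.a s
      = ∑ s ∈ Finset.Ico (kmin * Γ.B) v', Γ.a s :=
    Finset.sum_Ico_consecutive _ hmm hv3
  have hf1 : ∑ s ∈ Finset.Ico v (kmin * Γ.B), Γ.a s ≤ W / 4 :=
    Γ.fringe_sum_le W hε v (kmin * Γ.B) htgv (by omega)
  have hf2 : ∑ s ∈ Finset.Ico (kmax * Γ.B) v', Γ.a s ≤ W / 4 :=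
    Γ.fringe_sum_le W hε (kmax * Γ.B) v' (by omega) (by omega)
  have hmid : W / 2 ≤ ∑ s ∈ Finset.Ico (kmin * Γ.B) (kmax * Γ.B), Γ.a s := by
    linarith
  -- convert to block values
  have hblk : ∑ s ∈ Finset.Ico (kmin * Γ.B) (kmax * Γ.B), Γ.a s
      ≤ ∑ k ∈ Finset.Ico kmin kmax, (Γ.B : ℝ) * Γ.a (k * Γ.B) :=
    Γ.blocksum_le kmin kmax hkk htgkmin
  have hblk2 : W / (2 * Γ.B) ≤ ∑ k ∈ Finset.Ico kmin kmax, Γ.a (k * Γ.B) := by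
    have h9 : ∑ k ∈ Finset.Ico kmin kmax, (Γ.B : ℝ) * Γ.a (k * Γ.B)
        = (Γ.B : ℝ) * ∑ k ∈ Finset.Ico kmin kmax, Γ.a (k * Γ.B) := by
      rw [Finset.mul_sum]
    rw [h9] at hblk
    rw [div_le_iff₀ (by positivity)]
    have h10 : W / 2 ≤ (Γ.B : ℝ) * ∑ k ∈ Finset.Ico kmin kmax, Γ.a (k * Γ.B) := by
      linarith
    calc W = (W / 2) * 2 := by ring
      _ ≤ ((Γ.B : ℝ) * ∑ k ∈ Finset.Ico kmin kmax, Γ.a (k * Γ.B)) * 2 := by linarith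
      _ = (∑ k ∈ Finset.Ico kmin kmax, Γ.a (k * Γ.B)) * (2 * Γ.B) := by ring
  -- pump
  have hpump := Γ.blocks_pump u j hu S hS hSne θ hθ v huv hwS kmin hv1 kmax hkk
  have hF1 : ∑ q ∈ Sᶜ, Γ.w u j (kmax * Γ.B) q ≤ ∑ q ∈ Sᶜ, Γ.w u j v' q :=
    Finset.sum_le_sum fun q _ => Γ.w_mono u j (kmax * Γ.B) v' hu (by omega) hv3 q
  have hpump2 : Γ.c3 * θ * (Γ.c ^ Γ.B * (W / (2 * Γ.B))) ≤ ∑ q ∈ Sᶜ, Γ.w u j v' q := by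
    have hcB : (0:ℝ) ≤ Γ.c ^ Γ.B := pow_nonneg Γ.hc0.le _
    have h11 : Γ.c3 * θ * (Γ.c ^ Γ.B * (W / (2 * Γ.B)))
        ≤ Γ.c3 * θ * (Γ.c ^ Γ.B * ∑ k ∈ Finset.Ico kmin kmax, Γ.a (k * Γ.B)) := by
      apply mul_le_mul_of_nonneg_left _ (mul_nonneg Γ.hc3.le hθ)
      exact mul_le_mul_of_nonneg_left hblk2 hcB
    linarith
  -- extract a good q
  by_contra hcon
  push_neg at hcon
  have hcne : (Sᶜ : Finset (Fin M)).Nonempty := by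
    obtain ⟨q0, hq0⟩ : ∃ q0, q0 ∉ S := by
      by_contra hq
      push_neg at hq
      exact hSne (Finset.eq_univ_iff_forall.mpr hq)
    exact ⟨q0, Finset.mem_compl.mpr hq0⟩
  have hlt : ∑ q ∈ Sᶜ, Γ.w u j v' q
      < ∑ _q ∈ Sᶜ, Γ.c ^ Γ.B * Γ.c3 * W / (2 * Γ.B * M) * θ := by
    apply Finset.sum_lt_sum_of_nonempty hcne
    intro q hq
    exact hcon q (Finset.mem_compl.mp hq)
  rw [Finset.sum_const, nsmul_eq_mul] at hlt
  have hcard : ((Sᶜ : Finset (Fin M)).card : ℝ) ≤ M := by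
    have h12 : (Sᶜ : Finset (Fin M)).card ≤ M := by
      have := Finset.card_le_univ (Sᶜ : Finset (Fin M))
      simpa using this
    exact_mod_cast h12
  have hXnn : 0 ≤ Γ.c ^ Γ.B * Γ.c3 * W / (2 * Γ.B * M) * θ := by
    have hcB : (0:ℝ) ≤ Γ.c ^ Γ.B := pow_nonneg Γ.hc0.le _
    have h15 : (0:ℝ) ≤ Γ.c ^ Γ.B * Γ.c3 * W / (2 * Γ.B * M) :=
      div_nonneg (mul_nonneg (mul_nonneg hcB Γ.hc3.le) hW.le) (by positivity)
    exact mul_nonneg h15 hθ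
  have h13 : ((Sᶜ : Finset (Fin M)).card : ℝ) * (Γ.c ^ Γ.B * Γ.c3 * W / (2 * Γ.B * M) * θ)
      ≤ (M : ℝ) * (Γ.c ^ Γ.B * Γ.c3 * W / (2 * Γ.B * M) * θ) :=
    mul_le_mul_of_nonneg_right hcard hXnn
  have h14 : (M : ℝ) * (Γ.c ^ Γ.B * Γ.c3 * W / (2 * Γ.B * M) * θ)
      = Γ.c3 * θ * (Γ.c ^ Γ.B * (W / (2 * Γ.B))) := by
    field_simp
  rw [h14] at h13
  linarith

/-- the main positivity lemma: after M-1 chunks, the whole column is uniformly positive -/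
lemma grow (u : ℕ) (j : Fin M) (hu : Γ.tg ≤ u) (W : ℝ) (hW : 0 < W)
    (hε : ∀ s, Γ.tg ≤ s → Γ.a s * (4 * Γ.B) ≤ W)
    (uu : ℕ → ℕ) (huu0 : uu 0 = u) (humono : ∀ τ, uu τ ≤ uu (τ + 1))
    (hbudget : ∀ τ, τ < M - 1 → W ≤ ∑ s ∈ Finset.Ico (uu τ) (uu (τ + 1)), Γ.a s) :
    ∀ i, (min 1 (Γ.c ^ Γ.B * Γ.c3 * W / (2 * Γ.B * M))) ^ (M - 1)
      ≤ Γ.w u j (uu (M - 1)) i := by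
  have hMpos : 0 < M := by have := Γ.hM; omega
  set g0 := Γ.c ^ Γ.B * Γ.c3 * W / (2 * Γ.B * M) with hg0
  have hg0nn : 0 ≤ g0 := by
    have hcB : (0:ℝ) ≤ Γ.c ^ Γ.B := pow_nonneg Γ.hc0.le _
    exact div_nonneg (mul_nonneg (mul_nonneg hcB Γ.hc3.le) hW.le) (by positivity)
  set f := min 1 g0 with hf
  have hf0 : 0 ≤ f := le_min zero_le_one hg0nn
  have hf1 : f ≤ 1 := min_le_left _ _
  have humono' : Monotone uu := monotone_nat_of_le_succ humono
  have huuτ : ∀ τ, u ≤ uu τ := fun τ => huu0 ▸ humono' (Nat.zero_le τ)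
  -- the staged induction
  have main : ∀ τ, τ ≤ M - 1 → ∃ S : Finset (Fin M), S.Nonempty ∧
      min (τ + 1) M ≤ S.card ∧ ∀ i ∈ S, f ^ τ ≤ Γ.w u j (uu τ) i := by
    intro τ
    induction τ with
    | zero =>
      intro _
      refine ⟨{j}, Finset.singleton_nonempty j, by simp [hMpos], ?_⟩
      intro i hi
      rw [Finset.mem_singleton] at hi
      subst hi
      rw [pow_zero, huu0, Γ.w_start]
    | succ τ ih =>
      intro hτ
      obtain ⟨S, hSne', hScard, hwS⟩ := ih (by omega)
      by_cases hSu : S = Finset.univ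
      · refine ⟨S, hSne', ?_, ?_⟩
        · rw [hSu]
          simp [Finset.card_univ]
        · intro i hi
          have h1 : f ^ (τ + 1) ≤ f ^ τ := by
            calc f ^ (τ + 1) = f ^ τ * f := by ring
              _ ≤ f ^ τ * 1 := mul_le_mul_of_nonneg_left hf1 (pow_nonneg hf0 τ)
              _ = f ^ τ := mul_one _
          exact le_trans h1 (le_trans (hwS i hi)
            (Γ.w_mono u j (uu τ) (uu (τ + 1)) hu (huuτ τ) (humono τ) i))
      · -- apply chunk pump
        have hτ' : τ < M - 1 := by omega
        obtain ⟨q, hq, hwq⟩ := Γ.chunk_pump u j hu W hW hε S hSne' hSu (f ^ τ)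
          (pow_nonneg hf0 τ) (uu τ) (uu (τ + 1)) (huuτ τ) (humono τ) hwS
          (hbudget τ hτ')
        refine ⟨insert q S, Finset.insert_nonempty q S, ?_, ?_⟩
        · rw [Finset.card_insert_of_notMem hq]
          have hcard1 : S.card ≤ M - 1 := by
            have h2 : S.card ≤ M := by
              have := Finset.card_le_univ S
              simpa using this
            have h3 : S.card ≠ M := by
              intro hc
              apply hSu
              apply Finset.eq_univ_of_card
              simp [hc]
            omega
          omega
        · intro i hi
          rw [Finset.mem_insert] at hi
          rcases hi with rfl | hi
          · calc f ^ (τ + 1) = f ^ τ * f := by ring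
              _ ≤ f ^ τ * g0 := mul_le_mul_of_nonneg_left (min_le_right _ _)
                  (pow_nonneg hf0 τ)
              _ = g0 * f ^ τ := by ring
              _ ≤ Γ.w u j (uu (τ + 1)) i := hwq
          · have h1 : f ^ (τ + 1) ≤ f ^ τ := by
              calc f ^ (τ + 1) = f ^ τ * f := by ring
                _ ≤ f ^ τ * 1 := mul_le_mul_of_nonneg_left hf1 (pow_nonneg hf0 τ)
                _ = f ^ τ := mul_one _
            exact le_trans h1 (le_trans (hwS i hi)
              (Γ.w_mono u j (uu τ) (uu (τ + 1)) hu (huuτ τ) (humono τ) i))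
  obtain ⟨S, _, hScard, hwS⟩ := main (M - 1) le_rfl
  have hSu : S = Finset.univ := by
    apply Finset.eq_univ_of_card
    have h1 : min (M - 1 + 1) M = M := by omega
    rw [h1] at hScard
    have h2 : S.card ≤ M := by
      have := Finset.card_le_univ S
      simpa using this
    simp
    omega
  intro i
  exact hwS i (hSu ▸ Finset.mem_univ i)

/-- uniform positivity of the window product -/
lemma window_pos (u : ℕ) (hu : Γ.tg ≤ u) (W : ℝ) (hW : 0 < W)
    (hε : ∀ s, Γ.tg ≤ s → Γ.a s * (4 * Γ.B) ≤ W)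
    (uu : ℕ → ℕ) (huu0 : uu 0 = u) (humono : ∀ τ, uu τ ≤ uu (τ + 1))
    (hbudget : ∀ τ, τ < M - 1 → W ≤ ∑ s ∈ Finset.Ico (uu τ) (uu (τ + 1)), Γ.a s)
    (hKsum : Γ.K * ∑ s ∈ Finset.Ico u (uu (M - 1)), Γ.a s ≤ 1 / 2) :
    ∀ i j, 1 / 2 * (min 1 (Γ.c ^ Γ.B * Γ.c3 * W / (2 * Γ.B * M))) ^ (M - 1)
      ≤ Γ.Φ u (uu (M - 1) - u) i j := by
  intro i j
  have humono' : Monotone uu := monotone_nat_of_le_succ humono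
  have huum : u ≤ uu (M - 1) := huu0 ▸ humono' (Nat.zero_le _)
  have hgrow := Γ.grow u j hu W hW hε uu huu0 humono hbudget i
  have hρpos := Γ.ρ_pos u (uu (M - 1)) hu
  have hρge : 1 / 2 ≤ Γ.ρ u (uu (M - 1)) := by
    have := Γ.prod_one_sub_ge u (uu (M - 1)) hu huum
    rw [ρ]
    linarith
  have hw : Γ.w u j (uu (M - 1)) i
      = Γ.Φ u (uu (M - 1) - u) i j / Γ.ρ u (uu (M - 1)) := rfl
  rw [hw, le_div_iff₀ hρpos] at hgrow
  set X := (min 1 (Γ.c ^ Γ.B * Γ.c3 * W / (2 * Γ.B * M))) ^ (M - 1) with hX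
  have hXnn : 0 ≤ X := by
    apply pow_nonneg
    apply le_min zero_le_one
    have hcB : (0:ℝ) ≤ Γ.c ^ Γ.B := pow_nonneg Γ.hc0.le _
    exact div_nonneg (mul_nonneg (mul_nonneg hcB Γ.hc3.le) hW.le) (by positivity)
  have h2 : 0 ≤ (Γ.ρ u (uu (M - 1)) - 1 / 2) * X :=
    mul_nonneg (by linarith) hXnn
  nlinarith [hgrow]

end Ctx
end Stmt5Aux
namespace Stmt5Aux

lemma telescope2 (g : ℕ → ℝ) (n : ℕ) :
    ∑ k ∈ Finset.range n, (g k - g (k + 2)) = g 0 + g 1 - g n - g (n + 1) := by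
  induction n with
  | zero => simp
  | succ n ih =>
    rw [Finset.sum_range_succ, ih]
    simp only [show n + 1 + 1 = n + 2 from rfl]
    ring

lemma mulVec_upper {M : ℕ} (A : Matrix (Fin M) (Fin M) ℝ) (hA : ∀ i j, 0 ≤ A i j)
    (x : Fin M → ℝ) (hb : ℝ) (hx : ∀ j, x j ≤ hb) (hhb : 0 ≤ hb) (i : Fin M) :
    A.mulVec x i ≤ (1 - defect A i) * hb := by
  have h1 : A.mulVec x i = ∑ j, A i j * x j := by simp [Matrix.mulVec, dotProduct]
  have h2 : (1 - defect A i) * hb = ∑ j, A i j * hb := by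
    rw [defect, ← Finset.sum_mul]; ring
  rw [h1, h2]
  exact Finset.sum_le_sum fun j _ => mul_le_mul_of_nonneg_left (hx j) (hA i j)

lemma mulVec_lower {M : ℕ} (A : Matrix (Fin M) (Fin M) ℝ) (hA : ∀ i j, 0 ≤ A i j)
    (x : Fin M → ℝ) (lb : ℝ) (hx : ∀ j, lb ≤ x j) (hlb : lb ≤ 0) (i : Fin M) :
    (1 - defect A i) * lb ≤ A.mulVec x i := by
  have h1 : A.mulVec x i = ∑ j, A i j * x j := by simp [Matrix.mulVec, dotProduct]
  have h2 : (1 - defect A i) * lb = ∑ j, A i j * lb := by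
    rw [defect, ← Finset.sum_mul]; ring
  rw [h1, h2]
  exact Finset.sum_le_sum fun j _ => mul_le_mul_of_nonneg_left (hx j) (hA i j)

lemma span_bound {M : ℕ} (hne : (Finset.univ : Finset (Fin M)).Nonempty)
    (A : Matrix (Fin M) (Fin M) ℝ) (x : Fin M → ℝ) (μ0 d R : ℝ)
    (hA : ∀ i j, 0 ≤ A i j)
    (hrs : ∀ i, ∑ j, A i j ≤ 1)
    (hd : ∀ i, defect A i ≤ d)
    (hμ : ∀ i k : Fin M, μ0 ≤ ∑ j, min (A i j) (A k j))
    (hμ0 : 0 ≤ μ0)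
    (hR : |Finset.univ.inf' hne x| ≤ R) :
    Finset.univ.sup' hne (A.mulVec x) - Finset.univ.inf' hne (A.mulVec x)
      ≤ (1 - μ0) * (Finset.univ.sup' hne x - Finset.univ.inf' hne x) + d * R := by
  obtain ⟨i, _, hi⟩ := Finset.exists_mem_eq_sup' hne (A.mulVec x)
  obtain ⟨i', _, hi'⟩ := Finset.exists_mem_eq_inf' hne (A.mulVec x)
  rw [hi, hi']
  exact pair_contraction A x _ _ μ0 d R hA hrs hd hμ hμ0
    (fun j => ⟨Finset.inf'_le _ (Finset.mem_univ j), Finset.le_sup' _ (Finset.mem_univ j)⟩)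
    hR i i'

lemma sum_chunks (a : ℕ → ℝ) (uu : ℕ → ℕ) (humono : ∀ τ, uu τ ≤ uu (τ + 1)) (N : ℕ) :
    ∑ s ∈ Finset.Ico (uu 0) (uu N), a s
      = ∑ τ ∈ Finset.range N, ∑ s ∈ Finset.Ico (uu τ) (uu (τ + 1)), a s := by
  induction N with
  | zero => simp
  | succ N ih =>
    rw [Finset.sum_range_succ, ← ih,
      Finset.sum_Ico_consecutive _ ((monotone_nat_of_le_succ humono) (Nat.zero_le N)) (humono N)]

namespace Ctx

variable {M : ℕ} (Γ : Ctx M)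

lemma e_eq (e : ℕ → Fin M → ℝ) (he : ∀ t, e (t + 1) = (Γ.P t).mulVec (e t))
    (u n : ℕ) : e (u + n) = (Γ.Φ u n).mulVec (e u) := by
  induction n with
  | zero => simp [Matrix.one_mulVec]
  | succ n ih =>
    rw [show u + (n + 1) = (u + n) + 1 from rfl, he, ih, Φ_succ, ← Matrix.mulVec_mulVec]

end Ctx
end Stmt5Aux
namespace Stmt5Aux
namespace Ctx

variable {M : ℕ} (Γ : Ctx M)

set_option maxHeartbeats 1000000 in
lemma main (ν κ : ℝ) (hν : 0 < ν) (hκpos : 0 < κ)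
    (hKν : Γ.K * ((M : ℝ) * ν) ≤ 1 / 2)
    (t0p : ℕ) (ht0p : t0p ≤ Γ.tg)
    (hp : ∀ v, t0p ≤ v → ∃ T : ℕ, 0 < T ∧ κ * ν ≤ ∑ s ∈ Finset.Icc v (v + T), Γ.a s
      ∧ ∑ s ∈ Finset.Icc v (v + T), Γ.a s ≤ ν)
    (hε : ∀ s, Γ.tg ≤ s → Γ.a s * (4 * Γ.B) ≤ κ * ν)
    (e : ℕ → Fin M → ℝ) (he : ∀ t, e (t + 1) = (Γ.P t).mulVec (e t)) :
    ∃ z : ℝ, ∀ i : Fin M, Tendsto (fun t => e t i) atTop (nhds z) := by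
  classical
  have hW : 0 < κ * ν := mul_pos hκpos hν
  set W := κ * ν with hWdef
  have hMpos : 0 < M := by have := Γ.hM; omega
  have hM2 : 2 ≤ M := Γ.hM
  have hMr : (0:ℝ) < M := by exact_mod_cast hMpos
  have hKpos : (0:ℝ) < Γ.K := by linarith [Γ.hK1]
  have hne : (Finset.univ : Finset (Fin M)).Nonempty := ⟨⟨0, hMpos⟩, Finset.mem_univ _⟩
  -- the step function from the persistence hypothesis
  choose T hT0 hTlow hThigh using hp
  set st : ℕ → ℕ := fun v => if h : t0p ≤ v then v + T v h + 1 else v + 1 with hstdef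
  have hstlt : ∀ v, v < st v := by
    intro v
    simp only [hstdef]
    split <;> omega
  have hstsum : ∀ v, Γ.tg ≤ v →
      W ≤ (∑ s ∈ Finset.Ico v (st v), Γ.a s) ∧ (∑ s ∈ Finset.Ico v (st v), Γ.a s) ≤ ν := by
    intro v hv
    have hv' : t0p ≤ v := le_trans ht0p hv
    have h1 : st v = v + T v hv' + 1 := by simp only [hstdef]; rw [dif_pos hv']
    have h2 : Finset.Ico v (v + T v hv' + 1) = Finset.Icc v (v + T v hv') :=
      Finset.Ico_add_one_right_eq_Icc _ _
    rw [h1, h2]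
    exact ⟨hTlow v hv', hThigh v hv'⟩
  -- window endpoints
  set ck : ℕ → ℕ := fun v => st^[M - 1] v with hckdef
  set ts : ℕ → ℕ := fun k => ck^[k] Γ.tg with htsdef
  have hiter_ge : ∀ (m v : ℕ), v ≤ st^[m] v := by
    intro m
    induction m with
    | zero => simp
    | succ m ih =>
      intro v
      rw [Function.iterate_succ_apply']
      exact le_trans (ih v) (hstlt _).le
  have hiter_tg : ∀ (m v : ℕ), Γ.tg ≤ v → Γ.tg ≤ st^[m] v :=
    fun m v hv => le_trans hv (hiter_ge m v)
  have hts0 : ts 0 = Γ.tg := rfl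
  have htssucc : ∀ k, ts (k + 1) = ck (ts k) := by
    intro k
    simp only [htsdef]
    rw [Function.iterate_succ_apply']
  have htstg : ∀ k, Γ.tg ≤ ts k := by
    intro k
    induction k with
    | zero => exact le_rfl
    | succ k ih =>
      rw [htssucc k]
      exact hiter_tg _ _ ih
  have htslt : ∀ k, ts k < ts (k + 1) := by
    intro k
    rw [htssucc k]
    have h1 : 1 ≤ M - 1 := by omega
    calc ts k < st (ts k) := hstlt _
      _ ≤ st^[M - 1] (ts k) := by
          obtain ⟨m, hm⟩ : ∃ m, M - 1 = m + 1 := ⟨M - 2, by omega⟩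
          rw [hm, Function.iterate_succ_apply]
          exact hiter_ge m _
  have htsk : ∀ k, Γ.tg + k ≤ ts k := by
    intro k
    induction k with
    | zero => simp [hts0]
    | succ k ih => have := htslt k; omega
  have htsmono : ∀ k k', k ≤ k' → ts k ≤ ts k' :=
    fun k k' h => (monotone_nat_of_le_succ (fun n => (htslt n).le)) h
  -- chunk decomposition of window k
  have hchunkm : ∀ k τ, st^[τ] (ts k) ≤ st^[τ + 1] (ts k) := by
    intro k τ
    rw [Function.iterate_succ_apply']
    exact (hstlt _).le
  have hchunke : ∀ k, st^[M - 1] (ts k) = ts (k + 1) := by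
    intro k
    rw [htssucc k]
  have hchunktg : ∀ k τ, Γ.tg ≤ st^[τ] (ts k) := fun k τ => hiter_tg τ _ (htstg k)
  have hbudget : ∀ k τ, τ < M - 1 →
      W ≤ ∑ s ∈ Finset.Ico (st^[τ] (ts k)) (st^[τ + 1] (ts k)), Γ.a s := by
    intro k τ _
    rw [Function.iterate_succ_apply']
    exact (hstsum _ (hchunktg k τ)).1
  have hwin_asum : ∀ k, (∑ s ∈ Finset.Ico (ts k) (ts (k + 1)), Γ.a s) ≤ (M : ℝ) * ν := by
    intro k
    have h1 : ∑ s ∈ Finset.Ico (ts k) (ts (k + 1)), Γ.a s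
        = ∑ τ ∈ Finset.range (M - 1), ∑ s ∈ Finset.Ico (st^[τ] (ts k)) (st^[τ + 1] (ts k)), Γ.a s := by
      have h2 := sum_chunks Γ.a (fun τ => st^[τ] (ts k)) (hchunkm k) (M - 1)
      simpa [hchunke k] using h2
    rw [h1]
    have h2 : ∀ τ ∈ Finset.range (M - 1),
        (∑ s ∈ Finset.Ico (st^[τ] (ts k)) (st^[τ + 1] (ts k)), Γ.a s) ≤ ν := by
      intro τ _
      rw [Function.iterate_succ_apply']
      exact (hstsum _ (hchunktg k τ)).2
    calc ∑ τ ∈ Finset.range (M - 1), ∑ s ∈ Finset.Ico (st^[τ] (ts k)) (st^[τ+1] (ts k)), Γ.a s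
        ≤ ∑ _τ ∈ Finset.range (M - 1), ν := Finset.sum_le_sum h2
      _ = (M - 1 : ℕ) * ν := by rw [Finset.sum_const, nsmul_eq_mul, Finset.card_range]
      _ ≤ (M : ℝ) * ν := by
          have h3 : ((M - 1 : ℕ) : ℝ) ≤ (M : ℝ) := by
            have : (M - 1 : ℕ) ≤ M := by omega
            exact_mod_cast this
          nlinarith
  have hKsum : ∀ k, Γ.K * (∑ s ∈ Finset.Ico (ts k) (ts (k + 1)), Γ.a s) ≤ 1 / 2 := by
    intro k
    have h1 := hwin_asum k
    have h2 : 0 ≤ ∑ s ∈ Finset.Ico (ts k) (ts (k + 1)), Γ.a s :=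
      Finset.sum_nonneg fun s _ => Γ.a_nonneg s
    nlinarith
  -- window products and positivity
  set η : ℝ := 1 / 2 * (min 1 (Γ.c ^ Γ.B * Γ.c3 * W / (2 * Γ.B * M))) ^ (M - 1) with hηdef
  have hg0pos : 0 < Γ.c ^ Γ.B * Γ.c3 * W / (2 * Γ.B * M) := by
    have h1 : (0:ℝ) < Γ.c ^ Γ.B := pow_pos Γ.hc0 _
    have hBr : (0:ℝ) < Γ.B := by exact_mod_cast Γ.hB
    exact div_pos (mul_pos (mul_pos h1 Γ.hc3) hW)
      (mul_pos (mul_pos two_pos hBr) hMr)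
  have hηpos : 0 < η := by
    rw [hηdef]
    have h1 : 0 < min 1 (Γ.c ^ Γ.B * Γ.c3 * W / (2 * Γ.B * M)) := lt_min one_pos hg0pos
    exact mul_pos one_half_pos (pow_pos h1 _)
  set Wm : ℕ → Matrix (Fin M) (Fin M) ℝ := fun k => Γ.Φ (ts k) (ts (k + 1) - ts k)
    with hWmdef
  have hWmpos : ∀ k i j, η ≤ Wm k i j := by
    intro k i j
    have h := Γ.window_pos (ts k) (htstg k) W hW hε (fun τ => st^[τ] (ts k)) rfl
      (fun τ => hchunkm k τ) (fun τ hτ => hbudget k τ hτ)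
      (by
        show Γ.K * ∑ s ∈ Finset.Ico (ts k) (st^[M - 1] (ts k)), Γ.a s ≤ 1 / 2
        rw [hchunke k]; exact hKsum k) i j
    show η ≤ Γ.Φ (ts k) (ts (k + 1) - ts k) i j
    rw [← hchunke k]
    exact h
  -- defect quantities
  set D : ℕ → ℝ := fun k => ∑ i, defect (Wm k) i with hDdef
  have hWmnn : ∀ k i j, 0 ≤ Wm k i j := fun k i j => le_trans hηpos.le (hWmpos k i j)
  have hWmrs : ∀ k i, ∑ j, Wm k i j ≤ 1 := fun k i => Γ.Φ_rowsum_le_one _ (htstg k) _ i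
  have hWmdefnn : ∀ k i, 0 ≤ defect (Wm k) i := fun k i => Γ.defect_Φ_nonneg _ (htstg k) _ i
  have hD0 : ∀ k, 0 ≤ D k := fun k => Finset.sum_nonneg fun i _ => hWmdefnn k i
  have hdefle : ∀ k i, defect (Wm k) i ≤ D k := fun k i =>
    Finset.single_le_sum (fun i _ => hWmdefnn k i) (Finset.mem_univ i)
  have hconstsum : ∀ x : ℝ, (∑ _j : Fin M, x) = (M : ℝ) * x := by
    intro x
    rw [Finset.sum_const, nsmul_eq_mul]
    simp
  have hMη1 : (M : ℝ) * η ≤ 1 := by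
    calc (M : ℝ) * η = ∑ _j : Fin M, η := (hconstsum η).symm
      _ ≤ ∑ j, Wm 0 ⟨0, hMpos⟩ j := Finset.sum_le_sum fun j _ => hWmpos 0 _ j
      _ ≤ 1 := hWmrs 0 _
  have hμb : ∀ k (i i' : Fin M), (M : ℝ) * η ≤ ∑ j, min (Wm k i j) (Wm k i' j) := by
    intro k i i'
    calc (M : ℝ) * η = ∑ _j : Fin M, η := (hconstsum η).symm
      _ ≤ ∑ j, min (Wm k i j) (Wm k i' j) :=
          Finset.sum_le_sum fun j _ => le_min (hWmpos k i j) (hWmpos k i' j)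
  -- extremal values of e
  set maxE : ℕ → ℝ := fun t => Finset.univ.sup' hne (e t) with hmaxEdef
  set minE : ℕ → ℝ := fun t => Finset.univ.inf' hne (e t) with hminEdef
  set hfn : ℕ → ℝ := fun t => max (maxE t) 0 with hhfdef
  set lfn : ℕ → ℝ := fun t => min (minE t) 0 with hlfdef
  set sr : ℕ → ℝ := fun t => maxE t - minE t with hsrdef
  have hminmax : ∀ t i, minE t ≤ e t i ∧ e t i ≤ maxE t := fun t i =>
    ⟨Finset.inf'_le _ (Finset.mem_univ i), Finset.le_sup' _ (Finset.mem_univ i)⟩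
  have hsr0 : ∀ t, 0 ≤ sr t := by
    intro t
    have h1 := hminmax t ⟨0, hMpos⟩
    simp only [hsrdef]
    linarith [h1.1, h1.2]
  have hhf0 : ∀ t, 0 ≤ hfn t := fun t => le_max_right _ _
  have hlf0 : ∀ t, lfn t ≤ 0 := fun t => min_le_right _ _
  have hehf : ∀ t i, e t i ≤ hfn t := fun t i => le_trans (hminmax t i).2 (le_max_left _ _)
  have helf : ∀ t i, lfn t ≤ e t i := fun t i => le_trans (min_le_left _ _) (hminmax t i).1
  -- window upper/lower bounds for e
  have hkey_up : ∀ u n, Γ.tg ≤ u → ∀ i,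
      e (u + n) i ≤ (1 - defect (Γ.Φ u n) i) * hfn u := by
    intro u n hu i
    rw [Γ.e_eq e he u n]
    exact mulVec_upper _ (Γ.Φ_nonneg u hu n) _ _ (fun j => hehf u j) (hhf0 u) i
  have hkey_lo : ∀ u n, Γ.tg ≤ u → ∀ i,
      (1 - defect (Γ.Φ u n) i) * lfn u ≤ e (u + n) i := by
    intro u n hu i
    rw [Γ.e_eq e he u n]
    exact mulVec_lower _ (Γ.Φ_nonneg u hu n) _ _ (fun j => helf u j) (hlf0 u) i
  -- monotonicity of hfn, lfn
  have hfmono : ∀ u n, Γ.tg ≤ u → hfn (u + n) ≤ hfn u := by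
    intro u n hu
    have h1 : ∀ i, e (u + n) i ≤ hfn u := by
      intro i
      have h2 := hkey_up u n hu i
      have hd1 : 0 ≤ defect (Γ.Φ u n) i := Γ.defect_Φ_nonneg u hu n i
      nlinarith [hhf0 u]
    simp only [hhfdef]
    exact max_le (Finset.sup'_le _ _ fun i _ => h1 i) (hhf0 u)
  have hlmono : ∀ u n, Γ.tg ≤ u → lfn u ≤ lfn (u + n) := by
    intro u n hu
    have h1 : ∀ i, lfn u ≤ e (u + n) i := by
      intro i
      have h2 := hkey_lo u n hu i
      have hd1 : 0 ≤ defect (Γ.Φ u n) i := Γ.defect_Φ_nonneg u hu n i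
      nlinarith [hlf0 u]
    simp only [hlfdef]
    exact le_min (Finset.le_inf' _ _ fun i _ => h1 i) (hlf0 u)
  have hfmono' : ∀ t t', Γ.tg ≤ t → t ≤ t' → hfn t' ≤ hfn t := by
    intro t t' h1 h2
    have h3 := hfmono t (t' - t) h1
    rwa [show t + (t' - t) = t' by omega] at h3
  have hlmono' : ∀ t t', Γ.tg ≤ t → t ≤ t' → lfn t ≤ lfn t' := by
    intro t t' h1 h2
    have h3 := hlmono t (t' - t) h1
    rwa [show t + (t' - t) = t' by omega] at h3
  set R : ℝ := max (hfn Γ.tg) (-lfn Γ.tg) with hRdef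
  have hR0 : 0 ≤ R := le_trans (hhf0 _) (le_max_left _ _)
  have heRbound : ∀ t, Γ.tg ≤ t → ∀ i, |e t i| ≤ R := by
    intro t ht i
    rw [abs_le]
    constructor
    · have h1 := helf t i
      have h2 := hlmono' Γ.tg t le_rfl ht
      have h3 : -lfn Γ.tg ≤ R := le_max_right _ _
      linarith
    · have h1 := hehf t i
      have h2 := hfmono' Γ.tg t le_rfl ht
      have h3 : hfn Γ.tg ≤ R := le_max_left _ _
      linarith
  have hminER : ∀ t, Γ.tg ≤ t → |minE t| ≤ R := by
    intro t ht
    obtain ⟨i0, _, hi0⟩ := Finset.exists_mem_eq_inf' hne (e t)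
    simp only [hminEdef]
    rw [hi0]
    exact heRbound t ht i0
  -- per-step span bound
  have hsrstep : ∀ t, Γ.tg ≤ t → sr (t + 1) ≤ sr t + Γ.mq t * R := by
    intro t ht
    have h1 := span_bound hne (Γ.P t) (e t) 0 (Γ.mq t) R (Γ.P_nonneg t ht)
      (Γ.P_rowsum_le_one t) (fun i => Γ.defect_P_le_mq t i)
      (fun i k => Finset.sum_nonneg fun j _ => le_min (Γ.P_nonneg t ht i j) (Γ.P_nonneg t ht k j))
      le_rfl (hminER t ht)
    rw [← he t] at h1
    simp only [hsrdef]
    simp only [hmaxEdef, hminEdef] at h1 ⊢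
    nlinarith
  -- window span contraction
  have hW1 : ∀ k, sr (ts (k + 1)) ≤ (1 - (M : ℝ) * η) * sr (ts k) + D k * R := by
    intro k
    have h1 := span_bound hne (Wm k) (e (ts k)) ((M : ℝ) * η) (D k) R (hWmnn k) (hWmrs k)
      (hdefle k) (hμb k) (mul_nonneg (Nat.cast_nonneg M) hηpos.le) (hminER _ (htstg k))
    have h2 : e (ts (k + 1)) = (Wm k).mulVec (e (ts k)) := by
      have h3 := Γ.e_eq e he (ts k) (ts (k + 1) - ts k)
      rwa [show ts k + (ts (k + 1) - ts k) = ts (k + 1) by have := htslt k; omega] at h3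
    rw [← h2] at h1
    simp only [hsrdef]
    simp only [hmaxEdef, hminEdef] at h1 ⊢
    linarith
  -- double-window defect lower bound
  have hdouble : ∀ k i, η * D k ≤ defect (Γ.Φ (ts k) (ts (k + 2) - ts k)) i := by
    intro k i
    have hn : ts k + (ts (k + 1) - ts k) = ts (k + 1) := by have := htslt k; omega
    have hnm : (ts (k + 1) - ts k) + (ts (k + 2) - ts (k + 1)) = ts (k + 2) - ts k := by
      have := htslt k; have h99 : ts (k + 1) < ts (k + 2) := htslt (k + 1); omega
    have hsplit : Γ.Φ (ts k) (ts (k + 2) - ts k) = Wm (k + 1) * Wm k := by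
      rw [← hnm, Γ.Φ_add]
      simp only [hWmdef]
      rw [hn]
    rw [hsplit, defect_mul]
    have h3 : ∀ m, η * defect (Wm k) m ≤ Wm (k + 1) i m * defect (Wm k) m := fun m =>
      mul_le_mul_of_nonneg_right (hWmpos (k + 1) i m) (hWmdefnn k m)
    have h5 : 0 ≤ defect (Wm (k + 1)) i := hWmdefnn (k + 1) i
    calc η * D k = ∑ m, η * defect (Wm k) m := by rw [hDdef]; rw [Finset.mul_sum]
      _ ≤ ∑ m, Wm (k + 1) i m * defect (Wm k) m := Finset.sum_le_sum fun m _ => h3 m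
      _ ≤ defect (Wm (k + 1)) i + ∑ m, Wm (k + 1) i m * defect (Wm k) m := by linarith
  have hdef_le_one : ∀ u n, Γ.tg ≤ u → ∀ i, defect (Γ.Φ u n) i ≤ 1 := by
    intro u n hu i
    have h1 := Γ.Φ_rowsum_nonneg u hu n i
    rw [defect]
    linarith
  have hW2 : ∀ k, hfn (ts (k + 2)) ≤ (1 - η * D k) * hfn (ts k) := by
    intro k
    have hun : ts k + (ts (k + 2) - ts k) = ts (k + 2) := by
      have := htslt k; have h99 : ts (k + 1) < ts (k + 2) := htslt (k + 1); omega
    have h1 : ∀ i, e (ts (k + 2)) i ≤ (1 - η * D k) * hfn (ts k) := by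
      intro i
      have h2 := hkey_up (ts k) (ts (k + 2) - ts k) (htstg k) i
      rw [hun] at h2
      have h3 := hdouble k i
      have h4 : (1 - defect (Γ.Φ (ts k) (ts (k + 2) - ts k)) i) * hfn (ts k)
          ≤ (1 - η * D k) * hfn (ts k) :=
        mul_le_mul_of_nonneg_right (by linarith) (hhf0 _)
      linarith
    have h5 : 0 ≤ (1 - η * D k) * hfn (ts k) := by
      apply mul_nonneg _ (hhf0 _)
      have h6 := hdouble k ⟨0, hMpos⟩
      have h7 := hdef_le_one (ts k) (ts (k + 2) - ts k) (htstg k) ⟨0, hMpos⟩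
      linarith
    simp only [hhfdef]
    exact max_le (Finset.sup'_le _ _ fun i _ => h1 i) h5
  have hW3 : ∀ k, (1 - η * D k) * lfn (ts k) ≤ lfn (ts (k + 2)) := by
    intro k
    have hun : ts k + (ts (k + 2) - ts k) = ts (k + 2) := by
      have := htslt k; have h99 : ts (k + 1) < ts (k + 2) := htslt (k + 1); omega
    have h1 : ∀ i, (1 - η * D k) * lfn (ts k) ≤ e (ts (k + 2)) i := by
      intro i
      have h2 := hkey_lo (ts k) (ts (k + 2) - ts k) (htstg k) i
      rw [hun] at h2
      have h3 := hdouble k i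
      have h4 : (1 - η * D k) * lfn (ts k)
          ≤ (1 - defect (Γ.Φ (ts k) (ts (k + 2) - ts k)) i) * lfn (ts k) := by
        apply mul_le_mul_of_nonpos_right (by linarith) (hlf0 _)
      linarith
    have h5 : (1 - η * D k) * lfn (ts k) ≤ 0 := by
      apply mul_nonpos_of_nonneg_of_nonpos _ (hlf0 _)
      have h6 := hdouble k ⟨0, hMpos⟩
      have h7 := hdef_le_one (ts k) (ts (k + 2) - ts k) (htstg k) ⟨0, hMpos⟩
      linarith
    simp only [hlfdef]
    exact le_min (Finset.le_inf' _ _ fun i _ => h1 i) h5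
  -- window leak sum bound
  have hF5 : ∀ k, (∑ s ∈ Finset.Ico (ts k) (ts (k + 1)), Γ.mq s) ≤ 2 * D k := by
    intro k
    have hun : ts k + (ts (k + 1) - ts k) = ts (k + 1) := by have := htslt k; omega
    have h1 := Γ.defect_Φ_ge (ts k) (htstg k) (ts (k + 1) - ts k)
    have hβ : 1 / 2 ≤ ∏ s ∈ Finset.Ico (ts k) (ts k + (ts (k + 1) - ts k)), (1 - Γ.a s * Γ.K) := by
      have h2 := Γ.prod_one_sub_ge (ts k) (ts k + (ts (k + 1) - ts k)) (htstg k) (by omega)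
      have h3 := hKsum k
      rw [hun] at h2 ⊢
      linarith
    have hβ1 : ∏ s ∈ Finset.Ico (ts k) (ts k + (ts (k + 1) - ts k)), (1 - Γ.a s * Γ.K) ≤ 1 := by
      apply Finset.prod_le_one
      · intro s hs
        have h4 := (Finset.mem_Ico.mp hs).1
        have h5 := Γ.hsmall s (le_trans (htstg k) h4)
        linarith
      · intro s hs
        linarith [Γ.aK_nonneg s]
    have hr : ∑ r ∈ Finset.range (ts (k + 1) - ts k), Γ.mq (ts k + r)
        = ∑ s ∈ Finset.Ico (ts k) (ts (k + 1)), Γ.mq s := by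
      rw [Finset.sum_Ico_eq_sum_range]
    have hDval : (∑ i, defect (Γ.Φ (ts k) (ts (k + 1) - ts k)) i) = D k := by
      simp only [hDdef, hWmdef]
    rw [hDval, hr] at h1
    have hmqnn : 0 ≤ ∑ s ∈ Finset.Ico (ts k) (ts (k + 1)), Γ.mq s :=
      Finset.sum_nonneg fun s _ => Γ.mq_nonneg s
    nlinarith
  -- between-window span control
  have hW4 : ∀ k t, ts k ≤ t → t ≤ ts (k + 1) → sr t ≤ sr (ts k) + R * (2 * D k) := by
    intro k t hkt htk1
    have h1 : sr t ≤ sr (ts k) + R * ∑ s ∈ Finset.Ico (ts k) t, Γ.mq s := by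
      induction t, hkt using Nat.le_induction with
      | base => simp
      | succ t ht ih =>
        have h2 : t ≤ ts (k + 1) := by omega
        have h3 := ih h2
        have h4 := hsrstep t (le_trans (htstg k) ht)
        rw [Finset.sum_Ico_succ_top ht]
        nlinarith [hR0, Γ.mq_nonneg t]
    have h2 : (∑ s ∈ Finset.Ico (ts k) t, Γ.mq s) ≤ ∑ s ∈ Finset.Ico (ts k) (ts (k + 1)), Γ.mq s :=
      Finset.sum_le_sum_of_subset_of_nonneg (Finset.Ico_subset_Ico le_rfl htk1)
        (fun s _ _ => Γ.mq_nonneg s)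
    have h3 := hF5 k
    nlinarith [hR0]
  -- limits of hfn and lfn
  have hfshift : Antitone fun n => hfn (Γ.tg + n) := by
    intro m n hmn
    exact hfmono' (Γ.tg + m) (Γ.tg + n) (by omega) (by omega)
  have hfbdd : BddBelow (Set.range fun n => hfn (Γ.tg + n)) := by
    refine ⟨0, ?_⟩
    rintro x ⟨n, rfl⟩
    exact hhf0 _
  set hstar : ℝ := ⨅ n, hfn (Γ.tg + n) with hhstardef
  have hftend : Tendsto (fun n => hfn (Γ.tg + n)) atTop (nhds hstar) :=
    tendsto_atTop_ciInf hfshift hfbdd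
  have hstar0 : 0 ≤ hstar := le_ciInf fun n => hhf0 _
  have hstarle : ∀ t, Γ.tg ≤ t → hstar ≤ hfn t := by
    intro t ht
    have h1 : hfn t = hfn (Γ.tg + (t - Γ.tg)) := by rw [show Γ.tg + (t - Γ.tg) = t by omega]
    rw [h1]
    exact ciInf_le hfbdd _
  have hftendsto : Tendsto hfn atTop (nhds hstar) := by
    have h1 : Tendsto (fun n => hfn (n + Γ.tg)) atTop (nhds hstar) := by
      have h2 : (fun n => hfn (n + Γ.tg)) = fun n => hfn (Γ.tg + n) :=
        funext fun n => by rw [Nat.add_comm]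
      rw [h2]; exact hftend
    exact (tendsto_add_atTop_iff_nat Γ.tg).mp h1
  have hlshift : Monotone fun n => lfn (Γ.tg + n) := by
    intro m n hmn
    exact hlmono' (Γ.tg + m) (Γ.tg + n) (by omega) (by omega)
  have hlbdd : BddAbove (Set.range fun n => lfn (Γ.tg + n)) := by
    refine ⟨0, ?_⟩
    rintro x ⟨n, rfl⟩
    exact hlf0 _
  set lstar : ℝ := ⨆ n, lfn (Γ.tg + n) with hlstardef
  have hltend : Tendsto (fun n => lfn (Γ.tg + n)) atTop (nhds lstar) :=
    tendsto_atTop_ciSup hlshift hlbdd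
  have hlstar0 : lstar ≤ 0 := ciSup_le fun n => hlf0 _
  have hlstarle : ∀ t, Γ.tg ≤ t → lfn t ≤ lstar := by
    intro t ht
    have h1 : lfn t = lfn (Γ.tg + (t - Γ.tg)) := by rw [show Γ.tg + (t - Γ.tg) = t by omega]
    rw [h1]
    exact le_ciSup hlbdd _
  have hltendsto : Tendsto lfn atTop (nhds lstar) := by
    have h1 : Tendsto (fun n => lfn (n + Γ.tg)) atTop (nhds lstar) := by
      have h2 : (fun n => lfn (n + Γ.tg)) = fun n => lfn (Γ.tg + n) :=
        funext fun n => by rw [Nat.add_comm]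
      rw [h2]; exact hltend
    exact (tendsto_add_atTop_iff_nat Γ.tg).mp h1
  -- if the limits are nondegenerate, the defects are summable
  have hsummable_of_pos : 0 < hstar → Summable D := by
    intro hpos
    apply summable_of_sum_range_le (c := (hfn (ts 0) + hfn (ts 1)) / (η * hstar)) hD0
    intro n
    have h1 : ∀ k, η * hstar * D k ≤ hfn (ts k) - hfn (ts (k + 2)) := by
      intro k
      have h2 := hW2 k
      have h3 := hstarle (ts k) (htstg k)
      have h4 := hD0 k
      have h9 : 0 ≤ (η * D k) * (hfn (ts k) - hstar) :=
        mul_nonneg (mul_nonneg hηpos.le h4) (by linarith)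
      nlinarith [h9]
    have h5 : ∑ k ∈ Finset.range n, η * hstar * D k
        ≤ ∑ k ∈ Finset.range n, (hfn (ts k) - hfn (ts (k + 2))) :=
      Finset.sum_le_sum fun k _ => h1 k
    rw [telescope2 (fun k => hfn (ts k)) n] at h5
    have h6 : ∑ k ∈ Finset.range n, η * hstar * D k
        = η * hstar * ∑ k ∈ Finset.range n, D k := by rw [Finset.mul_sum]
    rw [h6] at h5
    rw [le_div_iff₀ (mul_pos hηpos hpos)]
    have h7 := hhf0 (ts n)
    have h8 := hhf0 (ts (n + 1))
    nlinarith
  have hsummable_of_neg : lstar < 0 → Summable D := by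
    intro hneg
    apply summable_of_sum_range_le (c := (-lfn (ts 0) + -lfn (ts 1)) / (η * -lstar)) hD0
    intro n
    have h1 : ∀ k, η * -lstar * D k ≤ -lfn (ts k) - -lfn (ts (k + 2)) := by
      intro k
      have h2 := hW3 k
      have h3 := hlstarle (ts k) (htstg k)
      have h4 := hD0 k
      have h9 : 0 ≤ (η * D k) * (lstar - lfn (ts k)) :=
        mul_nonneg (mul_nonneg hηpos.le h4) (by linarith)
      nlinarith [h9]
    have h5 : ∑ k ∈ Finset.range n, η * -lstar * D k
        ≤ ∑ k ∈ Finset.range n, (-lfn (ts k) - -lfn (ts (k + 2))) :=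
      Finset.sum_le_sum fun k _ => h1 k
    rw [telescope2 (fun k => -lfn (ts k)) n] at h5
    have h6 : ∑ k ∈ Finset.range n, η * -lstar * D k
        = η * -lstar * ∑ k ∈ Finset.range n, D k := by rw [Finset.mul_sum]
    rw [h6] at h5
    rw [le_div_iff₀ (mul_pos hηpos (by linarith))]
    have h7 := hlf0 (ts n)
    have h8 := hlf0 (ts (n + 1))
    nlinarith
  by_cases hsum : Summable D
  case neg =>
    have hstar_eq : hstar = 0 := by
      rcases lt_or_eq_of_le hstar0 with h | h
      · exact absurd (hsummable_of_pos h) hsum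
      · exact h.symm
    have lstar_eq : lstar = 0 := by
      rcases lt_or_eq_of_le hlstar0 with h | h
      · exact absurd (hsummable_of_neg h) hsum
      · exact h
    refine ⟨0, fun i => ?_⟩
    rw [hstar_eq] at hftendsto
    rw [lstar_eq] at hltendsto
    exact tendsto_of_tendsto_of_tendsto_of_le_of_le hltendsto hftendsto
      (fun t => helf t i) (fun t => hehf t i)
  case pos =>
    -- span tends to zero
    have hxrec : ∀ k, sr (ts (k + 1)) ≤ (1 - (M : ℝ) * η) * sr (ts k) + R * D k := by
      intro k
      have h1 := hW1 k
      nlinarith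
    have hMηpos : 0 < (M : ℝ) * η := mul_pos hMr hηpos
    have hxtend : Tendsto (fun k => sr (ts k)) atTop (nhds 0) :=
      seq_contract (by linarith) (by linarith) (fun k => hsr0 _) hxrec
        (fun k => mul_nonneg hR0 (hD0 k)) (hsum.mul_left R)
    have hDtend : Tendsto D atTop (nhds 0) := hsum.tendsto_atTop_zero
    set kix : ℕ → ℕ := fun t => Nat.findGreatest (fun k => ts k ≤ t) t with hkixdef
    have hkix1 : ∀ t, Γ.tg ≤ t → ts (kix t) ≤ t := by
      intro t ht
      exact Nat.findGreatest_spec (P := fun k => ts k ≤ t) (Nat.zero_le t) (show ts 0 ≤ t by rw [hts0]; exact ht)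
    have hkix2 : ∀ t, t < ts (kix t + 1) := by
      intro t
      by_cases h : kix t + 1 ≤ t
      · by_contra hcon
        push_neg at hcon
        exact Nat.findGreatest_is_greatest (Nat.lt_succ_self (kix t)) h hcon
      · push_neg at h
        have h2 := htsk (kix t + 1)
        omega
    have hkix3 : ∀ k0 t, ts k0 ≤ t → k0 ≤ kix t := by
      intro k0 t h
      exact Nat.le_findGreatest (by have := htsk k0; omega) h
    have hsrtend : Tendsto sr atTop (nhds 0) := by
      rw [Metric.tendsto_atTop]
      intro δ hδ
      have h1 : Tendsto (fun k => sr (ts k) + R * (2 * D k)) atTop (nhds 0) := by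
        have h2 : Tendsto (fun k => R * (2 * D k)) atTop (nhds (R * (2 * 0))) :=
          (hDtend.const_mul 2).const_mul R
        have h3 := hxtend.add h2
        simpa using h3
      obtain ⟨k0, hk0⟩ := (Metric.tendsto_atTop.mp h1) δ hδ
      refine ⟨ts k0, fun t ht => ?_⟩
      have htg' : Γ.tg ≤ t := le_trans (htstg k0) ht
      have hk1 := hkix1 t htg'
      have hk2 := (hkix2 t).le
      have hk3 := hkix3 k0 t ht
      have h2 := hW4 (kix t) t hk1 hk2
      have h3 := hk0 (kix t) hk3
      rw [Real.dist_eq, sub_zero] at h3 ⊢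
      rw [abs_of_nonneg (hsr0 t)]
      have h4 : (0:ℝ) ≤ sr (ts (kix t)) + R * (2 * D (kix t)) :=
        add_nonneg (hsr0 _) (mul_nonneg hR0 (mul_nonneg two_pos.le (hD0 _)))
      rw [abs_of_nonneg h4] at h3
      linarith
    rcases lt_or_eq_of_le hstar0 with hpos | heq0
    · -- common limit is hstar > 0
      refine ⟨hstar, fun i => ?_⟩
      have hlowtend : Tendsto (fun t => hfn t - sr t) atTop (nhds hstar) := by
        have h1 := hftendsto.sub hsrtend
        simpa using h1
      apply tendsto_of_tendsto_of_tendsto_of_le_of_le' hlowtend hftendsto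
      · filter_upwards [Filter.eventually_ge_atTop Γ.tg] with t ht
        have h1 : hstar ≤ hfn t := hstarle t ht
        have h2 : maxE t = hfn t := by
          simp only [hhfdef]
          rcases le_or_gt 0 (maxE t) with h3 | h3
          · rw [max_eq_left h3]
          · exfalso
            have h4 : hfn t = 0 := by simp only [hhfdef]; rw [max_eq_right h3.le]
            rw [h4] at h1
            linarith
        have h5 := (hminmax t i).1
        simp only [hsrdef]
        simp only [hsrdef] at *
        rw [← h2]
        linarith
      · filter_upwards with t
        exact hehf t i
    · rcases lt_or_eq_of_le hlstar0 with hneg | heql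
      · -- common limit is lstar < 0
        refine ⟨lstar, fun i => ?_⟩
        have huptend : Tendsto (fun t => lfn t + sr t) atTop (nhds lstar) := by
          have h1 := hltendsto.add hsrtend
          simpa using h1
        apply tendsto_of_tendsto_of_tendsto_of_le_of_le' hltendsto huptend
        · filter_upwards with t
          exact helf t i
        · filter_upwards [Filter.eventually_ge_atTop Γ.tg] with t ht
          have h1 : lfn t ≤ lstar := hlstarle t ht
          have h2 : minE t = lfn t := by
            simp only [hlfdef]
            rcases le_or_gt (minE t) 0 with h3 | h3
            · rw [min_eq_left h3]
            · exfalso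
              have h4 : lfn t = 0 := by simp only [hlfdef]; rw [min_eq_right h3.le]
              rw [h4] at h1
              linarith
          have h5 := (hminmax t i).2
          simp only [hsrdef]
          rw [← h2]
          linarith
      · -- both limits are zero
        refine ⟨0, fun i => ?_⟩
        rw [← heq0] at hftendsto
        rw [heql] at hltendsto
        exact tendsto_of_tendsto_of_tendsto_of_le_of_le hltendsto hftendsto
          (fun t => helf t i) (fun t => hehf t i)


end Ctx
end Stmt5Aux

open Stmt5Aux in
/-- Step 1 (the Claim) of the proof of Theorem 1: under joint connectivity with
uniform weight and the stepsize persistence conditions, all components of the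
mean error dynamics converge to a common finite limit. -/
theorem stmt_5 (M : ℕ) (hM : 2 ≤ M)
    (L : ℕ → Matrix (Fin M) (Fin M) ℝ)
    (hrow : ∀ t i, ∑ j, L t i j = 0)
    (hoff : ∀ t : ℕ, ∀ i j : Fin M, j ≠ i → L t i j ≤ 0)
    (χ : ℕ → Fin M → ℕ) (hχ : ∀ t i, χ t i = 0 ∨ χ t i = 1)
    (a : ℕ → ℝ) (ha : ∀ t, 0 < a t)
    -- (H1) uniform boundedness of the entries of L̄(t)
    (hbound : ∃ C : ℝ, ∀ t : ℕ, ∀ i j : Fin M, |L t i j| ≤ C)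
    -- (H2) joint strong connectivity with uniform weight c₃ on windows of length B
    (hconn : ∃ B : ℕ, 0 < B ∧ ∃ c3 : ℝ, 0 < c3 ∧
      ∀ k : ℕ, ∀ i j : Fin M, i ≠ j →
        Relation.TransGen (fun p q : Fin M => p ≠ q ∧
          ∃ s, k * B ≤ s ∧ s < (k + 1) * B ∧ L s q p ≤ -c3) i j)
    -- (H3) ratio condition on the stepsize, and decay to zero
    (hratio : ∃ c : ℝ, 0 < c ∧ c < 1 ∧ ∃ t0 : ℕ, ∀ t, t0 ≤ t →
      c ≤ a (t + 1) / a t ∧ a (t + 1) / a t ≤ 1)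
    (hdecay : Tendsto a atTop (nhds 0))
    -- (H4) windowed-sum persistence condition
    (hpersist : ∀ ν : ℝ, 0 < ν → ∃ κ : ℝ, 0 < κ ∧ ∃ t0 : ℕ, ∀ t, t0 ≤ t →
      ∃ T : ℕ, 0 < T ∧ κ * ν ≤ ∑ s ∈ Finset.Icc t (t + T), a s ∧
        ∑ s ∈ Finset.Icc t (t + T), a s ≤ ν)
    (e : ℕ → Fin M → ℝ)
    (he : ∀ t, e (t + 1) =
      ((1 : Matrix (Fin M) (Fin M) ℝ) -
        a t • (Matrix.diagonal (fun i => (χ t i : ℝ)) + L t)).mulVec (e t)) :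
    ∃ z : ℝ, ∀ i : Fin M, Tendsto (fun t => e t i) atTop (nhds z) := by
  classical
  obtain ⟨C, hC⟩ := hbound
  obtain ⟨B, hB, c3, hc3, hconn⟩ := hconn
  obtain ⟨c, hc0, hc1, t0r, hrat⟩ := hratio
  set C0 : ℝ := max C 0 with hC0def
  have hC0nn : 0 ≤ C0 := le_max_right _ _
  have hC0 : ∀ t i j, |L t i j| ≤ C0 := fun t i j => le_trans (hC t i j) (le_max_left _ _)
  set K : ℝ := M * C0 + 1 with hKdef
  have hMr : (0:ℝ) < M := by
    have : 0 < M := by omega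
    exact_mod_cast this
  have hK1 : 1 ≤ K := by
    have : (0:ℝ) ≤ (M:ℝ) * C0 := mul_nonneg hMr.le hC0nn
    rw [hKdef]; linarith
  have hKpos : 0 < K := by linarith
  have hLK : ∀ t i, (χ t i : ℝ) + L t i i ≤ K := by
    intro t i
    have hχ1 : (χ t i : ℝ) ≤ 1 := by
      rcases hχ t i with h | h <;> rw [h] <;> norm_num
    have hLii : L t i i ≤ (M:ℝ) * C0 := by
      have h1 := hrow t i
      rw [← Finset.add_sum_erase _ _ (Finset.mem_univ i)] at h1
      have h2 : -∑ j ∈ Finset.univ.erase i, L t i j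
          = ∑ j ∈ Finset.univ.erase i, -L t i j := by
        rw [Finset.sum_neg_distrib]
      have h3 : ∑ j ∈ Finset.univ.erase i, -L t i j
          ≤ ∑ _j ∈ Finset.univ.erase i, C0 := by
        apply Finset.sum_le_sum
        intro j hj
        have := hC0 t i j
        rw [abs_le] at this
        linarith [this.1]
      rw [Finset.sum_const, nsmul_eq_mul] at h3
      have h4 : ((Finset.univ.erase i).card : ℝ) ≤ (M : ℝ) := by
        have h5 : (Finset.univ.erase i).card ≤ M := by
          have := Finset.card_erase_of_mem (Finset.mem_univ i)
          simp only [Finset.card_univ, Fintype.card_fin] at this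
          omega
        exact_mod_cast h5
      have h6 : ((Finset.univ.erase i).card : ℝ) * C0 ≤ (M:ℝ) * C0 :=
        mul_le_mul_of_nonneg_right h4 hC0nn
      linarith
    rw [hKdef]
    linarith
  -- stepsize constants
  set ν : ℝ := 1 / (2 * K * M) with hνdef
  have h2KM : (0:ℝ) < 2 * K * M := mul_pos (mul_pos two_pos hKpos) hMr
  have hν : 0 < ν := by rw [hνdef]; exact one_div_pos.mpr h2KM
  have hKν : K * ((M : ℝ) * ν) ≤ 1 / 2 := by
    have hKne : K ≠ 0 := ne_of_gt hKpos
    have hMne : (M:ℝ) ≠ 0 := ne_of_gt hMr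
    have heq : K * ((M:ℝ) * (1 / (2 * K * M))) = 1 / 2 := by
      field_simp
    rw [hνdef, heq]
  obtain ⟨κ, hκpos, t0p, hp⟩ := hpersist ν hν
  set W : ℝ := κ * ν with hWdef
  have hW : 0 < W := mul_pos hκpos hν
  -- smallness threshold from decay
  have hBr : (0:ℝ) < B := by exact_mod_cast hB
  have h4B : (0:ℝ) < 4 * B := mul_pos (by norm_num) hBr
  set δ : ℝ := min (W / (4 * B)) (1 / (2 * K)) with hδdef
  have hδpos : 0 < δ := lt_min (div_pos hW h4B)
    (one_div_pos.mpr (mul_pos two_pos hKpos))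
  obtain ⟨t1, ht1⟩ := (Metric.tendsto_atTop.mp hdecay) δ hδpos
  have ht1' : ∀ s, t1 ≤ s → a s ≤ δ := by
    intro s hs
    have := ht1 s hs
    rw [Real.dist_eq, sub_zero, abs_of_pos (ha s)] at this
    linarith
  set tg : ℕ := max (max t0r t0p) t1 with htgdef
  have hsmall : ∀ s, tg ≤ s → a s * K ≤ 1 / 2 := by
    intro s hs
    have h1 : a s ≤ 1 / (2 * K) := le_trans (ht1' s (by omega)) (min_le_right _ _)
    calc a s * K ≤ (1 / (2 * K)) * K := mul_le_mul_of_nonneg_right h1 hKpos.le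
      _ = 1 / 2 := by
          field_simp
  have hε : ∀ s, tg ≤ s → a s * (4 * (B:ℝ)) ≤ κ * ν := by
    intro s hs
    have h1 : a s ≤ W / (4 * B) := le_trans (ht1' s (by omega)) (min_le_left _ _)
    have h2 : a s * (4 * (B:ℝ)) ≤ (W / (4 * B)) * (4 * B) :=
      mul_le_mul_of_nonneg_right h1 h4B.le
    rw [div_mul_cancel₀ W (ne_of_gt h4B)] at h2
    exact h2
  have hanti : ∀ s, tg ≤ s → a (s + 1) ≤ a s := by
    intro s hs
    have h1 := (hrat s (by omega)).2
    rw [div_le_one (ha s)] at h1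
    exact h1
  have hlow : ∀ s, tg ≤ s → c * a s ≤ a (s + 1) := by
    intro s hs
    have h1 := (hrat s (by omega)).1
    rw [le_div_iff₀ (ha s)] at h1
    linarith
  set Γ : Stmt5Aux.Ctx M :=
    { L := L, χ := χ, a := a, K := K, c3 := c3, c := c, B := B, tg := tg,
      hrow := hrow, hoff := hoff, hM := hM, hχ := hχ, ha := ha,
      hLK := hLK, hK1 := hK1, hsmall := hsmall, hanti := hanti,
      hc0 := hc0, hc1 := hc1.le, hlow := hlow, hB := hB, hc3 := hc3,
      hconn := hconn } with hΓdef
  have ht0p : t0p ≤ tg := by omega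
  exact Γ.main ν κ hν hκpos hKν t0p ht0p hp hε e he
end

section
/- Let M ≥ 2 and let B be an irreducible M×M matrix with nonnegative real entries. Let S be a nonempty proper subset of {1,…,M} with complement S^c. For i ∈ S and j ∈ S^c set r_{ij}^+ = r_i(B_S) + r_j(B_{S^c}), r_{ij}^- = r_i(B_S) − r_j(B_{S^c}), and r_{ij} = r_i(B_{S,S^c})·r_j(B_{S^c,S}), and define ι(B) = (1/2)·max_{i∈S, j∈S^c} ( r_{ij}^+ + sqrt( (r_{ij}^-)² + 4 r_{ij} ) ). Then ρ(B) ≤ ι(B) ≤ r_max(B), where ρ(B) is the spectral radius of B (the maximum modulus of a complex eigenvalue) and r_max(B) is the maximum row sum of B. -/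
open Finset Matrix

lemma auxTwo (a b c d m : ℝ) (hc : 0 ≤ c) (hd : 0 ≤ d)
    (h1 : a + c ≤ m) (h2 : b + d ≤ m) :
    (a + b) + Real.sqrt ((a - b) ^ 2 + 4 * (c * d)) ≤ 2 * m := by
  have hcd : c * d ≤ (m - a) * (m - b) :=
    mul_le_mul (by linarith) (by linarith) hd (by linarith)
  have hs : Real.sqrt ((a - b) ^ 2 + 4 * (c * d)) ≤ 2 * m - a - b := by
    have h : (a - b) ^ 2 + 4 * (c * d) ≤ (2 * m - a - b) ^ 2 := by nlinarith
    calc Real.sqrt ((a - b) ^ 2 + 4 * (c * d)) ≤ Real.sqrt ((2 * m - a - b) ^ 2) :=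
          Real.sqrt_le_sqrt h
      _ = |2 * m - a - b| := Real.sqrt_sq_eq_abs _
      _ = 2 * m - a - b := abs_of_nonneg (by nlinarith)
  linarith

lemma auxOne (a b c d yi yj ν : ℝ) (hc : 0 ≤ c) (hd : 0 ≤ d)
    (hyi : 0 ≤ yi) (hyj : 0 ≤ yj) (hpos : 0 < yi + yj)
    (h1 : ν * yi ≤ a * yi + c * yj) (h2 : ν * yj ≤ d * yi + b * yj) :
    2 * ν ≤ (a + b) + Real.sqrt ((a - b) ^ 2 + 4 * (c * d)) := by
  set s := Real.sqrt ((a - b) ^ 2 + 4 * (c * d)) with hs_def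
  have hs0 : |a - b| ≤ s := by
    rw [hs_def, ← Real.sqrt_sq_eq_abs]
    exact Real.sqrt_le_sqrt (by nlinarith [mul_nonneg hc hd])
  obtain ⟨hab1, hab2⟩ := abs_le.mp hs0
  by_cases hνa : ν ≤ a
  · linarith
  by_cases hνb : ν ≤ b
  · linarith
  push_neg at hνa hνb
  rcases eq_or_lt_of_le hyj with hj0 | hjpos
  · have hyi' : 0 < yi := by linarith
    have : ν ≤ a := by nlinarith
    linarith
  rcases eq_or_lt_of_le hyi with hi0 | hipos
  · have : ν ≤ b := by nlinarith
    linarith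
  have h3 : (ν - a) * yi ≤ c * yj := by linarith
  have h4 : (ν - b) * yj ≤ d * yi := by linarith
  have key : (ν - a) * (ν - b) ≤ c * d := by
    have hm := mul_le_mul h3 h4 (mul_nonneg (by linarith) hyj) (mul_nonneg hc hyj)
    have h6 : (ν - a) * (ν - b) * (yi * yj) ≤ c * d * (yi * yj) := by nlinarith
    have hij : (0:ℝ) < yi * yj := by positivity
    exact le_of_mul_le_mul_right h6 hij
  have hpos2 : 0 ≤ 2 * ν - a - b := by linarith
  have h5 : 2 * ν - a - b ≤ s := by
    calc 2 * ν - a - b = Real.sqrt ((2 * ν - a - b) ^ 2) := (Real.sqrt_sq hpos2).symm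
      _ ≤ s := Real.sqrt_le_sqrt (by nlinarith)
  linarith

/-- Proposition 3: for an irreducible nonnegative matrix `B` and a nonempty
proper subset `S`, every complex eigenvalue of `B` has modulus at most
`ι(B) = (1/2) max_{i∈S, j∈Sᶜ} (r_{ij}⁺ + √((r_{ij}⁻)² + 4 r_{ij}))`, and
`ι(B)` is at most the maximum row sum of `B`. -/
theorem stmt_7 (M : ℕ) (hM : 2 ≤ M)
    (B : Matrix (Fin M) (Fin M) ℝ) (hB : ∀ i j, 0 ≤ B i j)
    (hirr : ∀ S : Finset (Fin M), S.Nonempty → S ≠ Finset.univ →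
      ∃ i ∈ S, ∃ j ∉ S, B i j ≠ 0)
    (S : Finset (Fin M)) (hS : S.Nonempty) (hSne : S ≠ Finset.univ) :
    (∀ μ : ℂ, μ ∈ spectrum ℂ (B.map Complex.ofReal) →
      ‖μ‖ ≤ (1 / 2) * S.sup' hS (fun i =>
        (Sᶜ).sup' (Finset.nonempty_iff_ne_empty.mpr fun h => hSne ((Finset.compl_eq_empty_iff S).mp h)) (fun j =>
          ((∑ p ∈ S, B i p) + ∑ q ∈ Sᶜ, B j q) +
            Real.sqrt (((∑ p ∈ S, B i p) - ∑ q ∈ Sᶜ, B j q) ^ 2 +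
              4 * ((∑ p ∈ Sᶜ, B i p) * (∑ q ∈ S, B j q)))))) ∧
    (1 / 2) * S.sup' hS (fun i =>
        (Sᶜ).sup' (Finset.nonempty_iff_ne_empty.mpr fun h => hSne ((Finset.compl_eq_empty_iff S).mp h)) (fun j =>
          ((∑ p ∈ S, B i p) + ∑ q ∈ Sᶜ, B j q) +
            Real.sqrt (((∑ p ∈ S, B i p) - ∑ q ∈ Sᶜ, B j q) ^ 2 +
              4 * ((∑ p ∈ Sᶜ, B i p) * (∑ q ∈ S, B j q))))) ≤
      Finset.univ.sup' (Finset.univ_nonempty_iff.mpr ⟨⟨0, by omega⟩⟩)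
        (fun i => ∑ j, B i j) := by
  have hScne : (Sᶜ : Finset (Fin M)).Nonempty :=
    Finset.nonempty_iff_ne_empty.mpr fun h => hSne ((Finset.compl_eq_empty_iff S).mp h)
  set f : Fin M → Fin M → ℝ := fun i j =>
      ((∑ p ∈ S, B i p) + ∑ q ∈ Sᶜ, B j q) +
        Real.sqrt (((∑ p ∈ S, B i p) - ∑ q ∈ Sᶜ, B j q) ^ 2 +
          4 * ((∑ p ∈ Sᶜ, B i p) * (∑ q ∈ S, B j q))) with hf
  constructor
  · intro μ hμ
    -- extract an eigenvector
    have hnu : ¬ IsUnit ((algebraMap ℂ (Matrix (Fin M) (Fin M) ℂ)) μ - B.map Complex.ofReal) :=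
      spectrum.mem_iff.mp hμ
    have hdet : ((algebraMap ℂ (Matrix (Fin M) (Fin M) ℂ)) μ - B.map Complex.ofReal).det = 0 := by
      by_contra h
      exact hnu ((Matrix.isUnit_iff_isUnit_det _).mpr (isUnit_iff_ne_zero.mpr h))
    obtain ⟨v, hv0, hv⟩ := (Matrix.exists_mulVec_eq_zero_iff).mpr hdet
    have heig : (B.map Complex.ofReal).mulVec v = μ • v := by
      have h1 : ((algebraMap ℂ (Matrix (Fin M) (Fin M) ℂ)) μ - B.map Complex.ofReal).mulVec v
          = μ • v - (B.map Complex.ofReal).mulVec v := by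
        rw [Matrix.sub_mulVec, Algebra.algebraMap_eq_smul_one, Matrix.smul_mulVec,
          Matrix.one_mulVec]
      rw [h1] at hv
      linear_combination (norm := module) -hv
    set y : Fin M → ℝ := fun i => ‖v i‖ with hy
    have hy0 : ∀ i, 0 ≤ y i := fun i => norm_nonneg _
    have hrow : ∀ i, ‖μ‖ * y i ≤ ∑ p, B i p * y p := by
      intro i
      have h := congrFun heig i
      have h2 : (∑ p, (B i p : ℂ) * v p) = μ * v i := by
        simpa [Matrix.mulVec, dotProduct, Matrix.map_apply] using h
      calc ‖μ‖ * y i = ‖μ * v i‖ := (norm_mul _ _).symm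
        _ = ‖∑ p, (B i p : ℂ) * v p‖ := by rw [h2]
        _ ≤ ∑ p, ‖(B i p : ℂ) * v p‖ := norm_sum_le _ _
        _ = ∑ p, B i p * y p := by
            refine Finset.sum_congr rfl fun p _ => ?_
            rw [norm_mul, Complex.norm_real, Real.norm_eq_abs, abs_of_nonneg (hB i p)]
    obtain ⟨i0, hi0S, hi0max⟩ := S.exists_max_image y hS
    obtain ⟨j0, hj0S, hj0max⟩ := (Sᶜ).exists_max_image y hScne
    have hsplit : ∀ i, (∑ p, B i p * y p)
        = (∑ p ∈ S, B i p * y p) + ∑ p ∈ Sᶜ, B i p * y p := by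
      intro i
      rw [← Finset.sum_add_sum_compl S]
    have h1 : ‖μ‖ * y i0 ≤ (∑ p ∈ S, B i0 p) * y i0 + (∑ p ∈ Sᶜ, B i0 p) * y j0 := by
      refine (hrow i0).trans ?_
      rw [hsplit, Finset.sum_mul, Finset.sum_mul]
      refine add_le_add (Finset.sum_le_sum fun p hp => ?_) (Finset.sum_le_sum fun p hp => ?_)
      · exact mul_le_mul_of_nonneg_left (hi0max p hp) (hB _ _)
      · exact mul_le_mul_of_nonneg_left (hj0max p hp) (hB _ _)
    have h2 : ‖μ‖ * y j0 ≤ (∑ q ∈ S, B j0 q) * y i0 + (∑ q ∈ Sᶜ, B j0 q) * y j0 := by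
      refine (hrow j0).trans ?_
      rw [hsplit, Finset.sum_mul, Finset.sum_mul]
      refine add_le_add (Finset.sum_le_sum fun p hp => ?_) (Finset.sum_le_sum fun p hp => ?_)
      · exact mul_le_mul_of_nonneg_left (hi0max p hp) (hB _ _)
      · exact mul_le_mul_of_nonneg_left (hj0max p hp) (hB _ _)
    have hpos : 0 < y i0 + y j0 := by
      obtain ⟨k, hk⟩ := Function.ne_iff.mp hv0
      have hyk : 0 < y k := norm_pos_iff.mpr hk
      by_cases hkS : k ∈ S
      · have := hi0max k hkS; linarith [hy0 j0]
      · have := hj0max k (Finset.mem_compl.mpr hkS); linarith [hy0 i0]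
    have key : 2 * ‖μ‖ ≤ f i0 j0 := by
      have := auxOne (∑ p ∈ S, B i0 p) (∑ q ∈ Sᶜ, B j0 q) (∑ p ∈ Sᶜ, B i0 p)
        (∑ q ∈ S, B j0 q) (y i0) (y j0) (‖μ‖)
        (Finset.sum_nonneg fun p _ => hB _ _) (Finset.sum_nonneg fun q _ => hB _ _)
        (hy0 i0) (hy0 j0) hpos h1 (by linarith [h2])
      simpa [hf] using this
    have hle : f i0 j0 ≤ S.sup' hS (fun i => (Sᶜ).sup' hScne (f i)) := by
      calc f i0 j0 ≤ (Sᶜ).sup' hScne (f i0) := Finset.le_sup' _ hj0S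
        _ ≤ S.sup' hS (fun i => (Sᶜ).sup' hScne (f i)) := Finset.le_sup' (fun i => (Sᶜ).sup' hScne (f i)) hi0S
    linarith
  · have hRne : (Finset.univ : Finset (Fin M)).Nonempty :=
      Finset.univ_nonempty_iff.mpr ⟨⟨0, by omega⟩⟩
    set R := Finset.univ.sup' hRne (fun i => ∑ j, B i j) with hR
    have hsup : S.sup' hS (fun i => (Sᶜ).sup' hScne (f i)) ≤ 2 * R := by
      refine Finset.sup'_le _ _ fun i hi => Finset.sup'_le _ _ fun j hj => ?_
      have hiR : (∑ p ∈ S, B i p) + (∑ p ∈ Sᶜ, B i p) ≤ R := by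
        rw [Finset.sum_add_sum_compl]
        exact Finset.le_sup' (fun i => ∑ j, B i j) (Finset.mem_univ i)
      have hjR : (∑ q ∈ Sᶜ, B j q) + (∑ q ∈ S, B j q) ≤ R := by
        rw [add_comm, Finset.sum_add_sum_compl]
        exact Finset.le_sup' (fun i => ∑ j, B i j) (Finset.mem_univ j)
      exact auxTwo _ _ _ _ R (Finset.sum_nonneg fun p _ => hB _ _)
        (Finset.sum_nonneg fun q _ => hB _ _) hiR hjR
    linarith
end

section
/- Let a, b, c, d, R be nonnegative real numbers with a + c ≤ R and b + d ≤ R. Then max(a, b) ≤ ( a + b + sqrt( (a − b)² + 4cd ) ) / 2 ≤ R. -/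
/-- Scalar inequality used in the proof of Proposition 3: if `a + c ≤ R` and
`b + d ≤ R` with all quantities nonnegative, then
`max a b ≤ (a + b + √((a-b)² + 4cd))/2 ≤ R`. -/
theorem stmt_8 (a b c d R : ℝ) (ha : 0 ≤ a) (hb : 0 ≤ b) (hc : 0 ≤ c) (hd : 0 ≤ d)
    (h1 : a + c ≤ R) (h2 : b + d ≤ R) :
    max a b ≤ (a + b + Real.sqrt ((a - b) ^ 2 + 4 * (c * d))) / 2 ∧
      (a + b + Real.sqrt ((a - b) ^ 2 + 4 * (c * d))) / 2 ≤ R := by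
  have hsq : |a - b| ≤ Real.sqrt ((a - b) ^ 2 + 4 * (c * d)) := by
    rw [← Real.sqrt_sq_eq_abs]
    exact Real.sqrt_le_sqrt (by nlinarith)
  constructor
  · rcases le_total a b with h | h
    · rw [max_eq_right h]
      linarith [neg_abs_le (a - b), (neg_le_abs (a-b)).trans hsq]
    · rw [max_eq_left h]
      linarith [(le_abs_self (a - b)).trans hsq]
  · have hub : Real.sqrt ((a - b) ^ 2 + 4 * (c * d)) ≤ 2 * R - a - b := by
      have hca : c ≤ R - a := by linarith
      have hdb : d ≤ R - b := by linarith
      have hra : (0:ℝ) ≤ R - a := le_trans hc hca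
      have hrb : (0:ℝ) ≤ R - b := le_trans hd hdb
      have : (a - b) ^ 2 + 4 * (c * d) ≤ (2 * R - a - b) ^ 2 := by nlinarith
      calc Real.sqrt ((a - b) ^ 2 + 4 * (c * d)) ≤ Real.sqrt ((2 * R - a - b)^2) :=
            Real.sqrt_le_sqrt this
        _ = 2 * R - a - b := Real.sqrt_sq (by linarith)
    linarith
end

section
/- Let M ≥ 2, let Ω be a symmetric irreducible M×M matrix with nonnegative real entries, let S be a nonempty proper subset of {1,…,M}, and let ι(Ω) = (1/2)·max_{i∈S, j∈S^c} ( r_{ij}^+ + sqrt( (r_{ij}^-)² + 4 r_{ij} ) ) with r_{ij}^+ = r_i(Ω_S) + r_j(Ω_{S^c}), r_{ij}^- = r_i(Ω_S) − r_j(Ω_{S^c}), r_{ij} = r_i(Ω_{S,S^c})·r_j(Ω_{S^c,S}). If μ ∈ ℝ and c ≥ 0 satisfy ι(Ω) ≤ μ − c, then the symmetric matrix μI − Ω is positive semidefinite with smallest eigenvalue at least c; equivalently, x^T(μI − Ω)x ≥ c‖x‖² for all x ∈ ℝ^M. -/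
open Finset Matrix

lemma aux_quad (M : ℕ) (Ω : Matrix (Fin M) (Fin M) ℝ)
    (hsym : ∀ i j, Ω i j = Ω j i) (hΩ : ∀ i j, 0 ≤ Ω i j)
    (S : Finset (Fin M)) (lam : ℝ) (a b s t : Fin M → ℝ)
    (hadef : ∀ i, a i = ∑ p ∈ S, Ω i p)
    (hbdef : ∀ j, b j = ∑ q ∈ Sᶜ, Ω j q)
    (hsdef : ∀ i, s i = ∑ p ∈ Sᶜ, Ω i p)
    (htdef : ∀ j, t j = ∑ q ∈ S, Ω j q)
    (ha : ∀ i ∈ S, a i ≤ lam) (hb : ∀ j ∈ Sᶜ, b j ≤ lam)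
    (hst : ∀ i ∈ S, ∀ j ∈ Sᶜ, s i * t j ≤ (lam - a i) * (lam - b j))
    (x : Fin M → ℝ) :
    ∑ i, ∑ j, Ω i j * (x i * x j) ≤ lam * ∑ i, x i ^ 2 := by
  classical
  -- block bound
  have block : ∀ T : Finset (Fin M),
      2 * (∑ i ∈ T, ∑ j ∈ T, Ω i j * (x i * x j))
        ≤ 2 * ∑ i ∈ T, (∑ j ∈ T, Ω i j) * x i ^ 2 := by
    intro T
    have h1 : 2 * (∑ i ∈ T, ∑ j ∈ T, Ω i j * (x i * x j))
        ≤ ∑ i ∈ T, ∑ j ∈ T, (Ω i j * x i ^ 2 + Ω i j * x j ^ 2) := by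
      rw [Finset.mul_sum]
      refine Finset.sum_le_sum fun i _ => ?_
      rw [Finset.mul_sum]
      refine Finset.sum_le_sum fun j _ => ?_
      nlinarith [sq_nonneg (x i - x j), hΩ i j, mul_nonneg (hΩ i j) (sq_nonneg (x i - x j))]
    have swap : ∑ i ∈ T, ∑ j ∈ T, Ω i j * x j ^ 2 = ∑ i ∈ T, ∑ j ∈ T, Ω i j * x i ^ 2 := by
      rw [Finset.sum_comm]
      exact Finset.sum_congr rfl fun i _ => Finset.sum_congr rfl fun j _ => by rw [hsym j i]
    have h2 : ∑ i ∈ T, ∑ j ∈ T, (Ω i j * x i ^ 2 + Ω i j * x j ^ 2)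
        = 2 * ∑ i ∈ T, (∑ j ∈ T, Ω i j) * x i ^ 2 := by
      simp only [Finset.sum_add_distrib, swap, ← Finset.sum_mul]
      ring
    linarith [h1, h2.le, h2.ge]
  -- cross bound
  have cross : 2 * (∑ i ∈ S, ∑ j ∈ Sᶜ, Ω i j * (x i * x j))
      ≤ (∑ i ∈ S, (lam - a i) * x i ^ 2) + ∑ j ∈ Sᶜ, (lam - b j) * x j ^ 2 := by
    have per : ∀ i ∈ S, ∀ j ∈ Sᶜ, 2 * (Ω i j * (x i * x j))
        ≤ Ω i j * ((lam - a i) / s i * x i ^ 2) + Ω i j * ((lam - b j) / t j * x j ^ 2) := by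
      intro i hi j hj
      rcases eq_or_lt_of_le (hΩ i j) with h0 | hpos
      · rw [← h0]; simp
      · have hsi : 0 < s i := by
          rw [hsdef]
          exact lt_of_lt_of_le hpos (Finset.single_le_sum (fun p _ => hΩ i p) hj)
        have htj : 0 < t j := by
          rw [htdef]
          calc (0:ℝ) < Ω i j := hpos
            _ = Ω j i := hsym i j
            _ ≤ ∑ q ∈ S, Ω j q := Finset.single_le_sum (fun q _ => hΩ j q) hi
        have h1 := hst i hi j hj
        have hprod : 0 < (lam - a i) * (lam - b j) := lt_of_lt_of_le (mul_pos hsi htj) h1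
        have hla : 0 < lam - a i := by nlinarith [ha i hi, hb j hj]
        have hlb : 0 < lam - b j := by nlinarith [ha i hi, hb j hj]
        have hp : 0 < (lam - a i) / s i := div_pos hla hsi
        have hq : 0 < (lam - b j) / t j := div_pos hlb htj
        have hpq : 1 ≤ ((lam - a i) / s i) * ((lam - b j) / t j) := by
          rw [div_mul_div_comm, le_div_iff₀ (mul_pos hsi htj)]
          linarith [h1]
        set p := (lam - a i) / s i with hpdef
        set q := (lam - b j) / t j with hqdef
        have key2 : 2 * (x i * x j) ≤ p * x i ^ 2 + q * x j ^ 2 := by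
          nlinarith [sq_nonneg (p * x i - x j),
            mul_nonneg (by linarith : (0:ℝ) ≤ p * q - 1) (sq_nonneg (x j)), hp]
        calc 2 * (Ω i j * (x i * x j)) = Ω i j * (2 * (x i * x j)) := by ring
          _ ≤ Ω i j * (p * x i ^ 2 + q * x j ^ 2) :=
              mul_le_mul_of_nonneg_left key2 (hΩ i j)
          _ = Ω i j * (p * x i ^ 2) + Ω i j * (q * x j ^ 2) := by ring
    have per' : 2 * (∑ i ∈ S, ∑ j ∈ Sᶜ, Ω i j * (x i * x j))
        ≤ ∑ i ∈ S, ∑ j ∈ Sᶜ, (Ω i j * ((lam - a i) / s i * x i ^ 2)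
            + Ω i j * ((lam - b j) / t j * x j ^ 2)) := by
      rw [Finset.mul_sum]
      refine Finset.sum_le_sum fun i hi => ?_
      rw [Finset.mul_sum]
      exact Finset.sum_le_sum fun j hj => per i hi j hj
    have sum1 : ∑ i ∈ S, ∑ j ∈ Sᶜ, Ω i j * ((lam - a i) / s i * x i ^ 2)
        ≤ ∑ i ∈ S, (lam - a i) * x i ^ 2 := by
      refine Finset.sum_le_sum fun i hi => ?_
      rw [← Finset.sum_mul, ← hsdef]
      rcases eq_or_ne (s i) 0 with h | h
      · rw [h, zero_mul]
        exact mul_nonneg (by linarith [ha i hi]) (sq_nonneg _)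
      · have : s i * ((lam - a i) / s i * x i ^ 2) = (lam - a i) * x i ^ 2 := by
          field_simp
        rw [this]
    have sum2 : ∑ i ∈ S, ∑ j ∈ Sᶜ, Ω i j * ((lam - b j) / t j * x j ^ 2)
        ≤ ∑ j ∈ Sᶜ, (lam - b j) * x j ^ 2 := by
      rw [Finset.sum_comm]
      refine Finset.sum_le_sum fun j hj => ?_
      rw [← Finset.sum_mul]
      have hcol : ∑ i ∈ S, Ω i j = t j := by
        rw [htdef]
        exact Finset.sum_congr rfl fun i _ => hsym i j
      rw [hcol]
      rcases eq_or_ne (t j) 0 with h | h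
      · rw [h, zero_mul]
        exact mul_nonneg (by linarith [hb j hj]) (sq_nonneg _)
      · have : t j * ((lam - b j) / t j * x j ^ 2) = (lam - b j) * x j ^ 2 := by
          field_simp
        rw [this]
    calc 2 * (∑ i ∈ S, ∑ j ∈ Sᶜ, Ω i j * (x i * x j))
        ≤ ∑ i ∈ S, ∑ j ∈ Sᶜ, (Ω i j * ((lam - a i) / s i * x i ^ 2)
            + Ω i j * ((lam - b j) / t j * x j ^ 2)) := per'
      _ = (∑ i ∈ S, ∑ j ∈ Sᶜ, Ω i j * ((lam - a i) / s i * x i ^ 2))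
            + ∑ i ∈ S, ∑ j ∈ Sᶜ, Ω i j * ((lam - b j) / t j * x j ^ 2) := by
          simp only [Finset.sum_add_distrib]
      _ ≤ _ := add_le_add sum1 sum2
  -- split the full sum into blocks
  have split : ∑ i, ∑ j, Ω i j * (x i * x j)
      = (∑ i ∈ S, ∑ j ∈ S, Ω i j * (x i * x j) + ∑ i ∈ S, ∑ j ∈ Sᶜ, Ω i j * (x i * x j))
        + (∑ i ∈ Sᶜ, ∑ j ∈ S, Ω i j * (x i * x j)
        + ∑ i ∈ Sᶜ, ∑ j ∈ Sᶜ, Ω i j * (x i * x j)) := by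
    rw [← Finset.sum_add_sum_compl S (fun i => ∑ j, Ω i j * (x i * x j))]
    congr 1
    · rw [← Finset.sum_add_distrib]
      exact Finset.sum_congr rfl fun i _ => (Finset.sum_add_sum_compl S _).symm
    · rw [← Finset.sum_add_distrib]
      exact Finset.sum_congr rfl fun i _ => (Finset.sum_add_sum_compl S _).symm
  have q32 : ∑ i ∈ Sᶜ, ∑ j ∈ S, Ω i j * (x i * x j)
      = ∑ i ∈ S, ∑ j ∈ Sᶜ, Ω i j * (x i * x j) := by
    rw [Finset.sum_comm]
    exact Finset.sum_congr rfl fun i _ => Finset.sum_congr rfl fun j _ => by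
      rw [hsym j i]; ring
  have b1 := block S
  have b4 := block Sᶜ
  have fold1 : ∑ i ∈ S, (∑ j ∈ S, Ω i j) * x i ^ 2 = ∑ i ∈ S, a i * x i ^ 2 :=
    Finset.sum_congr rfl fun i _ => by rw [hadef]
  have fold4 : ∑ i ∈ Sᶜ, (∑ j ∈ Sᶜ, Ω i j) * x i ^ 2 = ∑ i ∈ Sᶜ, b i * x i ^ 2 :=
    Finset.sum_congr rfl fun i _ => by rw [hbdef]
  have eq1 : ∑ i ∈ S, a i * x i ^ 2 + ∑ i ∈ S, (lam - a i) * x i ^ 2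
      = ∑ i ∈ S, lam * x i ^ 2 := by
    rw [← Finset.sum_add_distrib]
    exact Finset.sum_congr rfl fun i _ => by ring
  have eq2 : ∑ i ∈ Sᶜ, b i * x i ^ 2 + ∑ i ∈ Sᶜ, (lam - b i) * x i ^ 2
      = ∑ i ∈ Sᶜ, lam * x i ^ 2 := by
    rw [← Finset.sum_add_distrib]
    exact Finset.sum_congr rfl fun i _ => by ring
  have etot : lam * ∑ i, x i ^ 2 = ∑ i ∈ S, lam * x i ^ 2 + ∑ i ∈ Sᶜ, lam * x i ^ 2 := by
    rw [Finset.mul_sum, ← Finset.sum_add_sum_compl S (fun i => lam * x i ^ 2)]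
  rw [split, q32, etot]
  rw [fold1] at b1
  rw [fold4] at b4
  linarith [b1, b4, cross, eq1, eq2]

/-- Consequence of Proposition 3 used in Section IV: for a symmetric
irreducible nonnegative matrix `Ω`, if `ι(Ω) ≤ μ − c` with `c ≥ 0`, then
`μI − Ω` is positive semidefinite with smallest eigenvalue at least `c`,
i.e. `xᵀ(μI − Ω)x ≥ c‖x‖²` for all `x`. -/
theorem stmt_11 (M : ℕ) (hM : 2 ≤ M)
    (Ω : Matrix (Fin M) (Fin M) ℝ) (hsymm : Ωᵀ = Ω) (hΩ : ∀ i j, 0 ≤ Ω i j)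
    (hirr : ∀ S : Finset (Fin M), S.Nonempty → S ≠ Finset.univ →
      ∃ i ∈ S, ∃ j ∉ S, Ω i j ≠ 0)
    (S : Finset (Fin M)) (hS : S.Nonempty) (hSne : S ≠ Finset.univ)
    (μ c : ℝ) (hc : 0 ≤ c)
    (hι : (1 / 2) * S.sup' hS (fun i =>
        (Sᶜ).sup' (Finset.nonempty_iff_ne_empty.mpr fun h =>
            hSne ((Finset.compl_eq_empty_iff S).mp h)) (fun j =>
          ((∑ p ∈ S, Ω i p) + ∑ q ∈ Sᶜ, Ω j q) +
            Real.sqrt (((∑ p ∈ S, Ω i p) - ∑ q ∈ Sᶜ, Ω j q) ^ 2 +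
              4 * ((∑ p ∈ Sᶜ, Ω i p) * (∑ q ∈ S, Ω j q))))) ≤ μ - c) :
    (μ • (1 : Matrix (Fin M) (Fin M) ℝ) - Ω).PosSemidef ∧
    ∀ x : Fin M → ℝ,
      c * (∑ i, x i ^ 2) ≤ x ⬝ᵥ ((μ • (1 : Matrix (Fin M) (Fin M) ℝ) - Ω).mulVec x) := by
    classical
  have hsym' : ∀ i j, Ω i j = Ω j i := fun i j =>
    (congrFun (congrFun hsymm.symm i) j).trans (Matrix.transpose_apply Ω i j)
  have hScne : (Sᶜ : Finset (Fin M)).Nonempty :=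
    Finset.nonempty_iff_ne_empty.mpr fun h => hSne ((Finset.compl_eq_empty_iff S).mp h)
  set lam : ℝ := μ - c with hlamdef
  -- pairwise key inequality extracted from the sup'
  have key : ∀ i ∈ S, ∀ j ∈ Sᶜ,
      ((∑ p ∈ S, Ω i p) + ∑ q ∈ Sᶜ, Ω j q) +
        Real.sqrt (((∑ p ∈ S, Ω i p) - ∑ q ∈ Sᶜ, Ω j q) ^ 2 +
          4 * ((∑ p ∈ Sᶜ, Ω i p) * (∑ q ∈ S, Ω j q))) ≤ 2 * lam := by
    intro i hi j hj
    have h1 : ((∑ p ∈ S, Ω i p) + ∑ q ∈ Sᶜ, Ω j q) +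
        Real.sqrt (((∑ p ∈ S, Ω i p) - ∑ q ∈ Sᶜ, Ω j q) ^ 2 +
          4 * ((∑ p ∈ Sᶜ, Ω i p) * (∑ q ∈ S, Ω j q)))
        ≤ (Sᶜ).sup' (Finset.nonempty_iff_ne_empty.mpr fun h =>
            hSne ((Finset.compl_eq_empty_iff S).mp h)) (fun j =>
          ((∑ p ∈ S, Ω i p) + ∑ q ∈ Sᶜ, Ω j q) +
            Real.sqrt (((∑ p ∈ S, Ω i p) - ∑ q ∈ Sᶜ, Ω j q) ^ 2 +
              4 * ((∑ p ∈ Sᶜ, Ω i p) * (∑ q ∈ S, Ω j q)))) :=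
      Finset.le_sup' (fun j =>
          ((∑ p ∈ S, Ω i p) + ∑ q ∈ Sᶜ, Ω j q) +
            Real.sqrt (((∑ p ∈ S, Ω i p) - ∑ q ∈ Sᶜ, Ω j q) ^ 2 +
              4 * ((∑ p ∈ Sᶜ, Ω i p) * (∑ q ∈ S, Ω j q)))) hj
    have h2 : (Sᶜ).sup' (Finset.nonempty_iff_ne_empty.mpr fun h =>
            hSne ((Finset.compl_eq_empty_iff S).mp h)) (fun j =>
          ((∑ p ∈ S, Ω i p) + ∑ q ∈ Sᶜ, Ω j q) +
            Real.sqrt (((∑ p ∈ S, Ω i p) - ∑ q ∈ Sᶜ, Ω j q) ^ 2 +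
              4 * ((∑ p ∈ Sᶜ, Ω i p) * (∑ q ∈ S, Ω j q))))
        ≤ S.sup' hS (fun i =>
        (Sᶜ).sup' (Finset.nonempty_iff_ne_empty.mpr fun h =>
            hSne ((Finset.compl_eq_empty_iff S).mp h)) (fun j =>
          ((∑ p ∈ S, Ω i p) + ∑ q ∈ Sᶜ, Ω j q) +
            Real.sqrt (((∑ p ∈ S, Ω i p) - ∑ q ∈ Sᶜ, Ω j q) ^ 2 +
              4 * ((∑ p ∈ Sᶜ, Ω i p) * (∑ q ∈ S, Ω j q))))) :=
      Finset.le_sup' (fun i =>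
        (Sᶜ).sup' (Finset.nonempty_iff_ne_empty.mpr fun h =>
            hSne ((Finset.compl_eq_empty_iff S).mp h)) (fun j =>
          ((∑ p ∈ S, Ω i p) + ∑ q ∈ Sᶜ, Ω j q) +
            Real.sqrt (((∑ p ∈ S, Ω i p) - ∑ q ∈ Sᶜ, Ω j q) ^ 2 +
              4 * ((∑ p ∈ Sᶜ, Ω i p) * (∑ q ∈ S, Ω j q))))) hi
    linarith [h1, h2, hι]
  -- nonnegativity of the various row sums
  have hs0 : ∀ i, 0 ≤ ∑ p ∈ Sᶜ, Ω i p := fun i => Finset.sum_nonneg fun p _ => hΩ i p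
  have ht0 : ∀ j, 0 ≤ ∑ q ∈ S, Ω j q := fun j => Finset.sum_nonneg fun q _ => hΩ j q
  -- properties of the sqrt term
  have sqrt_facts : ∀ i ∈ S, ∀ j ∈ Sᶜ,
      0 ≤ Real.sqrt (((∑ p ∈ S, Ω i p) - ∑ q ∈ Sᶜ, Ω j q) ^ 2 +
          4 * ((∑ p ∈ Sᶜ, Ω i p) * (∑ q ∈ S, Ω j q))) ∧
      (Real.sqrt (((∑ p ∈ S, Ω i p) - ∑ q ∈ Sᶜ, Ω j q) ^ 2 +
          4 * ((∑ p ∈ Sᶜ, Ω i p) * (∑ q ∈ S, Ω j q)))) ^ 2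
        = ((∑ p ∈ S, Ω i p) - ∑ q ∈ Sᶜ, Ω j q) ^ 2 +
          4 * ((∑ p ∈ Sᶜ, Ω i p) * (∑ q ∈ S, Ω j q)) := by
    intro i hi j hj
    refine ⟨Real.sqrt_nonneg _, Real.sq_sqrt ?_⟩
    have := mul_nonneg (hs0 i) (ht0 j)
    positivity
  have ha : ∀ i ∈ S, (∑ p ∈ S, Ω i p) ≤ lam := by
    intro i hi
    obtain ⟨j, hj⟩ := hScne
    obtain ⟨hd0, hd2⟩ := sqrt_facts i hi j hj
    have hk := key i hi j hj
    have hst0 := mul_nonneg (hs0 i) (ht0 j)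
    nlinarith [hd0, hd2, hk, hst0]
  have hb : ∀ j ∈ Sᶜ, (∑ q ∈ Sᶜ, Ω j q) ≤ lam := by
    intro j hj
    obtain ⟨i, hi⟩ := hS
    obtain ⟨hd0, hd2⟩ := sqrt_facts i hi j hj
    have hk := key i hi j hj
    have hst0 := mul_nonneg (hs0 i) (ht0 j)
    nlinarith [hd0, hd2, hk, hst0]
  have hst : ∀ i ∈ S, ∀ j ∈ Sᶜ,
      (∑ p ∈ Sᶜ, Ω i p) * (∑ q ∈ S, Ω j q)
        ≤ (lam - ∑ p ∈ S, Ω i p) * (lam - ∑ q ∈ Sᶜ, Ω j q) := by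
    intro i hi j hj
    obtain ⟨hd0, hd2⟩ := sqrt_facts i hi j hj
    have hk := key i hi j hj
    nlinarith [hd0, hd2, hk,
      mul_nonneg (by linarith : (0:ℝ) ≤ 2 * lam - (∑ p ∈ S, Ω i p) - (∑ q ∈ Sᶜ, Ω j q) -
          Real.sqrt (((∑ p ∈ S, Ω i p) - ∑ q ∈ Sᶜ, Ω j q) ^ 2 +
            4 * ((∑ p ∈ Sᶜ, Ω i p) * (∑ q ∈ S, Ω j q))))
        (by linarith : (0:ℝ) ≤ 2 * lam - (∑ p ∈ S, Ω i p) - (∑ q ∈ Sᶜ, Ω j q) +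
          Real.sqrt (((∑ p ∈ S, Ω i p) - ∑ q ∈ Sᶜ, Ω j q) ^ 2 +
            4 * ((∑ p ∈ Sᶜ, Ω i p) * (∑ q ∈ S, Ω j q))))]
  -- main quadratic form bound
  have main : ∀ x : Fin M → ℝ, x ⬝ᵥ Ω.mulVec x ≤ lam * ∑ i, x i ^ 2 := by
    intro x
    have hexp : x ⬝ᵥ Ω.mulVec x = ∑ i, ∑ j, Ω i j * (x i * x j) := by
      simp only [dotProduct, Matrix.mulVec, Finset.mul_sum]
      exact Finset.sum_congr rfl fun i _ => Finset.sum_congr rfl fun j _ => by ring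
    rw [hexp]
    exact aux_quad M Ω hsym' hΩ S lam _ _ _ _
      (fun i => rfl) (fun j => rfl) (fun i => rfl) (fun j => rfl) ha hb hst x
  have quad : ∀ x : Fin M → ℝ,
      x ⬝ᵥ ((μ • (1 : Matrix (Fin M) (Fin M) ℝ) - Ω).mulVec x)
        = μ * ∑ i, x i ^ 2 - x ⬝ᵥ Ω.mulVec x := by
    intro x
    rw [Matrix.sub_mulVec, dotProduct_sub]
    congr 1
    rw [Matrix.smul_mulVec, Matrix.one_mulVec, dotProduct_smul]
    simp [dotProduct, Finset.mul_sum, sq]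
  have hquad : ∀ x : Fin M → ℝ,
      c * (∑ i, x i ^ 2) ≤ x ⬝ᵥ ((μ • (1 : Matrix (Fin M) (Fin M) ℝ) - Ω).mulVec x) := by
    intro x
    rw [quad x]
    have := main x
    have hx2 : 0 ≤ ∑ i, x i ^ 2 := Finset.sum_nonneg fun i _ => sq_nonneg _
    nlinarith [this, hx2]
  refine ⟨Matrix.posSemidef_iff_dotProduct_mulVec.mpr ⟨?_, ?_⟩, hquad⟩
  · -- IsHermitian
    ext i j
    simp only [Matrix.conjTranspose_apply, Matrix.sub_apply, Matrix.smul_apply,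
      Matrix.one_apply, star_trivial, smul_eq_mul]
    rw [hsym' j i]
    by_cases h : i = j <;> simp [h, eq_comm]
  · -- nonnegativity of quadratic form
    intro x
    have := hquad x
    have hx2 : 0 ≤ ∑ i, x i ^ 2 := Finset.sum_nonneg fun i _ => sq_nonneg _
    simpa using le_trans (by nlinarith) this
end

section
/- Fix 0 < α ≤ 1 and define a(t) = t^{−α} for integers t ≥ 1. Then: (i) a is strictly decreasing and a(t) → 0 as t → ∞; (ii) for all integers t ≥ 2, (2/3)^α ≤ a(t+1)/a(t) ≤ 1; (iii) for every ν > 0 and every κ with 0 < κ < 2^{1−α}/(2 + αν), there exists t_0 such that for all integers t ≥ t_0 there exists a positive integer T with κνt/(t^{1−α} − ακν) ≤ T ≤ ν(t−1)^α − 1, and every integer T in that range satisfies κν ≤ Σ_{s=t}^{t+T} s^{−α} ≤ ν; (iv) if additionally 1/2 < α ≤ 1, then Σ_{t=1}^{∞} t^{−2α} < ∞. -/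
open Finset Filter

private lemma auxAnti12 (α : ℝ) (hα0 : 0 < α) {m n : ℕ} (hm : 1 ≤ m) (hmn : m ≤ n) :
    ((n:ℝ))^(-α) ≤ ((m:ℝ))^(-α) := by
  have hm0 : (0:ℝ) < m := by exact_mod_cast hm
  have hmn' : (m:ℝ) ≤ n := by exact_mod_cast hmn
  rw [Real.rpow_neg hm0.le, Real.rpow_neg (by linarith)]
  exact inv_anti₀ (Real.rpow_pos_of_pos hm0 α) (Real.rpow_le_rpow hm0.le hmn' hα0.le)

private lemma auxBounds12 (α : ℝ) (hα0 : 0 < α) (hα1 : α ≤ 1) (ν κ : ℝ) (hν : 0 < ν)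
    (hκ : 0 < κ) (hκν : κ < 2 ^ (1 - α) / (2 + α * ν)) (t T : ℕ) (ht4 : 4 ≤ t) (hT : 0 < T)
    (hTL : κ * ν * (t : ℝ) / ((t : ℝ) ^ (1 - α) - α * κ * ν) ≤ (T : ℝ))
    (hTU : (T : ℝ) ≤ ν * ((t : ℝ) - 1) ^ α - 1) :
    κ * ν ≤ ∑ s ∈ Finset.Icc t (t + T), ((s : ℝ)) ^ (-α) ∧
      ∑ s ∈ Finset.Icc t (t + T), ((s : ℝ)) ^ (-α) ≤ ν := by
  have hx4 : (4:ℝ) ≤ t := by exact_mod_cast ht4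
  set x : ℝ := (t:ℝ) with hxdef
  have hx0 : (0:ℝ) < x := by linarith
  have h2αν : (0:ℝ) < 2 + α * ν := by positivity
  have hκ2 : κ * (2 + α * ν) < 2 ^ (1-α) := (lt_div_iff₀ h2αν).mp hκν
  have hακν : α * κ * ν < 2 ^ (1-α) := by nlinarith
  have hx2 : (2:ℝ) ^ (1-α) ≤ x ^ (1-α) :=
    Real.rpow_le_rpow (by norm_num) (by linarith) (by linarith)
  have hd : 0 < x ^ (1-α) - α * κ * ν := by linarith
  have hcard : (Finset.Icc t (t + T)).card = T + 1 := by rw [Nat.card_Icc]; omega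
  have hxα : (0:ℝ) < x ^ α := Real.rpow_pos_of_pos hx0 α
  have hxinv : x ^ α * x ^ (-α) = 1 := by
    rw [← Real.rpow_add hx0]; simp
  constructor
  · -- lower bound
    set T' : ℝ := (T:ℝ) with hT'def
    have hT'0 : (0:ℝ) ≤ T' := Nat.cast_nonneg T
    have hy0 : (0:ℝ) < x + T' := by linarith
    -- Bernoulli: (x+T')^α ≤ x^α * (1 + α * (T'/x))
    have hbern : (x + T') ^ α ≤ x ^ α * (1 + α * (T' / x)) := by
      have h1 : x + T' = x * (1 + T' / x) := by field_simp
      rw [h1, Real.mul_rpow hx0.le (by positivity)]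
      exact mul_le_mul_of_nonneg_left
        (rpow_one_add_le_one_add_mul_self
          (le_trans (by norm_num) (div_nonneg hT'0 hx0.le)) hα0.le hα1) hxα.le
    -- from hTL : clear denominator
    have hTd : κ * ν * x ≤ T' * (x ^ (1-α) - α * κ * ν) := (div_le_iff₀ hd).mp hTL
    have hAx : x ^ α * x ^ (1-α) = x := by
      rw [← Real.rpow_add hx0]; norm_num
    -- multiply hTd by x^α : κνx·x^α ≤ T'(x − ακν x^α)
    have hTd2 : κ * ν * x * x ^ α ≤ T' * (x - α * κ * ν * x ^ α) := by nlinarith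
    -- goal: κν(x+T')^α ≤ T'
    have hkey : κ * ν * (x + T') ^ α ≤ T' := by
      have h1 : κ * ν * (x + T') ^ α ≤ κ * ν * (x ^ α * (1 + α * (T' / x))) :=
        mul_le_mul_of_nonneg_left hbern (by positivity)
      have h2 : κ * ν * (x ^ α * (1 + α * (T' / x))) ≤ T' := by
        rw [← sub_nonneg]
        have : T' - κ * ν * (x ^ α * (1 + α * (T' / x)))
            = (T' * x - (κ * ν * x * x ^ α + κ * ν * α * x ^ α * T')) / x := by
          field_simp
        rw [this]
        apply div_nonneg _ hx0.le
        nlinarith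
      linarith
    have hterm : ∀ s ∈ Finset.Icc t (t + T), (((t+T:ℕ):ℝ))^(-α) ≤ ((s:ℝ))^(-α) := by
      intro s hs
      rw [Finset.mem_Icc] at hs
      exact auxAnti12 α hα0 (by omega) hs.2
    have hsum := Finset.card_nsmul_le_sum (Finset.Icc t (t + T)) _ _ hterm
    rw [hcard, nsmul_eq_mul] at hsum
    have hyc : ((t+T:ℕ):ℝ) = x + T' := by push_cast; ring
    rw [hyc] at hsum
    have hyinv : (x + T') ^ α * (x + T') ^ (-α) = 1 := by
      rw [← Real.rpow_add hy0]; simp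
    have hyα : (0:ℝ) < (x + T') ^ (-α) := Real.rpow_pos_of_pos hy0 _
    calc κ * ν = κ * ν * (x + T') ^ α * (x + T') ^ (-α) := by
          rw [mul_assoc, hyinv]; ring
      _ ≤ T' * (x + T') ^ (-α) := mul_le_mul_of_nonneg_right hkey hyα.le
      _ ≤ (↑T + 1) * (x + T') ^ (-α) :=
          mul_le_mul_of_nonneg_right (by simp [hT'def]) hyα.le
      _ ≤ ∑ s ∈ Finset.Icc t (t + T), ((s : ℝ)) ^ (-α) := by
          exact_mod_cast hsum
  · -- upper bound
    have hterm : ∀ s ∈ Finset.Icc t (t + T), ((s:ℝ))^(-α) ≤ x ^ (-α) := by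
      intro s hs
      rw [Finset.mem_Icc] at hs
      exact auxAnti12 α hα0 (by omega) hs.1
    have hsum := Finset.sum_le_card_nsmul (Finset.Icc t (t + T)) _ _ hterm
    rw [hcard, nsmul_eq_mul] at hsum
    have h1 : ((T:ℝ) + 1) ≤ ν * (x - 1) ^ α := by linarith
    have h2 : (x - 1) ^ α ≤ x ^ α := Real.rpow_le_rpow (by linarith) (by linarith) hα0.le
    have hxαneg : (0:ℝ) < x ^ (-α) := Real.rpow_pos_of_pos hx0 _
    calc ∑ s ∈ Finset.Icc t (t + T), ((s : ℝ)) ^ (-α) ≤ ((T:ℝ)+1) * x ^ (-α) := by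
          exact_mod_cast hsum
      _ ≤ ν * x ^ α * x ^ (-α) :=
          mul_le_mul_of_nonneg_right (by nlinarith) hxαneg.le
      _ = ν := by rw [mul_assoc, hxinv, mul_one]

private lemma auxExists12 (α : ℝ) (hα0 : 0 < α) (hα1 : α ≤ 1) (ν κ : ℝ) (hν : 0 < ν)
    (hκ : 0 < κ) (hκν : κ < 2 ^ (1 - α) / (2 + α * ν)) :
    ∃ t0 : ℕ, ∀ t : ℕ, t0 ≤ t → (4 ≤ t ∧
        ∃ T : ℕ, 0 < T ∧
            κ * ν * (t : ℝ) / ((t : ℝ) ^ (1 - α) - α * κ * ν) ≤ (T : ℝ) ∧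
            (T : ℝ) ≤ ν * ((t : ℝ) - 1) ^ α - 1) := by
  have h2αν : (0:ℝ) < 2 + α * ν := by positivity
  have hκ2 : κ * (2 + α * ν) < 2 ^ (1-α) := (lt_div_iff₀ h2αν).mp hκν
  have hακν : α * κ * ν < 2 ^ (1-α) := by nlinarith
  -- c = ν((3/2)^α − 1) > 0
  set c : ℝ := ν * ((3/2 : ℝ) ^ α - 1) with hcdef
  have h32 : (1:ℝ) < (3/2 : ℝ) ^ α := by
    calc (1:ℝ) = (1:ℝ) ^ α := (Real.one_rpow α).symm
      _ < (3/2:ℝ) ^ α := Real.rpow_lt_rpow (by norm_num) (by norm_num) hα0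
  have hc0 : 0 < c := by nlinarith
  have htt : Tendsto (fun t : ℕ => (((t:ℝ))/2) ^ α) atTop atTop :=
    (tendsto_rpow_atTop hα0).comp (Tendsto.atTop_div_const two_pos tendsto_natCast_atTop_atTop)
  obtain ⟨t0, ht0⟩ := eventually_atTop.mp
    ((htt.eventually_ge_atTop (2/c)).and (eventually_ge_atTop 4))
  refine ⟨t0, fun t ht => ?_⟩
  obtain ⟨hcP, ht4⟩ := ht0 t ht
  refine ⟨ht4, ?_⟩
  have hx4 : (4:ℝ) ≤ t := by exact_mod_cast ht4
  set x : ℝ := (t:ℝ) with hxdef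
  have hx0 : (0:ℝ) < x := by linarith
  set P : ℝ := (x/2) ^ α with hPdef
  have hP : 0 < P := Real.rpow_pos_of_pos (by linarith) α
  have hcP2 : 2 ≤ c * P := by
    rw [div_le_iff₀ hc0] at hcP
    nlinarith
  have hx2 : (2:ℝ) ^ (1-α) ≤ x ^ (1-α) :=
    Real.rpow_le_rpow (by norm_num) (by linarith) (by linarith)
  have hd : 0 < x ^ (1-α) - α * κ * ν := by linarith
  set L : ℝ := κ * ν * x / (x ^ (1-α) - α * κ * ν) with hLdef
  have hL0 : 0 < L := div_pos (by positivity) hd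
  -- key: L < ν * P
  have hPle : P ≤ x / 2 := by
    calc P ≤ (x/2) ^ (1:ℝ) :=
          Real.rpow_le_rpow_of_exponent_le (by linarith) hα1
      _ = x / 2 := Real.rpow_one _
  have hPid : P * x ^ (1-α) = x * 2 ^ (-α) := by
    rw [hPdef, Real.div_rpow hx0.le (by norm_num), Real.rpow_neg (by norm_num : (0:ℝ) ≤ 2),
      div_mul_eq_mul_div, div_eq_mul_inv, mul_comm (x ^ α) (x ^ (1-α))]
    rw [← Real.rpow_add hx0]
    norm_num
  have h2a : (2:ℝ) ^ (1-α) = 2 * 2 ^ (-α) := by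
    rw [show (1-α) = 1 + (-α) by ring, Real.rpow_add (by norm_num : (0:ℝ) < 2), Real.rpow_one]
  have hkey : L < ν * P := by
    rw [hLdef, div_lt_iff₀ hd]
    have hh : κ * (2 + α * ν) * (ν * x / 2) < 2 ^ (1-α) * (ν * x / 2) :=
      mul_lt_mul_of_pos_right hκ2 (by positivity)
    rw [h2a] at hh
    have hPid' : ν * P * x ^ (1-α) = ν * x * 2 ^ (-α) := by
      rw [mul_assoc, hPid]; ring
    have hles : α * κ * ν * ν * P ≤ α * κ * ν * ν * (x/2) :=
      mul_le_mul_of_nonneg_left hPle (by positivity)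
    nlinarith [hh, hPid', hles]
  -- gap: ν(x−1)^α ≥ ν P + c P ≥ ν P + 2
  have h34 : (3/2:ℝ) ^ α * P ≤ (x - 1) ^ α := by
    rw [hPdef, ← Real.mul_rpow (by norm_num) (by linarith)]
    apply Real.rpow_le_rpow (by positivity) (by linarith) hα0.le
  have hgap : ν * P + 2 ≤ ν * (x - 1) ^ α := by nlinarith
  refine ⟨⌈L⌉₊, Nat.ceil_pos.mpr hL0, Nat.le_ceil L, ?_⟩
  have := Nat.ceil_lt_add_one hL0.le
  linarith

/-- Proposition 6: the stepsize `a(t) = t^{−α}` with `0 < α ≤ 1` is strictly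
decreasing to zero, satisfies the ratio bounds `(2/3)^α ≤ a(t+1)/a(t) ≤ 1` for
`t ≥ 2`, satisfies the windowed-sum persistence condition with the stated
window lengths, and is square-summable when `1/2 < α`. -/
theorem stmt_12 (α : ℝ) (hα0 : 0 < α) (hα1 : α ≤ 1) :
    -- (i) strictly decreasing and tending to 0
    ((∀ s t : ℕ, 1 ≤ s → s < t → ((t : ℝ)) ^ (-α) < ((s : ℝ)) ^ (-α)) ∧
      Tendsto (fun t : ℕ => ((t : ℝ)) ^ (-α)) atTop (nhds 0)) ∧
    -- (ii) ratio bounds for t ≥ 2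
    (∀ t : ℕ, 2 ≤ t →
      ((2 / 3 : ℝ)) ^ α ≤ (((t : ℝ) + 1)) ^ (-α) / ((t : ℝ)) ^ (-α) ∧
        (((t : ℝ) + 1)) ^ (-α) / ((t : ℝ)) ^ (-α) ≤ 1) ∧
    -- (iii) windowed-sum persistence condition
    (∀ ν κ : ℝ, 0 < ν → 0 < κ → κ < 2 ^ (1 - α) / (2 + α * ν) →
      ∃ t0 : ℕ, ∀ t : ℕ, t0 ≤ t →
        (∃ T : ℕ, 0 < T ∧
            κ * ν * (t : ℝ) / ((t : ℝ) ^ (1 - α) - α * κ * ν) ≤ (T : ℝ) ∧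
            (T : ℝ) ≤ ν * ((t : ℝ) - 1) ^ α - 1) ∧
        (∀ T : ℕ, 0 < T →
            κ * ν * (t : ℝ) / ((t : ℝ) ^ (1 - α) - α * κ * ν) ≤ (T : ℝ) →
            (T : ℝ) ≤ ν * ((t : ℝ) - 1) ^ α - 1 →
            κ * ν ≤ ∑ s ∈ Finset.Icc t (t + T), ((s : ℝ)) ^ (-α) ∧
              ∑ s ∈ Finset.Icc t (t + T), ((s : ℝ)) ^ (-α) ≤ ν)) ∧
    -- (iv) square-summability for 1/2 < α ≤ 1
    (1 / 2 < α → Summable (fun t : ℕ => ((t : ℝ) + 1) ^ (-(2 * α)))) := by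
  refine ⟨⟨?_, ?_⟩, ?_, ?_, ?_⟩
  · -- (i) strict antitonicity
    intro s t hs hst
    have hs0 : (0:ℝ) < s := by exact_mod_cast hs
    have hst' : (s:ℝ) < t := by exact_mod_cast hst
    rw [Real.rpow_neg hs0.le, Real.rpow_neg (by linarith)]
    exact inv_strictAnti₀ (Real.rpow_pos_of_pos hs0 α) (Real.rpow_lt_rpow hs0.le hst' hα0)
  · -- (i) tendsto 0
    exact (tendsto_rpow_neg_atTop hα0).comp tendsto_natCast_atTop_atTop
  · -- (ii)
    intro t ht
    have ht2 : (2:ℝ) ≤ t := by exact_mod_cast ht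
    have ht0 : (0:ℝ) < t := by linarith
    have ht1 : (0:ℝ) < (t:ℝ) + 1 := by linarith
    have key : (((t : ℝ) + 1)) ^ (-α) / ((t : ℝ)) ^ (-α) = (((t:ℝ))/((t:ℝ)+1)) ^ α := by
      rw [Real.div_rpow ht0.le ht1.le, Real.rpow_neg ht1.le, Real.rpow_neg ht0.le,
        inv_div_inv]
    rw [key]
    constructor
    · apply Real.rpow_le_rpow (by norm_num) _ hα0.le
      rw [div_le_div_iff₀ (by norm_num) ht1]
      linarith
    · exact Real.rpow_le_one (by positivity) (by rw [div_le_one ht1]; linarith) hα0.le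
  · -- (iii)
    intro ν κ hν hκ hκν
    obtain ⟨t0, ht0⟩ := auxExists12 α hα0 hα1 ν κ hν hκ hκν
    refine ⟨t0, fun t ht => ⟨(ht0 t ht).2, fun T hT h1 h2 => ?_⟩⟩
    exact auxBounds12 α hα0 hα1 ν κ hν hκ hκν t T (ht0 t ht).1 hT h1 h2
  · -- (iv)
    intro h2
    have hp : (-(2*α)) < -1 := by linarith
    have h := (summable_nat_add_iff 1).mpr (Real.summable_nat_rpow.mpr hp)
    refine h.congr fun t => ?_
    push_cast
    norm_num
end

section
/- Let 0 < α ≤ 1 be a real number, and let t ≥ 2 and T ≥ 0 be integers. Then t^{1−α}·T/(t + αT) ≤ Σ_{s=t}^{t+T} s^{−α} ≤ (T+1)/(t−1)^α. -/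
open Finset

/-- Equation (36) in the paper: two-sided algebraic bound on the partial sums
`Σ_{s=t}^{t+T} s^{−α}` for `0 < α ≤ 1` and integer `t ≥ 2`, `T ≥ 0`. -/
theorem stmt_13 (α : ℝ) (hα0 : 0 < α) (hα1 : α ≤ 1) (t T : ℕ) (ht : 2 ≤ t) :
    (t : ℝ) ^ (1 - α) * (T : ℝ) / ((t : ℝ) + α * (T : ℝ)) ≤
        ∑ s ∈ Finset.Icc t (t + T), ((s : ℝ)) ^ (-α) ∧
      ∑ s ∈ Finset.Icc t (t + T), ((s : ℝ)) ^ (-α) ≤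
        ((T : ℝ) + 1) / ((t : ℝ) - 1) ^ α := by
  have htR : (2:ℝ) ≤ (t:ℝ) := by exact_mod_cast ht
  have hTnn : (0:ℝ) ≤ (T:ℝ) := Nat.cast_nonneg T
  have htpos : (0:ℝ) < t := by linarith
  have hcard : (Finset.Icc t (t + T)).card = T + 1 := by
    rw [Nat.card_Icc]; omega
  constructor
  · -- lower bound
    have key : (t:ℝ) ^ (1 - α) * ((t:ℝ) + T) ^ α ≤ (t:ℝ) + α * T := by
      have h := Real.geom_mean_le_arith_mean2_weighted
        (by linarith : (0:ℝ) ≤ 1 - α) hα0.le htpos.le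
        (by linarith : (0:ℝ) ≤ (t:ℝ) + T) (by ring)
      calc (t:ℝ) ^ (1 - α) * ((t:ℝ) + T) ^ α ≤ (1 - α) * t + α * ((t:ℝ) + T) := h
        _ = (t:ℝ) + α * T := by ring
    have hden : (0:ℝ) < (t:ℝ) + α * T := by positivity
    have hBpos : (0:ℝ) < ((t:ℝ) + T) ^ α := by positivity
    have step1 : (t:ℝ) ^ (1 - α) * T / ((t:ℝ) + α * T) ≤ (T:ℝ) * ((t:ℝ) + T) ^ (-α) := by
      rw [Real.rpow_neg (by linarith), mul_comm ((T:ℝ)), inv_eq_one_div, one_div_mul_eq_div,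
        div_le_div_iff₀ hden hBpos]
      have := mul_le_mul_of_nonneg_left key hTnn
      nlinarith [Real.rpow_nonneg htpos.le (1-α)]
    refine step1.trans ?_
    have step2 : (T:ℝ) * ((t:ℝ) + T) ^ (-α) ≤ ((T:ℝ) + 1) * ((t:ℝ) + T) ^ (-α) := by
      have : (0:ℝ) ≤ ((t:ℝ) + T) ^ (-α) := Real.rpow_nonneg (by linarith) _
      nlinarith
    refine step2.trans ?_
    have : ((T:ℝ) + 1) * ((t:ℝ) + T) ^ (-α) = ∑ s ∈ Finset.Icc t (t + T), ((t:ℝ) + T) ^ (-α) := by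
      rw [Finset.sum_const, hcard]; push_cast; ring
    rw [this]
    refine Finset.sum_le_sum fun s hs => ?_
    have hs' := Finset.mem_Icc.mp hs
    have hsle : (s:ℝ) ≤ (t:ℝ) + T := by
      have : s ≤ t + T := hs'.2
      exact_mod_cast this
    have hspos : (0:ℝ) < s := by
      have : 2 ≤ s := le_trans ht hs'.1
      have : (2:ℝ) ≤ s := by exact_mod_cast this
      linarith
    exact Real.rpow_le_rpow_of_nonpos hspos hsle (by linarith)
  · -- upper bound
    have h1 : (0:ℝ) < (t:ℝ) - 1 := by linarith
    have : (∑ s ∈ Finset.Icc t (t + T), ((s:ℝ)) ^ (-α)) ≤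
        ∑ s ∈ Finset.Icc t (t + T), ((t:ℝ) - 1) ^ (-α) := by
      refine Finset.sum_le_sum fun s hs => ?_
      have hs' := Finset.mem_Icc.mp hs
      have : (t:ℝ) ≤ s := by exact_mod_cast hs'.1
      exact Real.rpow_le_rpow_of_nonpos h1 (by linarith) (by linarith)
    refine this.trans ?_
    rw [Finset.sum_const, hcard, Real.rpow_neg h1.le, inv_eq_one_div, nsmul_eq_mul]
    push_cast
    rw [mul_one_div]
end
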